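/- arXiv:1407.7283 — 8 statements merged into one kernel-verified Lean document; each statement's English description precedes it below -/
import Mathlib

section
/- Let M be the bi-uniform matroid on the ground set E = E1 ∪ E2 with rank k and sub-ranks m and ℓ. Then the dual matroid M* is the bi-uniform matroid on the same partitioned ground set E = E1 ∪ E2 with rank k* = |E1| + |E2| − k and sub-ranks m* = |E1| + ℓ − k and ℓ* = |E2| + m − k. -/
theorem stmt1 {α : Type*} (M : Matroid α) (E1 E2 : Set α) (k m ℓ : ℕ)
    (hE1fin : E1.Finite) (hE2fin : E2.Finite) (hdisj : Disjoint E1 E2)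
    (hk : 0 < k) (hm : 0 < m) (hl : 0 < ℓ)
    (hmk : m ≤ k) (hlk : ℓ ≤ k) (hkml : k ≤ m + ℓ)
    (hmE1 : m ≤ E1.ncard) (hlE2 : ℓ ≤ E2.ncard)
    (hground : M.E = E1 ∪ E2)
    (hindep : ∀ B : Set α, M.Indep B ↔
      B ⊆ E1 ∪ E2 ∧ B.ncard ≤ k ∧ (B ∩ E1).ncard ≤ m ∧ (B ∩ E2).ncard ≤ ℓ) :
    ∀ B : Set α, M✶.Indep B ↔
      B ⊆ E1 ∪ E2 ∧ B.ncard ≤ E1.ncard + E2.ncard - k ∧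
        (B ∩ E1).ncard ≤ E1.ncard + ℓ - k ∧ (B ∩ E2).ncard ≤ E2.ncard + m - k := by
  have hEfin : (E1 ∪ E2).Finite := hE1fin.union hE2fin
  -- splitting a subset of the ground set
  have hsplit : ∀ X : Set α, X ⊆ E1 ∪ E2 →
      X.ncard = (X ∩ E1).ncard + (X ∩ E2).ncard := by
    intro X hX
    have h1 : X = (X ∩ E1) ∪ (X ∩ E2) := by
      rw [← Set.inter_union_distrib_left, Set.inter_eq_left.mpr hX]
    have hd : Disjoint (X ∩ E1) (X ∩ E2) :=
      hdisj.mono Set.inter_subset_right Set.inter_subset_right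
    nth_rewrite 1 [h1]
    rw [Set.ncard_union_eq hd (hE1fin.subset Set.inter_subset_right)
      (hE2fin.subset Set.inter_subset_right)]
  -- construction of an independent set of size k avoiding C
  have hcon : ∀ C : Set α, C ⊆ E1 ∪ E2 → C.ncard ≤ E1.ncard + E2.ncard - k →
      (C ∩ E1).ncard ≤ E1.ncard + ℓ - k → (C ∩ E2).ncard ≤ E2.ncard + m - k →
      ∃ S, M.Indep S ∧ S.ncard = k ∧ Disjoint S C := by
    intro C hC hCc hC1 hC2
    have ha : (E1 \ C).ncard + (E1 ∩ C).ncard = E1.ncard := by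
      rw [← Set.ncard_union_eq Set.disjoint_sdiff_inter
        (hE1fin.subset Set.diff_subset) (hE1fin.subset Set.inter_subset_left),
        Set.diff_union_inter]
    have hb : (E2 \ C).ncard + (E2 ∩ C).ncard = E2.ncard := by
      rw [← Set.ncard_union_eq Set.disjoint_sdiff_inter
        (hE2fin.subset Set.diff_subset) (hE2fin.subset Set.inter_subset_left),
        Set.diff_union_inter]
    rw [Set.inter_comm E1 C] at ha
    rw [Set.inter_comm E2 C] at hb
    have hCsp := hsplit C hC
    -- choose sizes
    set s1 := min m (E1 \ C).ncard with hs1def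
    have hs1a : s1 ≤ (E1 \ C).ncard := min_le_right _ _
    have hs2b : k - s1 ≤ (E2 \ C).ncard := by omega
    obtain ⟨S1, hS1sub, hS1card⟩ := Set.exists_subset_card_eq hs1a
    obtain ⟨S2, hS2sub, hS2card⟩ := Set.exists_subset_card_eq hs2b
    have hS1E1 : S1 ⊆ E1 := hS1sub.trans Set.diff_subset
    have hS2E2 : S2 ⊆ E2 := hS2sub.trans Set.diff_subset
    have hS1fin : S1.Finite := hE1fin.subset hS1E1
    have hS2fin : S2.Finite := hE2fin.subset hS2E2
    have hdS : Disjoint S1 S2 := hdisj.mono hS1E1 hS2E2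
    have hSE1 : (S1 ∪ S2) ∩ E1 = S1 := by
      rw [Set.union_inter_distrib_right, Set.inter_eq_left.mpr hS1E1,
        (hdisj.symm.mono_left hS2E2).inter_eq, Set.union_empty]
    have hSE2 : (S1 ∪ S2) ∩ E2 = S2 := by
      rw [Set.union_inter_distrib_right, Set.inter_eq_left.mpr hS2E2,
        (hdisj.mono_left hS1E1).inter_eq, Set.empty_union]
    have hScard : (S1 ∪ S2).ncard = k := by
      rw [Set.ncard_union_eq hdS hS1fin hS2fin, hS1card, hS2card]
      omega
    refine ⟨S1 ∪ S2, (hindep _).mpr ⟨Set.union_subset (hS1E1.trans Set.subset_union_left)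
      (hS2E2.trans Set.subset_union_right), le_of_eq hScard, ?_, ?_⟩, hScard, ?_⟩
    · rw [hSE1, hS1card]; exact min_le_left _ _
    · rw [hSE2, hS2card]; omega
    · refine Set.disjoint_left.mpr fun x hx hxC => ?_
      rcases hx with hx | hx
      · exact (hS1sub hx).2 hxC
      · exact (hS2sub hx).2 hxC
  -- every base has cardinality k
  obtain ⟨S0, hS0i, hS0c, -⟩ := hcon ∅ (Set.empty_subset _) (by simp) (by simp) (by simp)
  have hbasecard : ∀ S, M.IsBase S → S.ncard = k := by
    intro S hS
    obtain ⟨Bb, hBb, hsub⟩ := hS0i.exists_isBase_superset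
    have hBbfin : Bb.Finite := hEfin.subset (hground ▸ hBb.subset_ground)
    have h1 : Bb.ncard ≤ k := ((hindep Bb).mp hBb.indep).2.1
    have h2 : k ≤ Bb.ncard := hS0c ▸ Set.ncard_le_ncard hsub hBbfin
    have h3 := hS.ncard_eq_ncard_of_isBase hBb
    omega
  have hbase : ∀ S, M.Indep S → S.ncard = k → M.IsBase S := by
    intro S hSi hSc
    obtain ⟨Bb, hBb, hsub⟩ := hSi.exists_isBase_superset
    have hBbfin : Bb.Finite := hEfin.subset (hground ▸ hBb.subset_ground)
    have : S = Bb := Set.eq_of_subset_of_ncard_le hsub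
      (by rw [hbasecard Bb hBb, hSc]) hBbfin
    rwa [this]
  intro B
  rw [Matroid.dual_indep_iff_exists', hground]
  constructor
  · rintro ⟨hBE, S, hSb, hdBS⟩
    obtain ⟨hSE, hSk, hS1, hS2⟩ := (hindep S).mp hSb.indep
    have hScard := hbasecard S hSb
    have h1 : (B ∩ E1).ncard + (S ∩ E1).ncard ≤ E1.ncard := by
      rw [← Set.ncard_union_eq (hdBS.mono Set.inter_subset_left Set.inter_subset_left)
        (hE1fin.subset Set.inter_subset_right) (hE1fin.subset Set.inter_subset_right)]
      exact Set.ncard_le_ncard (Set.union_subset Set.inter_subset_right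
        Set.inter_subset_right) hE1fin
    have h2 : (B ∩ E2).ncard + (S ∩ E2).ncard ≤ E2.ncard := by
      rw [← Set.ncard_union_eq (hdBS.mono Set.inter_subset_left Set.inter_subset_left)
        (hE2fin.subset Set.inter_subset_right) (hE2fin.subset Set.inter_subset_right)]
      exact Set.ncard_le_ncard (Set.union_subset Set.inter_subset_right
        Set.inter_subset_right) hE2fin
    have hBsp := hsplit B hBE
    have hSsp := hsplit S hSE
    exact ⟨hBE, by omega, by omega, by omega⟩
  · rintro ⟨hBE, hBc, hB1, hB2⟩
    obtain ⟨S, hSi, hSc, hSd⟩ := hcon B hBE hBc hB1 hB2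
    exact ⟨hBE, S, hbase S hSi hSc, hSd.symm⟩
end

section
/- Let q be a prime power and suppose k ≤ m + ℓ − 2. If the bi-uniform matroid on E = E1 ∪ E2 with rank k and sub-ranks m, ℓ is representable over the finite field F_q, then |E1| + |E2| ≤ q + k − 1. -/
/-- `f : α → K^k` is a representation of the bi-uniform matroid on the ground set `α`
(partitioned into `E1` and `E2`) with rank `k` and sub-ranks `m`, `ℓ`. -/
def IsBiUniformRep {α : Type*} [DecidableEq α] (K : Type*) [Field K]
    (E1 E2 : Finset α) (k m ℓ : ℕ) (f : α → Fin k → K) : Prop :=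
  ∀ B : Finset α,
    LinearIndependent K (fun e : B => f e) ↔
      B.card ≤ k ∧ (B ∩ E1).card ≤ m ∧ (B ∩ E2).card ≤ ℓ

theorem stmt2 {α : Type*} [Fintype α] [DecidableEq α]
    (q : ℕ) (hq : IsPrimePow q) (F : Type*) [Field F] [Fintype F]
    (hcard : Fintype.card F = q)
    (E1 E2 : Finset α) (k m ℓ : ℕ)
    (hdisj : Disjoint E1 E2) (huniv : E1 ∪ E2 = Finset.univ)
    (hk : 0 < k) (hm : 0 < m) (hl : 0 < ℓ)
    (hmk : m ≤ k) (hlk : ℓ ≤ k)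
    (hmE1 : m ≤ E1.card) (hlE2 : ℓ ≤ E2.card)
    (hkd : k ≤ m + ℓ - 2)
    (f : α → Fin k → F) (hf : IsBiUniformRep F E1 E2 k m ℓ f) :
    E1.card + E2.card ≤ q + k - 1 := by
  classical
  have hm2 : 2 ≤ m := by omega
  have hl2 : 2 ≤ ℓ := by omega
  have hk2 : 2 ≤ k := by omega
  -- injectivity of f
  have hfinj : Function.Injective f := by
    intro x y hxy
    by_contra hne
    have hc2 : ({x, y} : Finset α).card ≤ 2 := by
      simpa using Finset.card_insert_le x {y}
    have hpair : LinearIndependent F (fun e : ({x, y} : Finset α) => f e) := by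
      rw [hf]
      refine ⟨hc2.trans hk2, ?_, ?_⟩
      · exact ((Finset.card_le_card (Finset.inter_subset_left)).trans hc2).trans hm2
      · exact ((Finset.card_le_card (Finset.inter_subset_left)).trans hc2).trans hl2
    have hx : x ∈ ({x, y} : Finset α) := by simp
    have hy : y ∈ ({x, y} : Finset α) := by simp
    have := hpair.injective (a₁ := ⟨x, hx⟩) (a₂ := ⟨y, hy⟩) hxy
    exact hne (congrArg Subtype.val this)
  -- independence of images of nice finsets
  have hind : ∀ B : Finset α, B.card ≤ k → (B ∩ E1).card ≤ m → (B ∩ E2).card ≤ ℓ →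
      LinearIndependent F ((↑) : (f '' (B : Set α)) → (Fin k → F)) := by
    intro B h1 h2 h3
    exact LinearIndepOn.id_image (v := f) (s := (B : Set α)) ((hf B).2 ⟨h1, h2, h3⟩)
  -- construct the set S
  set a : ℕ := min (m - 2) (k - 2) with ha
  obtain ⟨A, hAsub, hAcard⟩ := Finset.exists_subset_card_eq (s := E1) (n := a) (by omega)
  obtain ⟨Bb, hBsub, hBcard⟩ := Finset.exists_subset_card_eq (s := E2) (n := k - 2 - a) (by omega)
  have hDAB : Disjoint A Bb := hdisj.mono hAsub hBsub
  set S : Finset α := A ∪ Bb with hSdef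
  have hScard : S.card = k - 2 := by
    rw [hSdef, Finset.card_union_of_disjoint hDAB, hAcard, hBcard]; omega
  have hSE1 : (S ∩ E1).card ≤ m - 2 := by
    have hsub : S ∩ E1 ⊆ A := by
      intro x hx
      rw [Finset.mem_inter, hSdef, Finset.mem_union] at hx
      rcases hx with ⟨hx1 | hx2, hxE1⟩
      · exact hx1
      · exact absurd (hBsub hx2) (Finset.disjoint_left.mp hdisj hxE1)
    calc (S ∩ E1).card ≤ A.card := Finset.card_le_card hsub
      _ ≤ m - 2 := by omega
  have hSE2 : (S ∩ E2).card ≤ ℓ - 2 := by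
    have hsub : S ∩ E2 ⊆ Bb := by
      intro x hx
      rw [Finset.mem_inter, hSdef, Finset.mem_union] at hx
      rcases hx with ⟨hx1 | hx2, hxE2⟩
      · exact absurd hxE2 (Finset.disjoint_left.mp hdisj (hAsub hx1))
      · exact hx2
    calc (S ∩ E2).card ≤ Bb.card := Finset.card_le_card hsub
      _ ≤ ℓ - 2 := by omega
  -- the span of f '' S
  set W : Submodule F (Fin k → F) := Submodule.span F (f '' (S : Set α)) with hWdef
  have hWrank : Module.finrank F W = k - 2 := by
    have himg : ((S.image f : Finset (Fin k → F)) : Set (Fin k → F)) = f '' (S : Set α) :=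
      Finset.coe_image
    have hSind : LinearIndependent F ((↑) : (f '' (S : Set α)) → (Fin k → F)) :=
      hind S (by omega) (hSE1.trans (by omega)) (hSE2.trans (by omega))
    have hSind' : LinearIndependent F
        ((↑) : ((S.image f : Finset (Fin k → F)) : Set (Fin k → F)) → (Fin k → F)) := by
      rw [himg]; exact hSind
    rw [hWdef, ← himg]
    rw [finrank_span_finset_eq_card hSind']
    rw [Finset.card_image_of_injective S hfinj, hScard]
  have hQrank : Module.finrank F ((Fin k → F) ⧸ W) = 2 := by
    have := Submodule.finrank_quotient_add_finrank W
    rw [hWrank, Module.finrank_fin_fun] at this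
    omega
  -- identify the quotient with F²
  obtain ⟨e⟩ : Nonempty (((Fin k → F) ⧸ W) ≃ₗ[F] (Fin 2 → F)) :=
    FiniteDimensional.nonempty_linearEquiv_of_finrank_eq
      (by rw [hQrank, Module.finrank_fin_fun])
  set g : α → Fin 2 → F := fun x => e (W.mkQ (f x)) with hgdef
  -- x ∉ S → f x ∉ span (f '' S)
  have hnotmem : ∀ x ∉ S, f x ∉ Submodule.span F (f '' (S : Set α)) := by
    intro x hxS
    have hT : LinearIndependent F ((↑) : (f '' ((insert x S : Finset α) : Set α)) → (Fin k → F)) := by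
      refine hind _ ?_ ?_ ?_
      · rw [Finset.card_insert_of_notMem hxS, hScard]; omega
      · calc ((insert x S) ∩ E1).card ≤ (insert x (S ∩ E1)).card :=
              Finset.card_le_card (by intro z hz; simp at hz ⊢; tauto)
          _ ≤ (S ∩ E1).card + 1 := Finset.card_insert_le _ _
          _ ≤ m := by omega
      · calc ((insert x S) ∩ E2).card ≤ (insert x (S ∩ E2)).card :=
              Finset.card_le_card (by intro z hz; simp at hz ⊢; tauto)
          _ ≤ (S ∩ E2).card + 1 := Finset.card_insert_le _ _
          _ ≤ ℓ := by omega
    have hcoe : (f '' ((insert x S : Finset α) : Set α)) = insert (f x) (f '' (S : Set α)) := by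
      rw [Finset.coe_insert, Set.image_insert_eq]
    rw [hcoe] at hT
    have hfx : f x ∉ f '' (S : Set α) := by
      rintro ⟨z, hz, hzeq⟩
      exact hxS (by rwa [hfinj hzeq] at hz)
    exact ((linearIndepOn_id_insert hfx).mp hT).2
  -- nonvanishing of g off S
  have hgne : ∀ x ∉ S, g x ≠ 0 := by
    intro x hxS h0
    have : W.mkQ (f x) = 0 := by
      apply e.injective
      rw [map_zero]; exact h0
    rw [Submodule.mkQ_apply, Submodule.Quotient.mk_eq_zero] at this
    exact hnotmem x hxS this
  -- non-proportionality
  have hkey : ∀ x ∉ S, ∀ y ∉ S, x ≠ y → ∀ c : F, g y ≠ c • g x := by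
    intro x hxS y hyS hne c hEq
    -- f y ∈ span (insert (f x) (f '' S))
    have hmkeq : W.mkQ (f y) = W.mkQ (c • f x) := by
      apply e.injective
      rw [map_smul, hgdef] at *
      simpa [map_smul] using hEq
    rw [Submodule.mkQ_apply, Submodule.mkQ_apply, Submodule.Quotient.eq] at hmkeq
    have hmem : f y ∈ Submodule.span F (insert (f x) (f '' (S : Set α))) := by
      have h1 : c • f x ∈ Submodule.span F (insert (f x) (f '' (S : Set α))) :=
        Submodule.smul_mem _ c (Submodule.subset_span (Set.mem_insert _ _))
      have h2 : f y - c • f x ∈ Submodule.span F (insert (f x) (f '' (S : Set α))) :=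
        Submodule.span_mono (Set.subset_insert _ _) hmkeq
      have := Submodule.add_mem _ h1 h2
      simpa using this
    -- but independence of insert y (insert x S) forbids this
    have hyxS : y ∉ insert x S := by
      simp only [Finset.mem_insert, not_or]
      exact ⟨fun hh => hne hh.symm, hyS⟩
    have hT : LinearIndependent F
        ((↑) : (f '' ((insert y (insert x S) : Finset α) : Set α)) → (Fin k → F)) := by
      refine hind _ ?_ ?_ ?_
      · rw [Finset.card_insert_of_notMem hyxS, Finset.card_insert_of_notMem hxS, hScard]
        omega
      · calc ((insert y (insert x S)) ∩ E1).card
            ≤ (insert y (insert x (S ∩ E1))).card :=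
              Finset.card_le_card (by intro z hz; simp at hz ⊢; tauto)
          _ ≤ (insert x (S ∩ E1)).card + 1 := Finset.card_insert_le _ _
          _ ≤ ((S ∩ E1).card + 1) + 1 := by
              exact Nat.add_le_add_right (Finset.card_insert_le _ _) 1
          _ ≤ m := by omega
      · calc ((insert y (insert x S)) ∩ E2).card
            ≤ (insert y (insert x (S ∩ E2))).card :=
              Finset.card_le_card (by intro z hz; simp at hz ⊢; tauto)
          _ ≤ (insert x (S ∩ E2)).card + 1 := Finset.card_insert_le _ _
          _ ≤ ((S ∩ E2).card + 1) + 1 := by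
              exact Nat.add_le_add_right (Finset.card_insert_le _ _) 1
          _ ≤ ℓ := by omega
    have hcoe : (f '' ((insert y (insert x S) : Finset α) : Set α))
        = insert (f y) (insert (f x) (f '' (S : Set α))) := by
      rw [Finset.coe_insert, Finset.coe_insert, Set.image_insert_eq, Set.image_insert_eq]
    rw [hcoe] at hT
    have hfy : f y ∉ insert (f x) (f '' (S : Set α)) := by
      rintro (h | ⟨z, hz, hzeq⟩)
      · exact hne (hfinj h).symm
      · exact hyS (by rwa [hfinj hzeq] at hz)
    exact ((linearIndepOn_id_insert hfy).mp hT).2 hmem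
  -- the injection into Option F
  set h : α → Option F := fun x => if g x 0 = 0 then none else some (g x 1 / g x 0) with hhdef
  have hinj : Set.InjOn h (Sᶜ : Finset α) := by
    intro x hx y hy hxy
    by_contra hne
    have hxS : x ∉ S := by simpa using hx
    have hyS : y ∉ S := by simpa using hy
    by_cases h1 : g x 0 = 0 <;> by_cases h2 : g y 0 = 0
    · -- both zero
      have hgx1 : g x 1 ≠ 0 := by
        intro h3
        apply hgne x hxS
        funext i
        fin_cases i <;> simpa [h1, h3]
      refine hkey x hxS y hyS hne (g y 1 / g x 1) ?_
      funext i
      have hgy0 : g y 0 = 0 := h2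
      fin_cases i
      · simp [h1, hgy0]
      · simp [div_mul_cancel₀ _ hgx1]
    · simp only [hhdef, if_pos h1, if_neg h2] at hxy; cases hxy
    · simp only [hhdef, if_neg h1, if_pos h2] at hxy; cases hxy
    · -- both nonzero
      simp only [hhdef, if_neg h1, if_neg h2, Option.some.injEq] at hxy
      refine hkey x hxS y hyS hne (g y 0 / g x 0) ?_
      funext i
      fin_cases i
      · simp [div_mul_cancel₀ _ h1]
      · show g y 1 = (g y 0 / g x 0) * g x 1
        field_simp
        field_simp at hxy
        linear_combination -hxy
  have hcompl : (Sᶜ : Finset α).card ≤ q + 1 := by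
    have := Finset.card_le_card_of_injOn h (fun z _ => Finset.mem_univ (h z)) hinj
    rw [Finset.card_univ, Fintype.card_option, hcard] at this
    exact this
  have htotal : S.card + (Sᶜ : Finset α).card = Fintype.card α :=
    Finset.card_add_card_compl S
  have hsum : E1.card + E2.card = Fintype.card α := by
    rw [← Finset.card_union_of_disjoint hdisj, huniv, Finset.card_univ]
  omega
end

section
/- Let q be a prime power. If q ≤ k ≤ m + ℓ − 2, then the bi-uniform matroid on E = E1 ∪ E2 with rank k and sub-ranks m, ℓ is not representable over the finite field F_q. -/
/-- Auxiliary: the linear-combination map determined by a family of `n` vectors in `F^k`. -/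
def biUniformCombMap (F : Type*) [Field F] (n k : ℕ) (v : Fin n → Fin k → F) :
    (Fin n → F) →ₗ[F] (Fin k → F) where
  toFun x := ∑ i, x i • v i
  map_add' x y := by simp [add_smul, Finset.sum_add_distrib]
  map_smul' c x := by simp [smul_smul, Finset.smul_sum]

@[simp] lemma biUniformCombMap_apply (F : Type*) [Field F] (n k : ℕ)
    (v : Fin n → Fin k → F) (x : Fin n → F) :
    biUniformCombMap F n k v x = ∑ i, x i • v i := rfl

set_option maxHeartbeats 2000000 in
theorem stmt3 {α : Type*} [Fintype α] [DecidableEq α]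
    (q : ℕ) (hq : IsPrimePow q) (F : Type*) [Field F] [Fintype F]
    (hcard : Fintype.card F = q)
    (E1 E2 : Finset α) (k m ℓ : ℕ)
    (hdisj : Disjoint E1 E2) (huniv : E1 ∪ E2 = Finset.univ)
    (hk : 0 < k) (hm : 0 < m) (hl : 0 < ℓ)
    (hmk : m ≤ k) (hlk : ℓ ≤ k)
    (hmE1 : m ≤ E1.card) (hlE2 : ℓ ≤ E2.card)
    (hqk : q ≤ k) (hkd : k ≤ m + ℓ - 2) :
    ∀ f : α → Fin k → F, ¬ IsBiUniformRep F E1 E2 k m ℓ f := by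
  classical
  intro f hrep
  have hml : k + 2 ≤ m + ℓ := by omega
  -- choose the ground set B of size k+2
  obtain ⟨A1, hA1E, hA1c⟩ := Finset.exists_subset_card_eq (s := E1) (n := min m (k+2))
    (le_trans (min_le_left _ _) hmE1)
  obtain ⟨A2, hA2E, hA2c⟩ := Finset.exists_subset_card_eq (s := E2) (n := k + 2 - min m (k+2))
    (by omega)
  set B : Finset α := A1 ∪ A2 with hB
  have hdisjA : Disjoint A1 A2 := hdisj.mono hA1E hA2E
  have hBcard : B.card = k + 2 := by
    rw [hB, Finset.card_union_of_disjoint hdisjA]; omega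
  have hBE1 : (B ∩ E1).card ≤ m := by
    have hEq : B ∩ E1 = A1 := by
      ext a
      simp only [hB, Finset.mem_inter, Finset.mem_union]
      constructor
      · rintro ⟨h1 | h2, hE1⟩
        · exact h1
        · exact absurd hE1 (Finset.disjoint_right.mp hdisj (hA2E h2))
      · intro h; exact ⟨Or.inl h, hA1E h⟩
    rw [hEq, hA1c]; omega
  have hBE2 : (B ∩ E2).card ≤ ℓ := by
    have hEq : B ∩ E2 = A2 := by
      ext a
      simp only [hB, Finset.mem_inter, Finset.mem_union]
      constructor
      · rintro ⟨h1 | h2, hE2⟩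
        · exact absurd hE2 (Finset.disjoint_left.mp hdisj (hA1E h1))
        · exact h2
      · intro h; exact ⟨Or.inr h, hA2E h⟩
    rw [hEq, hA2c]; omega
  -- enumerate B
  have e := Finset.equivFinOfCardEq hBcard
  set g : Fin (k+2) → α := fun i => ((e.symm i : B) : α) with hg
  have hgB : ∀ i, g i ∈ B := fun i => (e.symm i).2
  have hginj : Function.Injective g := fun i j h =>
    e.symm.injective (Subtype.ext h)
  -- any k-subfamily is linearly independent
  have hindep : ∀ S : Finset (Fin (k+2)), S.card ≤ k →
      LinearIndependent F (fun s : S => f (g s)) := by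
    intro S hS
    set C : Finset α := S.image g with hC
    have hCB : C ⊆ B := by
      intro a ha
      obtain ⟨i, _, rfl⟩ := Finset.mem_image.mp ha
      exact hgB i
    have hCcard : C.card ≤ k := by
      rw [hC, Finset.card_image_of_injective _ hginj]; exact hS
    have hCE1 : (C ∩ E1).card ≤ m :=
      le_trans (Finset.card_le_card (Finset.inter_subset_inter_right hCB)) hBE1
    have hCE2 : (C ∩ E2).card ≤ ℓ :=
      le_trans (Finset.card_le_card (Finset.inter_subset_inter_right hCB)) hBE2
    have hli : LinearIndependent F (fun e : C => f e) :=
      (hrep C).mpr ⟨hCcard, hCE1, hCE2⟩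
    have hφinj : Function.Injective
        (fun s : S => (⟨g s, Finset.mem_image_of_mem g s.2⟩ : C)) := by
      intro s t hst
      have hval := congrArg Subtype.val hst
      exact Subtype.ext (hginj hval)
    exact hli.comp _ hφinj
  -- any kernel vector with two zero coordinates is zero
  have hzero : ∀ x : Fin (k+2) → F, (∑ i, x i • f (g i)) = 0 →
      ∀ i j : Fin (k+2), i ≠ j → x i = 0 → x j = 0 → x = 0 := by
    intro x hx i j hij hxi hxj
    set S : Finset (Fin (k+2)) := Finset.univ \ {i, j} with hS
    have hScard : S.card ≤ k := by
      rw [hS, Finset.card_sdiff_of_subset (Finset.subset_univ _)]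
      have h2 : ({i, j} : Finset (Fin (k+2))).card = 2 := by
        rw [Finset.card_insert_of_notMem (by simpa using hij), Finset.card_singleton]
      simp [h2]
    have hli := hindep S hScard
    have hsum : (∑ s : S, x s • f (g s)) = 0 := by
      rw [Finset.sum_coe_sort S (fun s => x s • f (g s))]
      rw [Finset.sum_subset (Finset.subset_univ S)]
      · exact hx
      · intro t _ htS
        have : t = i ∨ t = j := by
          by_contra hcon
          push_neg at hcon
          exact htS (by simp [hS, hcon.1, hcon.2])
        rcases this with rfl | rfl
        · rw [hxi, zero_smul]
        · rw [hxj, zero_smul]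
    have hall := Fintype.linearIndependent_iff.mp hli (fun s => x s) hsum
    funext t
    by_cases hti : t = i
    · rw [hti]; exact hxi
    · by_cases htj : t = j
      · rw [htj]; exact hxj
      · exact hall ⟨t, by simp [hS, hti, htj]⟩
  -- the combination linear map and its kernel
  set T : (Fin (k+2) → F) →ₗ[F] (Fin k → F) :=
    biUniformCombMap F (k+2) k (fun i => f (g i)) with hT
  have hrank : 2 ≤ Module.finrank F (LinearMap.ker T) := by
    have h1 := LinearMap.finrank_range_add_finrank_ker T
    have h2 : Module.finrank F (Fin (k+2) → F) = k + 2 := by simp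
    have h3 : Module.finrank F (LinearMap.range T) ≤ k :=
      le_trans (Submodule.finrank_le _) (by simp)
    omega
  obtain ⟨w, hw⟩ := exists_linearIndependent_of_le_finrank hrank
  have hw' : LinearIndependent F (fun i : Fin 2 => ((w i : Fin (k+2) → F))) :=
    hw.map' (LinearMap.ker T).subtype (Submodule.ker_subtype _)
  set U : Fin (k+2) → F := (w 0 : Fin (k+2) → F) with hUdef
  set V : Fin (k+2) → F := (w 1 : Fin (k+2) → F) with hVdef
  have hU : (∑ i, U i • f (g i)) = 0 := (w 0).2
  have hV : (∑ i, V i • f (g i)) = 0 := (w 1).2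
  have hpair : ∀ a b : F, (∀ t, a * U t + b * V t = 0) → a = 0 ∧ b = 0 := by
    intro a b hab
    have habf : a • U + b • V = 0 := funext fun t => hab t
    have hsum : (∑ i : Fin 2, (![a, b]) i • ((w i : Fin (k+2) → F))) = 0 := by
      rw [Fin.sum_univ_two]
      exact habf
    have h0 := Fintype.linearIndependent_iff.mp hw' ![a, b] hsum 0
    have h1 := Fintype.linearIndependent_iff.mp hw' ![a, b] hsum 1
    exact ⟨h0, h1⟩
  have hcombo : ∀ a b : F, (∑ t, (a * U t + b * V t) • f (g t)) = 0 := by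
    intro a b
    have heq : (∑ t, (a * U t + b * V t) • f (g t))
        = a • (∑ t, U t • f (g t)) + b • (∑ t, V t • f (g t)) := by
      rw [Finset.smul_sum, Finset.smul_sum, ← Finset.sum_add_distrib]
      congr 1
      funext t
      rw [add_smul, smul_smul, smul_smul]
    rw [heq, hU, hV, smul_zero, smul_zero, add_zero]
  -- pairwise determinant condition
  have hdet : ∀ i j : Fin (k+2), i ≠ j → U i * V j ≠ U j * V i := by
    intro i j hij heq
    set x : Fin (k+2) → F := fun t => V j * U t + (- U j) * V t with hx
    have hxj : x j = 0 := by simp only [hx]; ring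
    have hxi : x i = 0 := by simp only [hx]; linear_combination heq
    have hx0 : x = 0 := hzero x (hcombo _ _) i j hij hxi hxj
    obtain ⟨hVj, hUj'⟩ := hpair (V j) (- U j) (fun t => congrFun hx0 t)
    have hUj : U j = 0 := by simpa using hUj'
    set y : Fin (k+2) → F := fun t => V i * U t + (- U i) * V t with hy
    have hyi : y i = 0 := by simp only [hy]; ring
    have hyj : y j = 0 := by simp only [hy, hUj, hVj]; ring
    have hy0 : y = 0 := hzero y (hcombo _ _) j i (Ne.symm hij) hyj hyi
    obtain ⟨hVi, hUi'⟩ := hpair (V i) (- U i) (fun t => congrFun hy0 t)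
    have hUi : U i = 0 := by simpa using hUi'
    have hU0 : U = 0 := hzero U hU i j hij hUi hUj
    obtain ⟨h10, -⟩ := hpair 1 0 (fun t => by rw [congrFun hU0 t, Pi.zero_apply]; ring)
    exact one_ne_zero h10
  -- injection into the projective line, i.e. Option F
  have hinj : Function.Injective
      (fun t : Fin (k+2) => if V t = 0 then (none : Option F) else some (U t / V t)) := by
    intro i j hEq
    by_contra hij
    by_cases hVi : V i = 0
    · by_cases hVj : V j = 0
      · exact hdet i j hij (by rw [hVi, hVj, mul_zero, mul_zero])
      · simp [hVi, hVj] at hEq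
    · by_cases hVj : V j = 0
      · simp [hVi, hVj] at hEq
      · simp only [hVi, hVj, if_false, Option.some.injEq] at hEq
        rw [div_eq_div_iff hVi hVj] at hEq
        exact hdet i j hij hEq
  have hle : k + 2 ≤ Fintype.card (Option F) := by
    simpa using Fintype.card_le_of_injective _ hinj
  rw [Fintype.card_option, hcard] at hle
  omega
end

section
/- Suppose m + ℓ − k = 2. If q is an odd prime power and max(|E1|, |E2|) ≤ (q − 1)/2, then the bi-uniform matroid on E = E1 ∪ E2 with rank k and sub-ranks m, ℓ is representable over the finite field F_q. -/
open Polynomial Finset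

section Side
variable {F : Type*} [Field F] {α : Type*} [DecidableEq α]

lemma my_natDegree_prod_linear (S : Finset α) (v : α → F) :
    (∏ e ∈ S, (X - C (v e))).natDegree = S.card := by
  rw [Polynomial.natDegree_prod _ _ (fun i _ => X_sub_C_ne_zero (v i))]
  simp [natDegree_X_sub_C]

lemma my_prod_linear_ne_zero (S : Finset α) (v : α → F) :
    (∏ e ∈ S, (X - C (v e))) ≠ 0 :=
  prod_ne_zero_iff.mpr fun i _ => X_sub_C_ne_zero (v i)

lemma sum_eval_eq {S : Finset α} {v c : α → F} {A B : F} {n : ℕ}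
    (H : ∀ j < n, ∑ e ∈ S, c e * v e ^ j = A * 0 ^ j + B * 1 ^ j)
    (p : F[X]) (hp : p.natDegree < n) :
    ∑ e ∈ S, c e * p.eval (v e) = A * p.eval 0 + B * p.eval 1 := by
  have hev : ∀ z : F, p.eval z = ∑ j ∈ range n, p.coeff j * z ^ j :=
    fun z => p.eval_eq_sum_range' hp z
  calc ∑ e ∈ S, c e * p.eval (v e)
      = ∑ e ∈ S, ∑ j ∈ range n, p.coeff j * (c e * v e ^ j) := by
        refine Finset.sum_congr rfl fun e _ => ?_
        rw [hev, Finset.mul_sum]; exact Finset.sum_congr rfl fun j _ => by ring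
    _ = ∑ j ∈ range n, p.coeff j * ∑ e ∈ S, c e * v e ^ j := by
        rw [Finset.sum_comm]
        exact Finset.sum_congr rfl fun j _ => by rw [Finset.mul_sum]
    _ = ∑ j ∈ range n, p.coeff j * (A * 0 ^ j + B * 1 ^ j) := by
        exact Finset.sum_congr rfl fun j hj => by rw [H j (mem_range.mp hj)]
    _ = A * p.eval 0 + B * p.eval 1 := by
        rw [hev 0, hev 1, Finset.mul_sum, Finset.mul_sum, ← Finset.sum_add_distrib]
        exact Finset.sum_congr rfl fun j _ => by ring

/-- evaluation of the sum against `(∏_{e ∈ S.erase e0} (X - v e)) * q` -/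
lemma sum_pick {S : Finset α} (v c : α → F) (hinj : Set.InjOn v S)
    {e0 : α} (he0 : e0 ∈ S) (q : F[X]) :
    ∑ e ∈ S, c e * ((∏ e' ∈ S.erase e0, (X - C (v e'))) * q).eval (v e)
      = c e0 * ((∏ e' ∈ S.erase e0, (v e0 - v e')) * q.eval (v e0)) := by
  rw [Finset.sum_eq_single_of_mem e0 he0]
  · simp [eval_prod]
  · intro e he hne
    have h0 : (∏ e' ∈ S.erase e0, (v e - v e')) = 0 :=
      Finset.prod_eq_zero (Finset.mem_erase.mpr ⟨hne, he⟩) (by simp)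
    simp [eval_prod, h0]

lemma sum_kill {S : Finset α} (v c : α → F) (q : F[X]) :
    ∑ e ∈ S, c e * ((∏ e' ∈ S, (X - C (v e'))) * q).eval (v e) = 0 := by
  refine Finset.sum_eq_zero fun e he => ?_
  have h0 : (∏ e' ∈ S, (v e - v e')) = 0 := Finset.prod_eq_zero he (by simp)
  simp [eval_prod, h0]

end Side

set_option linter.unusedSectionVars false

section Side2
variable {F : Type*} [Field F] {α : Type*} [DecidableEq α]
variable {S : Finset α} {v c : α → F} {A B : F} {n : ℕ}

lemma my_erase_prod_ne_zero (hinj : Set.InjOn v S) {e0 : α} (he0 : e0 ∈ S) :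
    (∏ e' ∈ S.erase e0, (v e0 - v e')) ≠ 0 := by
  refine Finset.prod_ne_zero_iff.mpr fun e' he' => sub_ne_zero.mpr ?_
  have h1 := Finset.mem_erase.mp he'
  exact fun hv => h1.1 (hinj h1.2 he0 hv.symm)

/-- If `A = B = 0` and `|S| ≤ n`, all coefficients vanish. -/
lemma side_zero (hinj : Set.InjOn v S) (hcard : S.card ≤ n) (hn : 0 < n)
    (H : ∀ j < n, ∑ e ∈ S, c e * v e ^ j = A * 0 ^ j + B * 1 ^ j)
    (hA : A = 0) (hB : B = 0) : ∀ e ∈ S, c e = 0 := by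
  intro e0 he0
  have hlt : (S.erase e0).card < S.card := Finset.card_erase_lt_of_mem he0
  have hd : ((∏ e' ∈ S.erase e0, (X - C (v e'))) * 1).natDegree < n := by
    rw [mul_one, my_natDegree_prod_linear]; omega
  have h := sum_eval_eq H _ hd
  rw [sum_pick v c hinj he0 1, hA, hB] at h
  simp only [zero_mul, add_zero, eval_one, mul_one, zero_add] at h
  rcases mul_eq_zero.mp h with h | h
  · exact h
  · exact absurd h (my_erase_prod_ne_zero hinj he0)

/-- easy case `|S| + 2 ≤ n`: `A = B = 0` and coefficients vanish. -/
lemma side_easy (hinj : Set.InjOn v S) (h0 : ∀ e ∈ S, v e ≠ 0) (h1 : ∀ e ∈ S, v e ≠ 1)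
    (hcard : S.card + 2 ≤ n)
    (H : ∀ j < n, ∑ e ∈ S, c e * v e ^ j = A * 0 ^ j + B * 1 ^ j) :
    A = 0 ∧ B = 0 ∧ ∀ e ∈ S, c e = 0 := by
  have hP1 : (∏ e' ∈ S, ((1:F) - v e')) ≠ 0 :=
    Finset.prod_ne_zero_iff.mpr fun e' he' => sub_ne_zero.mpr fun hv => h1 e' he' hv.symm
  have hP0 : (∏ e' ∈ S, ((0:F) - v e')) ≠ 0 :=
    Finset.prod_ne_zero_iff.mpr fun e' he' => sub_ne_zero.mpr fun hv => h0 e' he' hv.symm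
  have hdX : ((∏ e' ∈ S, (X - C (v e'))) * X).natDegree < n := by
    rw [natDegree_mul (my_prod_linear_ne_zero S v) X_ne_zero,
      my_natDegree_prod_linear, natDegree_X]; omega
  have hd1 : ((∏ e' ∈ S, (X - C (v e'))) * (X - C 1)).natDegree < n := by
    rw [natDegree_mul (my_prod_linear_ne_zero S v) (X_sub_C_ne_zero 1),
      my_natDegree_prod_linear, natDegree_X_sub_C]; omega
  have hB : B = 0 := by
    have h := (sum_kill v c X).symm.trans (sum_eval_eq H _ hdX)
    simp only [eval_mul, eval_prod, eval_X, eval_sub, eval_C, mul_zero, mul_one, zero_add] at h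
    rcases mul_eq_zero.mp h.symm with h' | h'
    · exact h'
    · exact absurd h' hP1
  have hA : A = 0 := by
    have h := (sum_kill v c (X - C 1)).symm.trans (sum_eval_eq H _ hd1)
    simp only [eval_mul, eval_prod, eval_X, eval_sub, eval_C, sub_self, mul_zero, add_zero] at h
    rcases mul_eq_zero.mp h.symm with h' | h'
    · exact h'
    · have : (∏ e' ∈ S, ((0:F) - v e')) * (0 - 1) ≠ 0 :=
        mul_ne_zero hP0 (by norm_num)
      exact absurd h' this
  exact ⟨hA, hB, side_zero hinj (by omega) (by omega) H hA hB⟩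

/-- critical case `|S| + 1 = n`. -/
lemma side_crit (hinj : Set.InjOn v S) (h0 : ∀ e ∈ S, v e ≠ 0) (h1 : ∀ e ∈ S, v e ≠ 1)
    (hcard : S.card + 1 = n) (hne : S.Nonempty)
    (H : ∀ j < n, ∑ e ∈ S, c e * v e ^ j = A * 0 ^ j + B * 1 ^ j) :
    A * ∏ e ∈ S, (0 - v e) + B * ∏ e ∈ S, (1 - v e) = 0
      ∧ (B = 0 → A = 0 ∧ ∀ e ∈ S, c e = 0) := by
  obtain ⟨e0, he0⟩ := hne
  have hlt : (S.erase e0).card = S.card - 1 := Finset.card_erase_of_mem he0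
  have h1lt : 1 ≤ S.card := Finset.card_pos.mpr ⟨e0, he0⟩
  have hdX : ∀ e0 ∈ S, ((∏ e' ∈ S.erase e0, (X - C (v e'))) * X).natDegree < n := by
    intro e He
    rw [natDegree_mul (my_prod_linear_ne_zero _ v) X_ne_zero,
      my_natDegree_prod_linear, natDegree_X, Finset.card_erase_of_mem He]; omega
  have hd1 : ((∏ e' ∈ S.erase e0, (X - C (v e'))) * (X - C 1)).natDegree < n := by
    rw [natDegree_mul (my_prod_linear_ne_zero _ v) (X_sub_C_ne_zero 1),
      my_natDegree_prod_linear, natDegree_X_sub_C, hlt]; omega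
  -- equation (I) for every point
  have EI : ∀ e0 ∈ S, c e0 * ((∏ e' ∈ S.erase e0, (v e0 - v e')) * v e0)
      = B * ∏ e' ∈ S.erase e0, (1 - v e') := by
    intro e He
    have h := (sum_pick v c hinj He X).symm.trans (sum_eval_eq H _ (hdX e He))
    simpa [eval_prod, mul_zero, zero_add] using h
  -- equation (II) at e0
  have EII : c e0 * ((∏ e' ∈ S.erase e0, (v e0 - v e')) * (v e0 - 1))
      = A * ((∏ e' ∈ S.erase e0, (0 - v e')) * (0 - 1)) := by
    have h := (sum_pick v c hinj he0 (X - C 1)).symm.trans (sum_eval_eq H _ hd1)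
    simpa [eval_prod, sub_self, mul_zero, add_zero] using h
  constructor
  · -- A * P0 + B * P1 = 0
    have e1 := EI e0 he0
    have hsplit0 : (∏ e ∈ S, ((0:F) - v e)) = (0 - v e0) * ∏ e' ∈ S.erase e0, (0 - v e') :=
      (Finset.mul_prod_erase S _ he0).symm
    have hsplit1 : (∏ e ∈ S, ((1:F) - v e)) = (1 - v e0) * ∏ e' ∈ S.erase e0, (1 - v e') :=
      (Finset.mul_prod_erase S _ he0).symm
    rw [hsplit0, hsplit1]
    -- A * ((0 - v e0) * Π0e) = v e0 * (A * (Π0e * (0-1))) * (-1)... use linear_combination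
    linear_combination (v e0 - 1) * e1 - v e0 * EII
  · intro hB
    have hc : ∀ e ∈ S, c e = 0 := by
      intro e He
      have h := EI e He
      rw [hB, zero_mul] at h
      have hD : (∏ e' ∈ S.erase e, (v e - v e')) * v e ≠ 0 :=
        mul_ne_zero (my_erase_prod_ne_zero hinj He) (h0 e He)
      rcases mul_eq_zero.mp h with h' | h'
      · exact h'
      · exact absurd h' hD
    have hA : A = 0 := by
      have h := EII
      rw [hc e0 he0, zero_mul] at h
      have hD : (∏ e' ∈ S.erase e0, ((0:F) - v e')) * (0 - 1) ≠ 0 := by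
        refine mul_ne_zero (Finset.prod_ne_zero_iff.mpr fun e' he' => sub_ne_zero.mpr ?_) (by norm_num)
        exact fun hv => h0 e' (Finset.mem_of_mem_erase he') hv.symm
      rcases mul_eq_zero.mp h.symm with h' | h'
      · exact h'
      · exact absurd h' hD
    exact ⟨hA, hc⟩

end Side2

section Char
variable {F : Type*} [Field F] [Fintype F] [DecidableEq F]

lemma card_nonsquares (hF : ringChar F ≠ 2) :
    2 * (Finset.univ.filter (fun a : F => ¬ IsSquare a)).card + 1 = Fintype.card F := by
  classical
  set N := Finset.univ.filter (fun a : F => ¬ IsSquare a) with hN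
  set Sq := Finset.univ.filter (fun a : F => IsSquare a) with hSq
  have hsum := quadraticChar_sum_zero hF
  have hsplit : ∑ a : F, quadraticChar F a
      = ∑ a ∈ Sq, quadraticChar F a + ∑ a ∈ N, quadraticChar F a := by
    rw [hSq, hN]; exact (Finset.sum_filter_add_sum_filter_not _ _ _).symm
  have hNsum : ∑ a ∈ N, quadraticChar F a = - N.card := by
    rw [Finset.sum_congr rfl (fun a ha => quadraticChar_neg_one_iff_not_isSquare.mpr
      (Finset.mem_filter.mp ha).2)]
    simp
    rfl
  have h0Sq : (0 : F) ∈ Sq := by simp [hSq]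
  have hSqsum : ∑ a ∈ Sq, quadraticChar F a = (Sq.card : ℤ) - 1 := by
    rw [← Finset.add_sum_erase _ _ h0Sq]
    have : ∀ a ∈ Sq.erase 0, quadraticChar F a = 1 := by
      intro a ha
      have h := Finset.mem_erase.mp ha
      exact (quadraticChar_one_iff_isSquare h.1).mpr (Finset.mem_filter.mp h.2).2
    rw [Finset.sum_congr rfl this]
    simp [Finset.card_erase_of_mem h0Sq, Nat.cast_sub (Finset.card_pos.mpr ⟨(0:F), h0Sq⟩)]
  have hcards : Sq.card + N.card = Fintype.card F := by
    rw [hSq, hN]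
    rw [Finset.card_filter_add_card_filter_not]
    rfl
  rw [hsplit, hNsum, hSqsum] at hsum
  omega

lemma quadChar_prod_nonsquares {α : Type*} (S : Finset α) (u : α → F)
    (h : ∀ e ∈ S, ¬ IsSquare (u e)) :
    quadraticChar F (∏ e ∈ S, u e) = (-1) ^ S.card := by
  rw [map_prod]
  rw [Finset.prod_congr rfl (fun e he => quadraticChar_neg_one_iff_not_isSquare.mpr (h e he))]
  simp

end Char

section Key
variable {F : Type*} [Field F] [Fintype F] [DecidableEq F] {α : Type*} [DecidableEq α]

lemma key_neq {lam : F} {S T : Finset α} {x y : α → F}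
    (hlam : quadraticChar F lam = -(-1) ^ (S.card + T.card))
    (hx0 : ∀ e ∈ S, x e ≠ 0) (hxu : ∀ e ∈ S, ¬ IsSquare (1 - (x e)⁻¹))
    (hy0 : ∀ e ∈ T, y e ≠ 0) (hyu : ∀ e ∈ T, ¬ IsSquare (1 - (y e)⁻¹)) :
    lam * (∏ e ∈ S, (1 - x e)) * (∏ e ∈ T, (0 - y e))
      ≠ (∏ e ∈ T, (1 - y e)) * (∏ e ∈ S, (0 - x e)) := by
  intro heq
  have hx1 : ∀ e ∈ S, x e ≠ 1 := by
    intro e he h1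
    exact hxu e he (by rw [h1]; simp)
  have hy1 : ∀ e ∈ T, y e ≠ 1 := by
    intro e he h1
    exact hyu e he (by rw [h1]; simp)
  -- product relation : (1-x)(0-x) = x^2 * (1 - x⁻¹)
  have hrel : ∀ z : F, z ≠ 0 → (1 - z) * (0 - z) = z ^ 2 * (1 - z⁻¹) := by
    intro z hz; field_simp; ring
  set χ := quadraticChar F with hχ
  have hprod : ∀ (U : Finset α) (w : α → F), (∀ e ∈ U, w e ≠ 0) →
      (∀ e ∈ U, ¬ IsSquare (1 - (w e)⁻¹)) →
      χ (∏ e ∈ U, (1 - w e)) * χ (∏ e ∈ U, (0 - w e)) = (-1) ^ U.card := by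
    intro U w hw0 hwu
    rw [← map_mul, ← Finset.prod_mul_distrib]
    have : ∀ e ∈ U, (1 - w e) * (0 - w e) = (w e) ^ 2 * (1 - (w e)⁻¹) := fun e he =>
      hrel _ (hw0 e he)
    rw [Finset.prod_congr rfl this, Finset.prod_mul_distrib, map_mul, map_prod]
    have hsq : ∀ e ∈ U, χ (w e ^ 2) = 1 := fun e he => quadraticChar_sq_one' (hw0 e he)
    rw [Finset.prod_congr rfl hsq, Finset.prod_const_one, one_mul]
    exact quadChar_prod_nonsquares U _ hwu
  have hS := hprod S x hx0 hxu
  have hT := hprod T y hy0 hyu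
  have hchi := congrArg χ heq
  rw [map_mul, map_mul, map_mul] at hchi
  set a1 := χ (∏ e ∈ S, (1 - x e))
  set a0 := χ (∏ e ∈ S, (0 - x e))
  set b1 := χ (∏ e ∈ T, (1 - y e))
  set b0 := χ (∏ e ∈ T, (0 - y e))
  have ha1 : a1 * a1 = 1 := by
    have : (∏ e ∈ S, (1 - (x e))) ≠ 0 :=
      Finset.prod_ne_zero_iff.mpr fun e he => sub_ne_zero.mpr fun h => hx1 e he h.symm
    have := quadraticChar_sq_one this
    rwa [pow_two] at this
  have hb0 : b0 * b0 = 1 := by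
    have : (∏ e ∈ T, ((0:F) - (y e))) ≠ 0 :=
      Finset.prod_ne_zero_iff.mpr fun e he => sub_ne_zero.mpr fun h => hy0 e he h.symm
    have := quadraticChar_sq_one this
    rwa [pow_two] at this
  have hfin : χ lam = (-1) ^ (S.card + T.card) := by
    calc χ lam = χ lam * (a1 * a1) * (b0 * b0) := by rw [ha1, hb0]; ring
    _ = (χ lam * a1 * b0) * a1 * b0 := by ring
    _ = (b1 * a0) * a1 * b0 := by rw [hchi]
    _ = (a1 * a0) * (b1 * b0) := by ring
    _ = (-1) ^ S.card * (-1) ^ T.card := by rw [hS, hT]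
    _ = (-1) ^ (S.card + T.card) := (pow_add _ _ _).symm
  rw [hlam] at hfin
  have : ((-1 : ℤ)) ^ (S.card + T.card) ≠ 0 := pow_ne_zero _ (by norm_num)
  omega
end Key

section Main
variable {F : Type*} [Field F] {α : Type*} [DecidableEq α]

def col1 (k m : ℕ) (x : F) : Fin k → F := fun i =>
  if (i:ℕ) = 0 then 1 - x else if (i:ℕ) = 1 then x
    else if (i:ℕ) < m then x ^ (i:ℕ) - x else 0

def col2 (k m : ℕ) (lam y : F) : Fin k → F := fun i =>
  if (i:ℕ) = 0 then 1 - y else if (i:ℕ) = 1 then lam * y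
    else if (i:ℕ) < m then 0 else y ^ ((i:ℕ) - m + 2) - y

def jmap (k m l : ℕ) (hm2 : 2 ≤ m) (hlk : l ≤ k) (hd : m + l = k + 2) : Fin l → Fin k :=
  fun j => ⟨if (j:ℕ) < 2 then (j:ℕ) else (j:ℕ) + m - 2, by split <;> omega⟩

lemma bounds_of_indep {E1 E2 : Finset α} {k m l : ℕ} {f : α → Fin k → F}
    (hm2 : 2 ≤ m) (hl2 : 2 ≤ l) (hmk : m ≤ k) (hlk : l ≤ k) (hd : m + l = k + 2)
    (hf1 : ∀ e ∈ E1, ∀ i : Fin k, m ≤ (i:ℕ) → f e i = 0)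
    (hf2 : ∀ e ∈ E2, ∀ i : Fin k, 2 ≤ (i:ℕ) → (i:ℕ) < m → f e i = 0)
    {B : Finset α} (hli : LinearIndependent F (fun e : B => f e)) :
    B.card ≤ k ∧ (B ∩ E1).card ≤ m ∧ (B ∩ E2).card ≤ l := by
  refine ⟨?_, ?_, ?_⟩
  · have h := hli.fintype_card_le_finrank
    simpa [Module.finrank_fintype_fun_eq_card] using h
  · set S1 := B ∩ E1 with hS1
    have hli1 : LinearIndependent F (fun e : S1 => f e) := by
      have := hli.comp (fun e : S1 => (⟨(e:α), (Finset.mem_inter.mp e.2).1⟩ : B))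
        (fun a b hab => Subtype.ext (Subtype.mk_eq_mk.mp hab))
      exact this
    have hli2 : LinearIndependent F (fun (e : S1) (j : Fin m) => f e (Fin.castLE hmk j)) := by
      rw [Fintype.linearIndependent_iff] at hli1 ⊢
      intro g hg
      refine hli1 g ?_
      funext i
      have hz : (0 : Fin k → F) i = 0 := rfl
      rw [hz]
      rw [Finset.sum_apply]
      by_cases him : (i:ℕ) < m
      · have h := congrFun hg ⟨(i:ℕ), him⟩
        rw [Finset.sum_apply] at h
        have hcast : Fin.castLE hmk ⟨(i:ℕ), him⟩ = i := Fin.ext rfl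
        simpa [hcast] using h
      · refine Finset.sum_eq_zero fun e _ => ?_
        have := hf1 e (Finset.mem_inter.mp e.2).2 i (by omega)
        simp [this]
    have h := hli2.fintype_card_le_finrank
    simpa [Module.finrank_fintype_fun_eq_card] using h
  · set S2 := B ∩ E2 with hS2
    have hli1 : LinearIndependent F (fun e : S2 => f e) := by
      have := hli.comp (fun e : S2 => (⟨(e:α), (Finset.mem_inter.mp e.2).1⟩ : B))
        (fun a b hab => Subtype.ext (Subtype.mk_eq_mk.mp hab))
      exact this
    have hli2 : LinearIndependent F
        (fun (e : S2) (j : Fin l) => f e (jmap k m l hm2 hlk hd j)) := by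
      rw [Fintype.linearIndependent_iff] at hli1 ⊢
      intro g hg
      have h0 : ∀ j : Fin l, ∑ c : {x // x ∈ S2}, g c * f (↑c) (jmap k m l hm2 hlk hd j) = 0 := by
        intro j
        have h := congrFun hg j
        rw [Finset.sum_apply] at h
        simpa using h
      refine hli1 g ?_
      funext i
      have hz : (0 : Fin k → F) i = 0 := rfl
      rw [hz, Finset.sum_apply]
      by_cases hi2 : (i:ℕ) < 2
      · have hpf : (i:ℕ) < l := by omega
        have h := h0 ⟨(i:ℕ), hpf⟩
        have hj : jmap k m l hm2 hlk hd ⟨(i:ℕ), hpf⟩ = i := Fin.ext (by simp [jmap, hi2])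
        rw [hj] at h
        simpa using h
      by_cases him : (i:ℕ) < m
      · refine Finset.sum_eq_zero fun e _ => ?_
        have := hf2 e (Finset.mem_inter.mp e.2).2 i (by omega) him
        simp [this]
      · have hpf : (i:ℕ) - m + 2 < l := by omega
        have h := h0 ⟨(i:ℕ) - m + 2, hpf⟩
        have hj : jmap k m l hm2 hlk hd ⟨(i:ℕ) - m + 2, hpf⟩ = i := by
          apply Fin.ext; simp only [jmap]; rw [if_neg (by omega)]; omega
        rw [hj] at h
        simpa using h
    have h := hli2.fintype_card_le_finrank
    simpa [Module.finrank_fintype_fun_eq_card] using h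

end Main

section Cols
variable {F : Type*} [Field F]

lemma col1_at0 {k m : ℕ} {x : F} {i : Fin k} (h : (i:ℕ) = 0) : col1 k m x i = 1 - x := by
  simp [col1, h]

lemma col1_at1 {k m : ℕ} {x : F} {i : Fin k} (h : (i:ℕ) = 1) : col1 k m x i = x := by
  simp [col1, h]

lemma col1_mid {k m : ℕ} {x : F} {i : Fin k} (h2 : 2 ≤ (i:ℕ)) (hm : (i:ℕ) < m) :
    col1 k m x i = x ^ (i:ℕ) - x := by
  unfold col1
  rw [if_neg (by omega), if_neg (by omega), if_pos hm]

lemma col1_high {k m : ℕ} {x : F} {i : Fin k} (hm2 : 2 ≤ m) (h : m ≤ (i:ℕ)) :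
    col1 k m x i = 0 := by
  unfold col1
  rw [if_neg (by omega), if_neg (by omega), if_neg (by omega)]

lemma col2_at0 {k m : ℕ} {lam y : F} {i : Fin k} (h : (i:ℕ) = 0) : col2 k m lam y i = 1 - y := by
  simp [col2, h]

lemma col2_at1 {k m : ℕ} {lam y : F} {i : Fin k} (h : (i:ℕ) = 1) : col2 k m lam y i = lam * y := by
  simp [col2, h]

lemma col2_mid {k m : ℕ} {lam y : F} {i : Fin k} (h2 : 2 ≤ (i:ℕ)) (hm : (i:ℕ) < m) :
    col2 k m lam y i = 0 := by
  unfold col2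
  rw [if_neg (by omega), if_neg (by omega), if_pos hm]

lemma col2_high {k m : ℕ} {lam y : F} {i : Fin k} (hm2 : 2 ≤ m) (h : m ≤ (i:ℕ)) :
    col2 k m lam y i = y ^ ((i:ℕ) - m + 2) - y := by
  unfold col2
  rw [if_neg (by omega), if_neg (by omega), if_neg (by omega)]

end Cols

section Main2
variable {F : Type*} [Field F] [Fintype F] [DecidableEq F] {α : Type*} [DecidableEq α]

lemma li_of_bounds {E1 E2 : Finset α} {k m l : ℕ} {x y : α → F} {lam : F}
    (hm2 : 2 ≤ m) (hl2 : 2 ≤ l) (hmk : m ≤ k) (hlk : l ≤ k) (hd : m + l = k + 2)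
    (hdisj : Disjoint E1 E2)
    (hxinj : Set.InjOn x E1) (hyinj : Set.InjOn y E2)
    (hx0 : ∀ e ∈ E1, x e ≠ 0) (hx1 : ∀ e ∈ E1, x e ≠ 1)
    (hxu : ∀ e ∈ E1, ¬ IsSquare (1 - (x e)⁻¹))
    (hy0 : ∀ e ∈ E2, y e ≠ 0) (hy1 : ∀ e ∈ E2, y e ≠ 1)
    (hyu : ∀ e ∈ E2, ¬ IsSquare (1 - (y e)⁻¹))
    (hlam : quadraticChar F lam = -(-1) ^ k) (hlam0 : lam ≠ 0)
    {f : α → Fin k → F}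
    (hfE1 : ∀ e ∈ E1, f e = col1 k m (x e))
    (hfE2 : ∀ e ∈ E2, f e = col2 k m lam (y e))
    {B : Finset α} (hcover : ∀ e ∈ B, e ∈ E1 ∨ e ∈ E2)
    (hBk : B.card ≤ k) (hB1 : (B ∩ E1).card ≤ m) (hB2 : (B ∩ E2).card ≤ l) :
    LinearIndependent F (fun e : B => f e) := by
  have hk2 : 2 ≤ k := by omega
  rw [Fintype.linearIndependent_iff]
  intro g hg
  classical
  set c : α → F := fun e => if h : e ∈ B then g ⟨e, h⟩ else 0 with hc
  set S1 := B ∩ E1 with hS1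
  set S2 := B ∩ E2 with hS2
  have hS1E : ∀ e ∈ S1, e ∈ E1 := fun e he => (Finset.mem_inter.mp he).2
  have hS2E : ∀ e ∈ S2, e ∈ E2 := fun e he => (Finset.mem_inter.mp he).2
  have hunion : S1 ∪ S2 = B := by
    rw [hS1, hS2, ← Finset.inter_union_distrib_left]
    apply Finset.inter_eq_left.mpr
    intro e he
    rcases hcover e he with h | h
    · exact Finset.mem_union_left _ h
    · exact Finset.mem_union_right _ h
  have hdisj' : Disjoint S1 S2 :=
    Finset.disjoint_of_subset_left (Finset.inter_subset_right)
      (Finset.disjoint_of_subset_right (Finset.inter_subset_right) hdisj)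
  have hcardsum : S1.card + S2.card = B.card := by
    rw [← hunion]; exact (Finset.card_union_of_disjoint hdisj').symm
  -- the vector equation
  have hsum0 : ∑ e ∈ B, c e • f e = (0 : Fin k → F) := by
    rw [← Finset.sum_attach B (fun e => c e • f e)]
    have hterm : ∀ e ∈ B.attach, c (e:α) • f (e:α) = g e • f (e:α) := by
      intro e _
      have : c (e:α) = g e := by rw [hc]; simp
      rw [this]
    rw [Finset.sum_congr rfl hterm, ← Finset.univ_eq_attach]
    exact hg
  have hcoord : ∀ i : Fin k,
      ∑ e ∈ S1, c e * col1 k m (x e) i + ∑ e ∈ S2, c e * col2 k m lam (y e) i = 0 := by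
    intro i
    have h := congrFun hsum0 i
    rw [Finset.sum_apply, ← hunion, Finset.sum_union hdisj'] at h
    have e1 : ∑ e ∈ S1, (c e • f e) i = ∑ e ∈ S1, c e * col1 k m (x e) i :=
      Finset.sum_congr rfl fun e he => by rw [hfE1 e (hS1E e he)]; simp
    have e2 : ∑ e ∈ S2, (c e • f e) i = ∑ e ∈ S2, c e * col2 k m lam (y e) i :=
      Finset.sum_congr rfl fun e he => by rw [hfE2 e (hS2E e he)]; simp
    rw [e1, e2] at h
    exact h
  -- gluing equations
  have h0 : (∑ e ∈ S1, c e * (1 - x e)) + (∑ e ∈ S2, c e * (1 - y e)) = 0 := by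
    have h := hcoord ⟨0, by omega⟩
    have e1 : ∑ e ∈ S1, c e * col1 k m (x e) ⟨0, by omega⟩ = ∑ e ∈ S1, c e * (1 - x e) :=
      Finset.sum_congr rfl fun e he => by rw [col1_at0 rfl]
    have e2 : ∑ e ∈ S2, c e * col2 k m lam (y e) ⟨0, by omega⟩ = ∑ e ∈ S2, c e * (1 - y e) :=
      Finset.sum_congr rfl fun e he => by rw [col2_at0 rfl]
    rwa [e1, e2] at h
  have h1 : (∑ e ∈ S1, c e * x e) + lam * (∑ e ∈ S2, c e * y e) = 0 := by
    have h := hcoord ⟨1, by omega⟩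
    have e1 : ∑ e ∈ S1, c e * col1 k m (x e) ⟨1, by omega⟩ = ∑ e ∈ S1, c e * x e :=
      Finset.sum_congr rfl fun e he => by rw [col1_at1 rfl]
    have e2 : ∑ e ∈ S2, c e * col2 k m lam (y e) ⟨1, by omega⟩
        = ∑ e ∈ S2, c e * (lam * y e) :=
      Finset.sum_congr rfl fun e he => by rw [col2_at1 rfl]
    rw [e1, e2] at h
    have e3 : ∑ e ∈ S2, c e * (lam * y e) = lam * ∑ e ∈ S2, c e * y e := by
      rw [Finset.mul_sum]
      exact Finset.sum_congr rfl fun e he => by ring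
    rwa [e3] at h
  -- power identities
  have HX : ∀ j < m, ∑ e ∈ S1, c e * x e ^ j
      = (∑ e ∈ S1, c e * (1 - x e)) * 0 ^ j + (∑ e ∈ S1, c e * x e) * 1 ^ j := by
    intro j hj
    rcases Nat.lt_or_ge j 2 with hj2 | hj2
    · interval_cases j
      · simp only [pow_zero, mul_one]
        rw [← Finset.sum_add_distrib]
        exact Finset.sum_congr rfl fun e he => by ring
      · simp
    · have hjk : j < k := by omega
      have h := hcoord ⟨j, hjk⟩
      have e1 : ∑ e ∈ S1, c e * col1 k m (x e) ⟨j, hjk⟩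
          = ∑ e ∈ S1, (c e * x e ^ j - c e * x e) :=
        Finset.sum_congr rfl fun e he => by rw [col1_mid hj2 hj]; ring
      have e2 : ∑ e ∈ S2, c e * col2 k m lam (y e) ⟨j, hjk⟩ = 0 :=
        Finset.sum_eq_zero fun e he => by rw [col2_mid hj2 hj, mul_zero]
      rw [e1, e2, add_zero, Finset.sum_sub_distrib, sub_eq_zero] at h
      rw [zero_pow (by omega), one_pow, mul_zero, zero_add, mul_one]
      exact h
  have HY : ∀ j < l, ∑ e ∈ S2, c e * y e ^ j
      = (∑ e ∈ S2, c e * (1 - y e)) * 0 ^ j + (∑ e ∈ S2, c e * y e) * 1 ^ j := by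
    intro j hj
    rcases Nat.lt_or_ge j 2 with hj2 | hj2
    · interval_cases j
      · simp only [pow_zero, mul_one]
        rw [← Finset.sum_add_distrib]
        exact Finset.sum_congr rfl fun e he => by ring
      · simp
    · have hjk : m + j - 2 < k := by omega
      have h := hcoord ⟨m + j - 2, hjk⟩
      have e1 : ∑ e ∈ S1, c e * col1 k m (x e) ⟨m + j - 2, hjk⟩ = 0 :=
        Finset.sum_eq_zero fun e he => by
          rw [col1_high hm2 (by omega : m ≤ m + j - 2), mul_zero]
      have e2 : ∑ e ∈ S2, c e * col2 k m lam (y e) ⟨m + j - 2, hjk⟩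
          = ∑ e ∈ S2, (c e * y e ^ j - c e * y e) :=
        Finset.sum_congr rfl fun e he => by
          rw [col2_high hm2 (by omega : m ≤ m + j - 2)]
          rw [show (m + j - 2) - m + 2 = j from by omega]
          ring
      rw [e1, e2, zero_add, Finset.sum_sub_distrib, sub_eq_zero] at h
      rw [zero_pow (by omega), one_pow, mul_zero, zero_add, mul_one]
      exact h
  -- restricted properties
  have hxinj1 : Set.InjOn x S1 := fun a ha b hb => hxinj (hS1E _ ha) (hS1E _ hb)
  have hyinj2 : Set.InjOn y S2 := fun a ha b hb => hyinj (hS2E _ ha) (hS2E _ hb)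
  have hx0' : ∀ e ∈ S1, x e ≠ 0 := fun e he => hx0 e (hS1E e he)
  have hx1' : ∀ e ∈ S1, x e ≠ 1 := fun e he => hx1 e (hS1E e he)
  have hxu' : ∀ e ∈ S1, ¬ IsSquare (1 - (x e)⁻¹) := fun e he => hxu e (hS1E e he)
  have hy0' : ∀ e ∈ S2, y e ≠ 0 := fun e he => hy0 e (hS2E e he)
  have hy1' : ∀ e ∈ S2, y e ≠ 1 := fun e he => hy1 e (hS2E e he)
  have hyu' : ∀ e ∈ S2, ¬ IsSquare (1 - (y e)⁻¹) := fun e he => hyu e (hS2E e he)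
  -- conclusion from coefficient vanishing
  have final : (∀ e ∈ S1, c e = 0) → (∀ e ∈ S2, c e = 0) → ∀ i : B, g i = 0 := by
    intro hz1 hz2 i
    have hiB : (i:α) ∈ B := i.2
    have hci : c (i:α) = g i := by rw [hc]; simp
    rw [← hci]
    rcases hcover _ hiB with h | h
    · exact hz1 _ (Finset.mem_inter.mpr ⟨hiB, h⟩)
    · exact hz2 _ (Finset.mem_inter.mpr ⟨hiB, h⟩)
  by_cases hca : S1.card + 2 ≤ m
  · obtain ⟨hA1, hB1z, hz1⟩ := side_easy hxinj1 hx0' hx1' hca HX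
    have hA2 : ∑ e ∈ S2, c e * (1 - y e) = 0 := by linear_combination h0 - hA1
    have hB2z : ∑ e ∈ S2, c e * y e = 0 := by
      have h' : lam * ∑ e ∈ S2, c e * y e = 0 := by linear_combination h1 - hB1z
      exact (mul_eq_zero.mp h').resolve_left hlam0
    exact final hz1 (side_zero hyinj2 hB2 (by omega) HY hA2 hB2z)
  by_cases hcb : S2.card + 2 ≤ l
  · obtain ⟨hA2, hB2z, hz2⟩ := side_easy hyinj2 hy0' hy1' hcb HY
    have hA1 : ∑ e ∈ S1, c e * (1 - x e) = 0 := by linear_combination h0 - hA2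
    have hB1z : ∑ e ∈ S1, c e * x e = 0 := by linear_combination h1 - lam * hB2z
    exact final (side_zero hxinj1 hB1 (by omega) HX hA1 hB1z) hz2
  -- critical case
  have hc1c : S1.card + 1 = m := by omega
  have hc2c : S2.card + 1 = l := by omega
  have hne1 : S1.Nonempty := Finset.card_pos.mp (by omega)
  have hne2 : S2.Nonempty := Finset.card_pos.mp (by omega)
  obtain ⟨heq1, himp1⟩ := side_crit hxinj1 hx0' hx1' hc1c hne1 HX
  obtain ⟨heq2, himp2⟩ := side_crit hyinj2 hy0' hy1' hc2c hne2 HY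
  by_cases hB2z : (∑ e ∈ S2, c e * y e) = 0
  · obtain ⟨hA2, hz2⟩ := himp2 hB2z
    have hB1z : ∑ e ∈ S1, c e * x e = 0 := by linear_combination h1 - lam * hB2z
    obtain ⟨hA1, hz1⟩ := himp1 hB1z
    exact final hz1 hz2
  · exfalso
    have hEq : (∑ e ∈ S2, c e * y e) * (lam * (∏ e ∈ S1, (1 - x e)) * (∏ e ∈ S2, (0 - y e)))
        = (∑ e ∈ S2, c e * y e) * ((∏ e ∈ S2, (1 - y e)) * (∏ e ∈ S1, (0 - x e))) := by
      linear_combination (-(∏ e ∈ S2, (0 - y e))) * heq1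
        + ((∏ e ∈ S2, (0 - y e)) * (∏ e ∈ S1, (0 - x e))) * h0
        + ((∏ e ∈ S2, (0 - y e)) * (∏ e ∈ S1, (1 - x e))) * h1
        + (-(∏ e ∈ S1, (0 - x e))) * heq2
    have hcan := mul_left_cancel₀ hB2z hEq
    have hlam' : quadraticChar F lam = -(-1) ^ (S1.card + S2.card) := by
      rw [show S1.card + S2.card = k from by omega]
      exact hlam
    exact key_neq hlam' hx0' hxu' hy0' hyu' hcan

end Main2

set_option maxHeartbeats 2000000 in
theorem stmt4 {α : Type*} [Fintype α] [DecidableEq α]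
    (q : ℕ) (hq : IsPrimePow q) (hodd : Odd q)
    (F : Type*) [Field F] [Fintype F] (hcard : Fintype.card F = q)
    (E1 E2 : Finset α) (k m ℓ : ℕ)
    (hdisj : Disjoint E1 E2) (huniv : E1 ∪ E2 = Finset.univ)
    (hk : 0 < k) (hm : 0 < m) (hl : 0 < ℓ)
    (hmk : m ≤ k) (hlk : ℓ ≤ k)
    (hmE1 : m ≤ E1.card) (hlE2 : ℓ ≤ E2.card)
    (hd : m + ℓ = k + 2)
    (hsize : max E1.card E2.card ≤ (q - 1) / 2) :
    ∃ f : α → Fin k → F, IsBiUniformRep F E1 E2 k m ℓ f := by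
  classical
  have hm2 : 2 ≤ m := by omega
  have hl2 : 2 ≤ ℓ := by omega
  have hk2 : 2 ≤ k := by omega
  -- characteristic is odd
  have hchar : ringChar F ≠ 2 := by
    intro h
    have h2 := (FiniteField.even_card_iff_char_two).mp h
    rw [hcard] at h2
    have ho := Nat.odd_iff.mp hodd
    omega
  -- the set of suitable parameters
  set N : Finset F := Finset.univ.filter (fun a : F => ¬ IsSquare a) with hN
  have hNcard : 2 * N.card + 1 = q := by
    rw [hN, ← hcard]; exact card_nonsquares hchar
  set T : Finset F := N.image (fun u => (1 - u)⁻¹) with hT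
  have hTinj : Function.Injective (fun u : F => (1 - u)⁻¹) := by
    intro a b hab
    have h2 := inv_injective hab
    exact sub_right_inj.mp h2
  have hTcard : T.card = N.card := Finset.card_image_of_injective _ hTinj
  have hTprop : ∀ v ∈ T, v ≠ 0 ∧ v ≠ 1 ∧ ¬ IsSquare (1 - v⁻¹) := by
    intro v hv
    obtain ⟨u, hu, huv⟩ := Finset.mem_image.mp hv
    have hu' : ¬ IsSquare u := (Finset.mem_filter.mp hu).2
    have hu1 : (1:F) - u ≠ 0 := by
      intro h
      exact hu' (by rw [show u = 1 from (sub_eq_zero.mp h).symm]; exact IsSquare.one)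
    have hv0 : v ≠ 0 := by rw [← huv]; exact inv_ne_zero hu1
    have hvinu : v⁻¹ = 1 - u := by rw [← huv, inv_inv]
    have hv1 : v ≠ 1 := by
      intro h
      rw [h, inv_one] at hvinu
      exact hu' (by rw [show u = 0 from sub_eq_self.mp hvinu.symm]; exact IsSquare.zero)
    refine ⟨hv0, hv1, ?_⟩
    rw [hvinu]
    simpa using hu'
  have hqN : (q - 1) / 2 ≤ N.card := by omega
  -- choose parameters for E1 and E2
  have hpick : ∀ E : Finset α, E.card ≤ T.card →
      ∃ z : α → F, Set.InjOn z E ∧ ∀ e ∈ E, z e ∈ T := by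
    intro E hE
    obtain ⟨T1, hT1sub, hT1card⟩ := Finset.exists_subset_card_eq hE
    have heq : Fintype.card E = Fintype.card T1 := by
      rw [Fintype.card_coe, Fintype.card_coe, hT1card]
    have eqv := Fintype.equivOfCardEq heq
    refine ⟨fun e => if h : e ∈ E then ((eqv ⟨e, h⟩ : T1) : F) else 0, ?_, ?_⟩
    · intro a ha b hb hab
      have ha' : a ∈ E := ha
      have hb' : b ∈ E := hb
      have hab2 : ((eqv ⟨a, ha'⟩ : T1) : F) = ((eqv ⟨b, hb'⟩ : T1) : F) := by
        simpa [dif_pos ha', dif_pos hb'] using hab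
      have h2 := eqv.injective (Subtype.ext hab2)
      exact Subtype.mk_eq_mk.mp h2
    · intro e he
      simp only [dif_pos he]
      exact hT1sub (eqv ⟨e, he⟩).2
  have hE1T : E1.card ≤ T.card := by
    rw [hTcard]; exact le_trans (le_trans (le_max_left _ _) hsize) hqN
  have hE2T : E2.card ≤ T.card := by
    rw [hTcard]; exact le_trans (le_trans (le_max_right _ _) hsize) hqN
  obtain ⟨x, hxinj, hxmem⟩ := hpick E1 hE1T
  obtain ⟨y, hyinj, hymem⟩ := hpick E2 hE2T
  -- the twist constant
  obtain ⟨ns, hns⟩ := FiniteField.exists_nonsquare hchar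
  set lam : F := if Even k then ns else 1 with hlamdef
  have hlam : quadraticChar F lam = -(-1) ^ k := by
    rcases Nat.even_or_odd k with he | ho
    · rw [hlamdef, if_pos he, he.neg_one_pow]
      rw [quadraticChar_neg_one_iff_not_isSquare.mpr hns]
    · rw [hlamdef, if_neg (Nat.not_even_iff_odd.mpr ho), ho.neg_one_pow]
      simp
  have hlam0 : lam ≠ 0 := by
    rcases Nat.even_or_odd k with he | ho
    · rw [hlamdef, if_pos he]
      intro h
      exact hns (by rw [h]; exact IsSquare.zero)
    · rw [hlamdef, if_neg (Nat.not_even_iff_odd.mpr ho)]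
      exact one_ne_zero
  -- the representation
  refine ⟨fun e => if e ∈ E1 then col1 k m (x e) else col2 k m lam (y e), ?_⟩
  intro B
  have hfE1 : ∀ e ∈ E1, (fun e => if e ∈ E1 then col1 k m (x e) else col2 k m lam (y e)) e
      = col1 k m (x e) := fun e he => by simp [he]
  have hfE2 : ∀ e ∈ E2, (fun e => if e ∈ E1 then col1 k m (x e) else col2 k m lam (y e)) e
      = col2 k m lam (y e) := fun e he => by
    simp [Finset.disjoint_right.mp hdisj he]
  constructor
  · intro hli
    refine bounds_of_indep (E1 := E1) (E2 := E2)
        (f := fun e => if e ∈ E1 then col1 k m (x e) else col2 k m lam (y e))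
        hm2 hl2 hmk hlk hd ?_ ?_ hli
    · intro e he i hi
      rw [if_pos he]
      exact col1_high hm2 hi
    · intro e he i hi2 him
      rw [if_neg (Finset.disjoint_right.mp hdisj he)]
      exact col2_mid hi2 him
  · rintro ⟨hBk, hB1, hB2⟩
    refine li_of_bounds (f := fun e => if e ∈ E1 then col1 k m (x e) else col2 k m lam (y e))
        hm2 hl2 hmk hlk hd hdisj hxinj hyinj ?_ ?_ ?_ ?_ ?_ ?_ hlam hlam0
      hfE1 hfE2 ?_ hBk hB1 hB2
    · exact fun e he => (hTprop _ (hxmem e he)).1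
    · exact fun e he => (hTprop _ (hxmem e he)).2.1
    · exact fun e he => (hTprop _ (hxmem e he)).2.2
    · exact fun e he => (hTprop _ (hymem e he)).1
    · exact fun e he => (hTprop _ (hymem e he)).2.1
    · exact fun e he => (hTprop _ (hymem e he)).2.2
    · intro e he
      have : e ∈ E1 ∪ E2 := by rw [huniv]; exact Finset.mem_univ e
      exact Finset.mem_union.mp this
end

section
/- Let q be an odd prime power, let m, ℓ ≥ 2 be integers and k = m + ℓ − 2. Let L ⊆ F_q be the set of nonzero squares, and let η ∈ F_q be such that (−1)^{ℓ+m}·η is a non-square in F_q. For t ∈ F_q define the vectors s(t) = Σ_{i=1}^{m−2} t^i e_i + e_{m−1} + t^{m−1} e_m and u(t) = η e_{m−1} + Σ_{i=1}^{ℓ−1} t^i e_{k+1−i} in F_q^k, where e_1, …, e_k is the standard basis. Then for all nonnegative integers a, b with a + b = k, a ≤ m and b ≤ ℓ, and all pairwise distinct t_1, …, t_a ∈ L and pairwise distinct t'_1, …, t'_b ∈ L, the k vectors s(t_1), …, s(t_a), u(t'_1), …, u(t'_b) form a basis of F_q^k. -/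
/-- `paperBasis F k n` is the standard basis vector `e_n` of `F^k` in the paper's
1-indexed notation (`n` ranges over `1, …, k`). -/
def paperBasis (F : Type*) [Zero F] [One F] (k n : ℕ) : Fin k → F :=
  fun j => if (j : ℕ) + 1 = n then 1 else 0

/-- `s(t) = ∑_{i=1}^{m-2} t^i e_i + e_{m-1} + t^{m-1} e_m ∈ F^k`. -/
def sVec (F : Type*) [Field F] (k m : ℕ) (t : F) : Fin k → F :=
  (∑ i ∈ Finset.Icc 1 (m - 2), t ^ i • paperBasis F k i) +
    paperBasis F k (m - 1) + t ^ (m - 1) • paperBasis F k m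

/-- `u(t) = η e_{m-1} + ∑_{i=1}^{ℓ-1} t^i e_{k+1-i} ∈ F^k`. -/
def uVec (F : Type*) [Field F] (k m ℓ : ℕ) (η t : F) : Fin k → F :=
  η • paperBasis F k (m - 1) +
    ∑ i ∈ Finset.Icc 1 (ℓ - 1), t ^ i • paperBasis F k (k + 1 - i)

lemma sVec_apply (F : Type*) [Field F] (k m : ℕ) (t : F) (j : Fin k) :
    sVec F k m t j =
      (if (j : ℕ) + 1 ≤ m - 2 then t ^ ((j : ℕ) + 1) else 0) +
        (if (j : ℕ) + 1 = m - 1 then 1 else 0) +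
        (if (j : ℕ) + 1 = m then t ^ (m - 1) else 0) := by
  unfold sVec paperBasis
  simp only [Pi.add_apply, Finset.sum_apply, Pi.smul_apply, smul_eq_mul, mul_ite,
    mul_one, mul_zero]
  congr 1
  congr 1
  rw [Finset.sum_ite_eq (Finset.Icc 1 (m - 2)) ((j : ℕ) + 1) (fun i => t ^ i)]
  simp [Finset.mem_Icc, Nat.succ_le_succ (Nat.zero_le _)]

lemma uVec_apply (F : Type*) [Field F] (k m ℓ : ℕ) (hm : 2 ≤ m) (hl : 2 ≤ ℓ)
    (hk : k = m + ℓ - 2) (η t : F) (j : Fin k) :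
    uVec F k m ℓ η t j =
      (if (j : ℕ) + 1 = m - 1 then η else 0) +
        (if m ≤ (j : ℕ) + 1 then t ^ (k - (j : ℕ)) else 0) := by
  have hjk : (j : ℕ) < k := j.isLt
  unfold uVec paperBasis
  simp only [Pi.add_apply, Finset.sum_apply, Pi.smul_apply, smul_eq_mul, mul_ite,
    mul_one, mul_zero]
  congr 1
  rw [Finset.sum_congr rfl (fun i hi => ?_), Finset.sum_ite_eq'
    (Finset.Icc 1 (ℓ - 1)) (k - (j : ℕ)) (fun i => t ^ i)]
  · by_cases hc : m ≤ (j : ℕ) + 1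
    · rw [if_pos (by rw [Finset.mem_Icc]; omega), if_pos hc]
    · rw [if_neg (by rw [Finset.mem_Icc]; omega), if_neg hc]
  · rw [Finset.mem_Icc] at hi
    have : ((j : ℕ) + 1 = k + 1 - i) ↔ (i = k - (j : ℕ)) := by omega
    simp only [this]

lemma powsum_all_zero {F : Type*} [Field F] {n : ℕ} {t α : Fin n → F}
    (ht : Function.Injective t)
    (h : ∀ p : ℕ, p < n → ∑ i, α i * t i ^ p = 0) : α = 0 :=
  Matrix.eq_zero_of_forall_pow_sum_mul_pow_eq_zero ht fun p => h p p.isLt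

lemma powsum_shift_zero {F : Type*} [Field F] {n : ℕ} {t α : Fin n → F}
    (ht : Function.Injective t) (ht0 : ∀ i, t i ≠ 0)
    (h : ∀ p : ℕ, 1 ≤ p → p ≤ n → ∑ i, α i * t i ^ p = 0) : α = 0 := by
  have h' : (fun i => α i * t i) = 0 := by
    apply Matrix.eq_zero_of_forall_pow_sum_mul_pow_eq_zero ht
    intro p
    have h2 := h ((p : ℕ) + 1) (by omega) (by omega)
    rw [← h2]
    refine Finset.sum_congr rfl fun i _ => ?_
    rw [pow_succ]; ring
  funext i
  have := congrFun h' i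
  simp only [Pi.zero_apply] at this ⊢
  rcases mul_eq_zero.1 this with h | h
  · exact h
  · exact absurd h (ht0 i)

lemma powsum_top {F : Type*} [Field F] {n : ℕ} (hn : 1 ≤ n) (t α : Fin n → F)
    (h : ∀ p : ℕ, 1 ≤ p → p < n → ∑ i, α i * t i ^ p = 0) :
    ∑ i, α i * t i ^ n + (-1 : F) ^ n * (∏ i, t i) * (∑ i, α i) = 0 := by
  classical
  set P : Polynomial F := ∏ i, (Polynomial.X - Polynomial.C (t i)) with hP
  have hmonic : P.Monic :=
    Polynomial.monic_prod_of_monic _ _ fun i _ => Polynomial.monic_X_sub_C _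
  have hdeg : P.natDegree = n := by
    rw [hP, Polynomial.natDegree_prod_of_monic _ _ fun i _ => Polynomial.monic_X_sub_C _]
    simp
  have heval : ∀ i, P.eval (t i) = 0 := by
    intro i
    rw [hP, Polynomial.eval_prod]
    exact Finset.prod_eq_zero (Finset.mem_univ i) (by simp)
  have hexp : ∀ x : F, P.eval x = ∑ p ∈ Finset.range (n + 1), P.coeff p * x ^ p := by
    intro x
    rw [Polynomial.eval_eq_sum_range, hdeg]
  have key : ∑ p ∈ Finset.range (n + 1), P.coeff p * ∑ i, α i * t i ^ p = 0 := by
    calc ∑ p ∈ Finset.range (n + 1), P.coeff p * ∑ i, α i * t i ^ p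
        = ∑ i, α i * P.eval (t i) := by
          simp_rw [Finset.mul_sum]
          rw [Finset.sum_comm]
          refine Finset.sum_congr rfl fun i _ => ?_
          rw [hexp, Finset.mul_sum]
          exact Finset.sum_congr rfl fun p _ => by ring
      _ = 0 := by simp [heval]
  have split : ∀ p ∈ Finset.range (n + 1),
      P.coeff p * ∑ i, α i * t i ^ p =
        (if p = 0 then P.coeff 0 * ∑ i, α i else 0) +
          (if p = n then ∑ i, α i * t i ^ n else 0) := by
    intro p hp
    rw [Finset.mem_range] at hp
    rcases eq_or_ne p 0 with rfl | hp0
    · simp [if_neg (by omega : ¬ (0 : ℕ) = n)]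
    · rcases eq_or_ne p n with hpn | hpn
      · have hc : P.coeff n = 1 := by
          have := hmonic.coeff_natDegree
          rwa [hdeg] at this
        subst hpn
        simp [hc, hp0]
      · rw [h p (by omega) (by omega)]
        simp [hp0, hpn]
  rw [Finset.sum_congr rfl split, Finset.sum_add_distrib,
    Finset.sum_ite_eq' (Finset.range (n + 1)) 0,
    Finset.sum_ite_eq' (Finset.range (n + 1)) n] at key
  rw [if_pos (by simp), if_pos (by simp [Finset.mem_range])] at key
  have hc0 : P.coeff 0 = (-1 : F) ^ n * ∏ i, t i := by
    rw [Polynomial.coeff_zero_eq_eval_zero, hP, Polynomial.eval_prod]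
    simp only [Polynomial.eval_sub, Polynomial.eval_X, Polynomial.eval_C, zero_sub]
    rw [show (fun i => -t i) = fun i => (-1) * t i from funext fun i => by ring,
      Finset.prod_mul_distrib, Finset.prod_const]
    simp
  rw [hc0] at key
  linear_combination key

lemma main_aux {F : Type*} [Field F] {m ℓ k : ℕ} (hm : 2 ≤ m) (hl : 2 ≤ ℓ)
    (hk : k = m + ℓ - 2) {η : F}
    (hη : ¬ ∃ x : F, x ^ 2 = (-1 : F) ^ (ℓ + m) * η)
    {a b : ℕ} (hab : a + b = k) (ha : a ≤ m) (hb : b ≤ ℓ)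
    {t : Fin a → F} {t' : Fin b → F}
    (htinj : Function.Injective t) (ht'inj : Function.Injective t')
    (htL : ∀ i, ∃ y : F, y ≠ 0 ∧ y ^ 2 = t i)
    (ht'L : ∀ j, ∃ y : F, y ≠ 0 ∧ y ^ 2 = t' j)
    (α : Fin a → F) (β : Fin b → F)
    (hg : ∀ x : Fin k,
      (∑ i, α i * sVec F k m (t i) x) + ∑ j, β j * uVec F k m ℓ η (t' j) x = 0) :
    α = 0 ∧ β = 0 := by
  have ht0 : ∀ i, t i ≠ 0 := by
    intro i; obtain ⟨y, hy, hy2⟩ := htL i; rw [← hy2]; exact pow_ne_zero _ hy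
  have ht'0 : ∀ j, t' j ≠ 0 := by
    intro j; obtain ⟨y, hy, hy2⟩ := ht'L j; rw [← hy2]; exact pow_ne_zero _ hy
  have hη0 : η ≠ 0 := by
    intro h
    exact hη ⟨0, by simp [h]⟩
  -- the four families of equations
  have hSα : ∀ p : ℕ, 1 ≤ p → p ≤ m - 2 → ∑ i, α i * t i ^ p = 0 := by
    intro p h1 h2
    have hpk : p - 1 < k := by omega
    have H := hg ⟨p - 1, hpk⟩
    simp only [sVec_apply, uVec_apply F k m ℓ hm hl hk, Fin.val_mk,
      show p - 1 + 1 = p from by omega,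
      eq_true (show p ≤ m - 2 from h2),
      eq_false (show ¬ p = m - 1 from by omega),
      eq_false (show ¬ p = m from by omega),
      eq_false (show ¬ m ≤ p from by omega),
      if_true, if_false, add_zero, zero_add, mul_zero, Finset.sum_const_zero] at H
    exact H
  have hSβ : ∀ p : ℕ, 1 ≤ p → p ≤ ℓ - 2 → ∑ j, β j * t' j ^ p = 0 := by
    intro p h1 h2
    have hpk : k - p < k := by omega
    have H := hg ⟨k - p, hpk⟩
    simp only [sVec_apply, uVec_apply F k m ℓ hm hl hk, Fin.val_mk,
      show k - (k - p) = p from by omega,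
      eq_false (show ¬ k - p + 1 ≤ m - 2 from by omega),
      eq_false (show ¬ k - p + 1 = m - 1 from by omega),
      eq_false (show ¬ k - p + 1 = m from by omega),
      eq_true (show m ≤ k - p + 1 from by omega),
      if_true, if_false, add_zero, zero_add, mul_zero, Finset.sum_const_zero] at H
    exact H
  have hAB : (∑ i, α i) + (∑ j, β j) * η = 0 := by
    have hpk : m - 2 < k := by omega
    have H := hg ⟨m - 2, hpk⟩
    simp only [sVec_apply, uVec_apply F k m ℓ hm hl hk, Fin.val_mk,
      show m - 2 + 1 = m - 1 from by omega,
      eq_false (show ¬ m - 1 ≤ m - 2 from by omega),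
      eq_true (show m - 1 = m - 1 from rfl),
      eq_false (show ¬ m - 1 = m from by omega),
      eq_false (show ¬ m ≤ m - 1 from by omega),
      if_true, if_false, add_zero, zero_add, mul_zero, mul_one] at H
    rw [Finset.sum_mul]
    exact H
  have hA' : (∑ i, α i * t i ^ (m - 1)) + (∑ j, β j * t' j ^ (ℓ - 1)) = 0 := by
    have hpk : m - 1 < k := by omega
    have H := hg ⟨m - 1, hpk⟩
    simp only [sVec_apply, uVec_apply F k m ℓ hm hl hk, Fin.val_mk,
      show m - 1 + 1 = m from by omega,
      show k - (m - 1) = ℓ - 1 from by omega,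
      eq_false (show ¬ m ≤ m - 2 from by omega),
      eq_false (show ¬ m = m - 1 from by omega),
      eq_true (show m = m from rfl),
      eq_true (show m ≤ m from le_refl m),
      if_true, if_false, add_zero, zero_add, mul_zero, mul_one] at H
    exact H
  have hcase : a = m - 2 ∨ a = m - 1 ∨ a = m := by omega
  rcases hcase with hA | hA | hA
  · -- a = m - 2, b = ℓ
    have hα : α = 0 := powsum_shift_zero htinj ht0 fun p h1 h2 => hSα p h1 (by omega)
    have hA0 : (∑ i, α i) = 0 := by rw [hα]; simp
    have hAm : (∑ i, α i * t i ^ (m - 1)) = 0 := by rw [hα]; simp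
    rw [hA0, zero_add] at hAB
    have hB0 : (∑ j, β j) = 0 := by
      rcases mul_eq_zero.1 hAB with h | h
      · exact h
      · exact absurd h hη0
    rw [hAm, zero_add] at hA'
    have hβ : β = 0 := by
      apply powsum_all_zero ht'inj
      intro p hp
      rcases Nat.eq_zero_or_pos p with rfl | hp1
      · simpa using hB0
      · rcases eq_or_ne p (ℓ - 1) with rfl | hpl
        · exact hA'
        · exact hSβ p hp1 (by omega)
    exact ⟨hα, hβ⟩
  · -- a = m - 1, b = ℓ - 1
    have hbl : b = ℓ - 1 := by omega
    have htopα := powsum_top (show 1 ≤ a from by omega) t α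
      (fun p h1 h2 => hSα p h1 (by omega))
    have htopβ := powsum_top (show 1 ≤ b from by omega) t' β
      (fun p h1 h2 => hSβ p h1 (by omega))
    have htopα' : ∑ i, α i * t i ^ (m - 1) + ((-1 : F) ^ (m - 1) * ∏ i, t i) * ∑ i, α i = 0 := by
      rw [← hA]; exact htopα
    have htopβ' : ∑ j, β j * t' j ^ (ℓ - 1) + ((-1 : F) ^ (ℓ - 1) * ∏ j, t' j) * ∑ j, β j = 0 := by
      rw [← hbl]; exact htopβ
    have hB0 : (∑ j, β j) = 0 := by
      by_contra hBne
      have heq : ((-1 : F) ^ (ℓ - 1) * ∏ j, t' j) * (∑ j, β j)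
          = ((-1 : F) ^ (m - 1) * (∏ i, t i) * η) * (∑ j, β j) := by
        linear_combination htopβ' - hA' + htopα' - ((-1 : F) ^ (m - 1) * (∏ i, t i)) * hAB
      have hcancel := mul_right_cancel₀ hBne heq
      apply hη
      choose yα hy0 hy2 using htL
      choose yβ hy0' hy2' using ht'L
      have hTα : (∏ i, yα i) ^ 2 = ∏ i, t i := by
        rw [← Finset.prod_pow]
        exact Finset.prod_congr rfl fun i _ => hy2 i
      have hTβ : (∏ j, yβ j) ^ 2 = ∏ j, t' j := by
        rw [← Finset.prod_pow]
        exact Finset.prod_congr rfl fun j _ => hy2' j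
      have hsαne : (∏ i, yα i) ≠ 0 := Finset.prod_ne_zero_iff.2 fun i _ => hy0 i
      have h1 : ((-1 : F) ^ (ℓ - 1)) * ((-1 : F) ^ (ℓ - 1)) = 1 := by
        rw [← pow_add]
        exact Even.neg_one_pow ⟨ℓ - 1, by ring⟩
      have hsign : ((-1 : F) ^ (ℓ - 1)) * ((-1 : F) ^ (m - 1)) = (-1 : F) ^ (ℓ + m) := by
        have he : ℓ - 1 + (m - 1) + 2 = ℓ + m := by omega
        rw [← pow_add, ← he, pow_add _ (ℓ - 1 + (m - 1)) 2]
        norm_num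
      have hmain : (∏ j, t' j) = (-1 : F) ^ (ℓ + m) * η * ∏ i, t i := by
        linear_combination ((-1 : F) ^ (ℓ - 1)) * hcancel - (∏ j, t' j) * h1
          + ((∏ i, t i) * η) * hsign
      refine ⟨(∏ j, yβ j) * (∏ i, yα i)⁻¹, ?_⟩
      rw [mul_pow, hTβ, hmain, inv_pow, hTα, mul_assoc,
        mul_inv_cancel₀ (by rw [← hTα]; exact pow_ne_zero 2 hsαne), mul_one]
    rw [hB0, zero_mul, add_zero] at hAB
    have hα : α = 0 := by
      apply powsum_all_zero htinj
      intro p hp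
      rcases Nat.eq_zero_or_pos p with rfl | hp1
      · simpa using hAB
      · exact hSα p hp1 (by omega)
    have hβ : β = 0 := by
      apply powsum_all_zero ht'inj
      intro p hp
      rcases Nat.eq_zero_or_pos p with rfl | hp1
      · simpa using hB0
      · exact hSβ p hp1 (by omega)
    exact ⟨hα, hβ⟩
  · -- a = m, b = ℓ - 2
    have hβ : β = 0 := powsum_shift_zero ht'inj ht'0 fun p h1 h2 => hSβ p h1 (by omega)
    have hB0 : (∑ j, β j) = 0 := by rw [hβ]; simp
    have hBm : (∑ j, β j * t' j ^ (ℓ - 1)) = 0 := by rw [hβ]; simp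
    rw [hB0, zero_mul, add_zero] at hAB
    rw [hBm, add_zero] at hA'
    have hα : α = 0 := by
      apply powsum_all_zero htinj
      intro p hp
      rcases Nat.eq_zero_or_pos p with rfl | hp1
      · simpa using hAB
      · rcases eq_or_ne p (m - 1) with rfl | hpm
        · exact hA'
        · exact hSα p hp1 (by omega)
    exact ⟨hα, hβ⟩

theorem stmt5 (q : ℕ) (hq : IsPrimePow q) (hodd : Odd q)
    (F : Type*) [Field F] [Fintype F] (hcard : Fintype.card F = q)
    (m ℓ : ℕ) (hm : 2 ≤ m) (hl : 2 ≤ ℓ) (k : ℕ) (hk : k = m + ℓ - 2)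
    (L : Set F) (hL : L = {x : F | ∃ y : F, y ≠ 0 ∧ y ^ 2 = x})
    (η : F) (hη : ¬ ∃ x : F, x ^ 2 = (-1 : F) ^ (ℓ + m) * η)
    (a b : ℕ) (hab : a + b = k) (ha : a ≤ m) (hb : b ≤ ℓ)
    (t : Fin a → F) (t' : Fin b → F)
    (htinj : Function.Injective t) (ht'inj : Function.Injective t')
    (htL : ∀ i, t i ∈ L) (ht'L : ∀ j, t' j ∈ L) :
    LinearIndependent F
        (Sum.elim (fun i => sVec F k m (t i)) (fun j => uVec F k m ℓ η (t' j))) ∧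
      Submodule.span F
        (Set.range
          (Sum.elim (fun i => sVec F k m (t i)) (fun j => uVec F k m ℓ η (t' j)))) = ⊤ := by
  subst hL
  have htL' : ∀ i, ∃ y : F, y ≠ 0 ∧ y ^ 2 = t i := fun i => htL i
  have ht'L' : ∀ j, ∃ y : F, y ≠ 0 ∧ y ^ 2 = t' j := fun j => ht'L j
  have lin : LinearIndependent F
      (Sum.elim (fun i => sVec F k m (t i)) (fun j => uVec F k m ℓ η (t' j))) := by
    rw [Fintype.linearIndependent_iff]
    intro g hgsum
    have hg : ∀ x : Fin k,
        (∑ i, (g (Sum.inl i)) * sVec F k m (t i) x)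
          + ∑ j, (g (Sum.inr j)) * uVec F k m ℓ η (t' j) x = 0 := by
      intro x
      have := congrFun hgsum x
      simp only [Finset.sum_apply, Pi.smul_apply, smul_eq_mul, Pi.zero_apply,
        Fintype.sum_sum_type, Sum.elim_inl, Sum.elim_inr] at this
      exact this
    obtain ⟨hα, hβ⟩ := main_aux hm hl hk hη hab ha hb htinj ht'inj htL' ht'L'
      (fun i => g (Sum.inl i)) (fun j => g (Sum.inr j)) hg
    intro i
    rcases i with i | j
    · exact congrFun hα i
    · exact congrFun hβ j
  refine ⟨lin, lin.span_eq_top_of_card_eq_finrank' ?_⟩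
  simp [Fintype.card_sum, hab, Module.finrank_fin_fun]
end

section
/- Suppose d = m + ℓ − k ≥ 2. If q_0 is a prime power with q_0 > max(|E1|, |E2|) and s is an integer with s > d(d−1)/2, then the bi-uniform matroid on E = E1 ∪ E2 with rank k and sub-ranks m, ℓ is representable over the finite field F_{q_0^s}. -/
open Polynomial Matrix Finset


namespace BiUniform

/-- weight function -/
def wf (r m i : ℕ) : ℕ := if r ≤ i ∧ i < m then i - r else 0

lemma wf_eq_zero_of_ge {r m i : ℕ} (h : m ≤ i) : wf r m i = 0 := by
  unfold wf; rw [if_neg (by omega)]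

lemma wf_eq {r m i : ℕ} (h1 : r ≤ i) (h2 : i < m) : wf r m i = i - r := by
  unfold wf; rw [if_pos ⟨h1, h2⟩]

lemma prod_monomial {R : Type*} [CommSemiring R] {ι : Type*} (s : Finset ι) (d : ι → ℕ) (c : ι → R) :
    (∏ j ∈ s, (Polynomial.monomial (d j) (c j))) = Polynomial.monomial (∑ j ∈ s, d j) (∏ j ∈ s, c j) := by
  classical
  induction s using Finset.induction_on with
  | empty => simp
  | insert _ _ h ih =>
      rw [Finset.prod_insert h, Finset.sum_insert h, Finset.prod_insert h, ih,
        Polynomial.monomial_mul_monomial]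

lemma subset_sum_eq {r a m : ℕ} (hra : r ≤ a) (S : Finset ℕ)
    (hS : S ⊆ Finset.Ico r m) (hcard : S.card = m - a)
    (hsum : ∑ i ∈ S, (i - r) = ∑ i ∈ Finset.Ico a m, (i - r)) : S = Finset.Ico a m := by
  classical
  set T := Finset.Ico a m with hT
  by_contra hne
  have hTsub : T ⊆ Finset.Ico r m := by
    intro i hi; rw [Finset.mem_Ico] at *; omega
  have hTcard : T.card = m - a := Nat.card_Ico a m
  have h1 : (S \ T).card + (S ∩ T).card = S.card := Finset.card_sdiff_add_card_inter S T
  have h2 : (T \ S).card + (T ∩ S).card = T.card := Finset.card_sdiff_add_card_inter T S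
  have hint : S ∩ T = T ∩ S := Finset.inter_comm S T
  have hcards : (S \ T).card = (T \ S).card := by
    rw [hint] at h1; omega
  have hne2 : (S \ T).Nonempty := by
    rcases Finset.eq_empty_or_nonempty (S \ T) with h | h
    · exfalso
      have hsub : S ⊆ T := by
        intro i hi
        by_contra hit
        exact Finset.notMem_empty i (h ▸ Finset.mem_sdiff.2 ⟨hi, hit⟩)
      exact hne (Finset.eq_of_subset_of_card_le hsub (by omega))
    · exact h
  have hbound1 : ∀ i ∈ S \ T, i - r + 1 ≤ a - r := by
    intro i hi
    obtain ⟨hiS, hiT⟩ := Finset.mem_sdiff.1 hi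
    have h4 := hS hiS
    rw [Finset.mem_Ico] at h4
    rw [hT, Finset.mem_Ico] at hiT
    omega
  have hbound2 : ∀ i ∈ T \ S, a - r ≤ i - r := by
    intro i hi
    rw [Finset.mem_sdiff, hT, Finset.mem_Ico] at hi
    omega
  have hs1 : ∑ i ∈ S ∩ T, (i - r) + ∑ i ∈ S \ T, (i - r) = ∑ i ∈ S, (i - r) :=
    Finset.sum_inter_add_sum_sdiff S T _
  have hs2 : ∑ i ∈ T ∩ S, (i - r) + ∑ i ∈ T \ S, (i - r) = ∑ i ∈ T, (i - r) :=
    Finset.sum_inter_add_sum_sdiff T S _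
  have key : ∑ i ∈ S \ T, (i - r) = ∑ i ∈ T \ S, (i - r) := by
    rw [hint] at hs1; omega
  have hle1 : ∑ i ∈ S \ T, ((i - r) + 1) ≤ (S \ T).card * (a - r) := by
    have := Finset.sum_le_card_nsmul (S \ T) (fun i => i - r + 1) (a - r) hbound1
    simpa [smul_eq_mul] using this
  have hle2 : (S \ T).card * (a - r) ≤ ∑ i ∈ T \ S, (i - r) := by
    have := Finset.card_nsmul_le_sum (T \ S) (fun i => i - r) (a - r) hbound2
    rw [← hcards] at this
    simpa [smul_eq_mul] using this
  rw [← key] at hle2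
  rw [Finset.sum_add_distrib, Finset.sum_const, smul_eq_mul, mul_one] at hle1
  have := hne2.card_pos
  omega


section Core

variable {K0 : Type*} [Field K0]
variable (k r m a : ℕ) (xx yy : Fin k → K0)

/-- degree of entries -/
def dgE (i j : ℕ) : ℕ := if j < a then 0 else wf r m i

/-- K0-coefficients of entries -/
def enE (i : ℕ) (j : Fin k) : K0 :=
  if (j : ℕ) < a then (if i < m then xx j ^ i else 0)
  else (if r ≤ i then yy j ^ (i - r) else 0)

/-- polynomial matrix -/
noncomputable def Pm : Matrix (Fin k) (Fin k) K0[X] := fun i j =>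
  Polynomial.monomial (dgE r m a (i : ℕ) (j : ℕ)) (enE k r m a xx yy (i : ℕ) j)

/-- leading block matrix -/
def M0 : Matrix (Fin k) (Fin k) K0 := fun i j =>
  if (j : ℕ) < a then (if (i : ℕ) < a then xx j ^ (i : ℕ) else 0)
  else (if a ≤ (i : ℕ) then yy j ^ ((i : ℕ) - r) else 0)

lemma M0_eq_zero_of_enE_zero (ham : a ≤ m) (hra : r ≤ a) {i : Fin k} {j : Fin k}
    (h : enE k r m a xx yy (i : ℕ) j = 0) : M0 k r a xx yy i j = 0 := by
  unfold enE at h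
  unfold M0
  by_cases hj : (j : ℕ) < a
  · rw [if_pos hj] at h ⊢
    by_cases hi : (i : ℕ) < a
    · rw [if_pos hi]
      rw [if_pos (by omega : (i:ℕ) < m)] at h
      exact h
    · rw [if_neg hi]
  · rw [if_neg hj] at h ⊢
    by_cases hi : a ≤ (i : ℕ)
    · rw [if_pos hi]
      rw [if_pos (by omega : r ≤ (i:ℕ))] at h
      exact h
    · rw [if_neg hi]

lemma sum_wf_top (hra : r ≤ a) (ham : a ≤ m) (hmk : m ≤ k) :
    ∑ i ∈ Finset.Ico a k, wf r m i = ∑ i ∈ Finset.Ico a m, (i - r) := by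
  rw [← Finset.Ico_union_Ico_eq_Ico ham hmk,
    Finset.sum_union (Finset.Ico_disjoint_Ico_consecutive a m k)]
  rw [Finset.sum_eq_zero (fun i hi => wf_eq_zero_of_ge (Finset.mem_Ico.1 hi).1), add_zero]
  exact Finset.sum_congr rfl fun i hi => by
    rw [Finset.mem_Ico] at hi
    exact wf_eq (by omega) hi.2

lemma image_val_filter :
    (Finset.univ.filter (fun j : Fin k => a ≤ (j : ℕ))).image (fun j : Fin k => (j : ℕ))
      = Finset.Ico a k := by
  ext i
  simp only [Finset.mem_image, Finset.mem_filter, Finset.mem_univ, true_and, Finset.mem_Ico]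
  constructor
  · rintro ⟨j, hj, rfl⟩; exact ⟨hj, j.isLt⟩
  · rintro ⟨h1, h2⟩; exact ⟨⟨i, h2⟩, h1, rfl⟩

/-- the key per-permutation identity -/
lemma key_sigma (hra : r ≤ a) (ham : a ≤ m) (hmk : m ≤ k) (σ : Equiv.Perm (Fin k)) :
    (if (∑ j : Fin k, dgE r m a ((σ j : Fin k) : ℕ) (j : ℕ)) = ∑ i ∈ Finset.Ico a m, (i - r)
     then ∏ j : Fin k, enE k r m a xx yy ((σ j : Fin k) : ℕ) j
     else 0)
    = ∏ j : Fin k, M0 k r a xx yy (σ j) j := by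
  classical
  set N := ∑ i ∈ Finset.Ico a m, (i - r) with hNdef
  set Sc := Finset.univ.filter (fun j : Fin k => a ≤ (j : ℕ)) with hScdef
  have hsum_filter : (∑ j : Fin k, dgE r m a ((σ j : Fin k) : ℕ) (j : ℕ))
      = ∑ j ∈ Sc, wf r m ((σ j : Fin k) : ℕ) := by
    rw [hScdef, Finset.sum_filter]
    apply Finset.sum_congr rfl
    intro j _
    unfold dgE
    by_cases h : (j : ℕ) < a
    · rw [if_pos h, if_neg (by omega)]
    · rw [if_neg h, if_pos (by omega)]
  have hcardSc : Sc.card = k - a := by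
    have := Finset.card_image_of_injective Sc (Fin.val_injective)
    rw [image_val_filter] at this
    rw [← this, Nat.card_Ico]
  have hsum_Sc : ∑ j ∈ Sc, wf r m ((j : Fin k) : ℕ) = N := by
    rw [hNdef, ← sum_wf_top k r m a hra ham hmk, ← image_val_filter (k := k) (a := a)]
    rw [Finset.sum_image (fun x _ y _ h => Fin.val_injective h)]
  have hBPsum : (∀ j : Fin k, a ≤ (j : ℕ) → a ≤ ((σ j : Fin k) : ℕ)) →
      (∑ j : Fin k, dgE r m a ((σ j : Fin k) : ℕ) (j : ℕ)) = N := by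
    intro h
    rw [hsum_filter]
    have hmaps : Sc.image σ ⊆ Sc := by
      intro i hi
      obtain ⟨j, hj, rfl⟩ := Finset.mem_image.1 hi
      rw [hScdef, Finset.mem_filter] at hj ⊢
      exact ⟨Finset.mem_univ _, h j hj.2⟩
    have himg : Sc.image σ = Sc :=
      Finset.eq_of_subset_of_card_le hmaps
        (le_of_eq (Finset.card_image_of_injective Sc σ.injective).symm)
    calc ∑ j ∈ Sc, wf r m ((σ j : Fin k) : ℕ)
        = ∑ i ∈ Sc.image σ, wf r m ((i : Fin k) : ℕ) :=
          (Finset.sum_image (f := fun i : Fin k => wf r m (i : ℕ))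
            (fun x _ y _ h' => σ.injective h')).symm
      _ = ∑ j ∈ Sc, wf r m ((j : Fin k) : ℕ) := by rw [himg]
      _ = N := hsum_Sc
  by_cases hz : ∃ j : Fin k, enE k r m a xx yy ((σ j : Fin k) : ℕ) j = 0
  · obtain ⟨j0, hj0⟩ := hz
    have hM0 : M0 k r a xx yy (σ j0) j0 = 0 :=
      M0_eq_zero_of_enE_zero k r m a xx yy ham hra hj0
    rw [Finset.prod_eq_zero (f := fun j => M0 k r a xx yy (σ j) j) (Finset.mem_univ j0) hM0]
    split
    · exact Finset.prod_eq_zero (f := fun j => enE k r m a xx yy ((σ j : Fin k) : ℕ) j)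
        (Finset.mem_univ j0) hj0
    · rfl
  · push_neg at hz
    have hxv : ∀ j : Fin k, (j : ℕ) < a → ((σ j : Fin k) : ℕ) < m := by
      intro j hj
      have h := hz j
      unfold enE at h
      rw [if_pos hj] at h
      by_contra hc
      rw [if_neg hc] at h
      exact h rfl
    have hyv : ∀ j : Fin k, a ≤ (j : ℕ) → r ≤ ((σ j : Fin k) : ℕ) := by
      intro j hj
      have h := hz j
      unfold enE at h
      rw [if_neg (by omega)] at h
      by_contra hc
      rw [if_neg hc] at h
      exact h rfl
    by_cases hN : (∑ j : Fin k, dgE r m a ((σ j : Fin k) : ℕ) (j : ℕ)) = N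
    · rw [if_pos hN]
      -- derive the block structure
      set U : Finset ℕ := Sc.image (fun j : Fin k => ((σ j : Fin k) : ℕ)) with hUdef
      have hUcard : U.card = k - a := by
        rw [hUdef, Finset.card_image_of_injective _
          (fun x y h => σ.injective (Fin.val_injective h)), hcardSc]
      have hUsub : ∀ i ∈ U, r ≤ i ∧ i < k := by
        intro i hi
        obtain ⟨j, hj, rfl⟩ := Finset.mem_image.1 hi
        rw [hScdef, Finset.mem_filter] at hj
        exact ⟨hyv j hj.2, (σ j).isLt⟩
      have hUtop : Finset.Ico m k ⊆ U := by
        intro i hi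
        rw [Finset.mem_Ico] at hi
        set j := σ.symm ⟨i, hi.2⟩ with hjdef
        have hσj : σ j = ⟨i, hi.2⟩ := Equiv.apply_symm_apply σ _
        have hja : a ≤ (j : ℕ) := by
          by_contra hc
          have := hxv j (by omega)
          rw [hσj] at this
          simp only [] at this
          omega
        rw [hUdef]
        exact Finset.mem_image.2 ⟨j, Finset.mem_filter.2 ⟨Finset.mem_univ _, hja⟩, by rw [hσj]⟩
      set S := U \ Finset.Ico m k with hSdef
      have hSsub : S ⊆ Finset.Ico r m := by
        intro i hi
        rw [hSdef, Finset.mem_sdiff, Finset.mem_Ico] at hi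
        have := hUsub i hi.1
        rw [Finset.mem_Ico]
        omega
      have hScard : S.card = m - a := by
        rw [hSdef, Finset.card_sdiff_of_subset hUtop, hUcard, Nat.card_Ico]
        omega
      have hSsum : ∑ i ∈ S, (i - r) = N := by
        have hsplit : ∑ i ∈ S, wf r m i + ∑ i ∈ Finset.Ico m k, wf r m i
            = ∑ i ∈ U, wf r m i := Finset.sum_sdiff hUtop
        have h0 : ∑ i ∈ Finset.Ico m k, wf r m i = 0 :=
          Finset.sum_eq_zero fun i hi => wf_eq_zero_of_ge (Finset.mem_Ico.1 hi).1
        have hU : ∑ i ∈ U, wf r m i = N := by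
          rw [hUdef, Finset.sum_image (fun x _ y _ h' => σ.injective (Fin.val_injective h'))]
          rw [← hsum_filter]
          exact hN
        have hSwf : ∑ i ∈ S, wf r m i = ∑ i ∈ S, (i - r) := by
          apply Finset.sum_congr rfl
          intro i hi
          have := Finset.mem_Ico.1 (hSsub hi)
          exact wf_eq this.1 this.2
        rw [h0, add_zero, hSwf] at hsplit
        rw [hsplit, hU]
      have hSeq : S = Finset.Ico a m := subset_sum_eq hra S hSsub hScard hSsum
      have hUeq : U = Finset.Ico a k := by
        have : S ∪ Finset.Ico m k = U := Finset.sdiff_union_of_subset hUtop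
        rw [← this, hSeq, Finset.Ico_union_Ico_eq_Ico ham hmk]
      have hBP : ∀ j : Fin k, a ≤ (j : ℕ) → a ≤ ((σ j : Fin k) : ℕ) := by
        intro j hj
        have : ((σ j : Fin k) : ℕ) ∈ U := by
          rw [hUdef]
          exact Finset.mem_image.2 ⟨j, Finset.mem_filter.2 ⟨Finset.mem_univ _, hj⟩, rfl⟩
        rw [hUeq, Finset.mem_Ico] at this
        exact this.1
      have hBP' : ∀ j : Fin k, (j : ℕ) < a → ((σ j : Fin k) : ℕ) < a := by
        intro j hj
        by_contra hc
        have hmem : ((σ j : Fin k) : ℕ) ∈ U := by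
          rw [hUeq, Finset.mem_Ico]
          exact ⟨by omega, (σ j).isLt⟩
        rw [hUdef] at hmem
        obtain ⟨j', hj', hval⟩ := Finset.mem_image.1 hmem
        have : j' = j := σ.injective (Fin.val_injective hval)
        rw [hScdef, Finset.mem_filter] at hj'
        omega
      apply Finset.prod_congr rfl
      intro j _
      unfold enE M0
      by_cases hj : (j : ℕ) < a
      · rw [if_pos hj, if_pos hj, if_pos (by have := hBP' j hj; omega : ((σ j : Fin k):ℕ) < m),
          if_pos (hBP' j hj)]
      · rw [if_neg hj, if_neg hj, if_pos (hyv j (by omega)), if_pos (hBP j (by omega))]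
    · rw [if_neg hN]
      have hnBP : ¬ (∀ j : Fin k, a ≤ (j : ℕ) → a ≤ ((σ j : Fin k) : ℕ)) :=
        fun h => hN (hBPsum h)
      push_neg at hnBP
      obtain ⟨j0, hj0a, hj0lt⟩ := hnBP
      have hM0 : M0 k r a xx yy (σ j0) j0 = 0 := by
        unfold M0
        rw [if_neg (by omega), if_neg (by omega)]
      exact (Finset.prod_eq_zero (f := fun j => M0 k r a xx yy (σ j) j)
        (Finset.mem_univ j0) hM0).symm


lemma coeff_det (hra : r ≤ a) (ham : a ≤ m) (hmk : m ≤ k) :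
    (Matrix.det (Pm k r m a xx yy)).coeff (∑ i ∈ Finset.Ico a m, (i - r))
      = Matrix.det (M0 k r a xx yy) := by
  classical
  rw [Matrix.det_apply', Matrix.det_apply', Polynomial.finset_sum_coeff]
  apply Finset.sum_congr rfl
  intro σ _
  have h1 : (∏ j : Fin k, Pm k r m a xx yy (σ j) j).coeff (∑ i ∈ Finset.Ico a m, (i - r))
      = ∏ j : Fin k, M0 k r a xx yy (σ j) j := by
    unfold Pm
    rw [prod_monomial, Polynomial.coeff_monomial]
    exact key_sigma k r m a xx yy hra ham hmk σ
  rw [Polynomial.coeff_intCast_mul, h1]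

lemma natDegree_det_Pm_le :
    (Matrix.det (Pm k r m a xx yy)).natDegree ≤ ∑ i ∈ Finset.range k, wf r m i := by
  classical
  rw [Matrix.det_apply']
  apply Polynomial.natDegree_sum_le_of_forall_le
  intro σ _
  rw [← Polynomial.C_eq_intCast]
  refine le_trans (Polynomial.natDegree_C_mul_le _ _) ?_
  unfold Pm
  rw [prod_monomial]
  refine le_trans (Polynomial.natDegree_monomial_le _) ?_
  calc ∑ j : Fin k, dgE r m a ((σ j : Fin k) : ℕ) (j : ℕ)
      ≤ ∑ j : Fin k, wf r m ((σ j : Fin k) : ℕ) := by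
        apply Finset.sum_le_sum
        intro j _
        unfold dgE
        split
        · exact Nat.zero_le _
        · exact le_refl _
    _ = ∑ i : Fin k, wf r m (i : ℕ) := Equiv.sum_comp σ (fun i : Fin k => wf r m (i : ℕ))
    _ = ∑ i ∈ Finset.range k, wf r m i := Fin.sum_univ_eq_sum_range _ k

lemma det_M0_ne_zero (hra : r ≤ a) (ham : a ≤ m) (hmk : m ≤ k)
    (hx : ∀ j j' : Fin k, (j : ℕ) < a → (j' : ℕ) < a → xx j = xx j' → j = j')
    (hy : ∀ j j' : Fin k, a ≤ (j : ℕ) → a ≤ (j' : ℕ) → yy j = yy j' → j = j')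
    (hy0 : ∀ j : Fin k, a ≤ (j : ℕ) → yy j ≠ 0) :
    Matrix.det (M0 k r a xx yy) ≠ 0 := by
  classical
  have hak : a ≤ k := ham.trans hmk
  have hab : a + (k - a) = k := by omega
  set e : Fin a ⊕ Fin (k - a) ≃ Fin k := (finSumFinEquiv).trans (finCongr hab) with he
  set xa : Fin a → K0 := fun j => xx (Fin.castLE hak j) with hxa
  set ya : Fin (k - a) → K0 := fun j => yy ⟨a + (j : ℕ), by omega⟩ with hya
  have hvi : ∀ i : Fin a, ((e (Sum.inl i) : Fin k) : ℕ) = (i : ℕ) := by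
    intro i; simp [he]
  have hvr : ∀ i : Fin (k - a), ((e (Sum.inr i) : Fin k) : ℕ) = a + (i : ℕ) := by
    intro i; simp [he]
  have hsub : (M0 k r a xx yy).submatrix e e =
      Matrix.fromBlocks (Matrix.of fun i j : Fin a => xa j ^ (i : ℕ)) 0 0
        (Matrix.of fun i j : Fin (k - a) => ya j ^ ((a + (i : ℕ)) - r)) := by
    ext i j
    cases i with
    | inl i =>
      cases j with
      | inl j =>
        show M0 k r a xx yy (e (Sum.inl i)) (e (Sum.inl j)) = xa j ^ (i : ℕ)
        unfold M0
        rw [hvi j, hvi i]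
        rw [if_pos j.isLt, if_pos i.isLt]
        have hje : e (Sum.inl j) = Fin.castLE hak j := Fin.ext (by simp [hvi j])
        rw [hje, hxa]
      | inr j =>
        show M0 k r a xx yy (e (Sum.inl i)) (e (Sum.inr j)) = 0
        unfold M0
        rw [hvr j, hvi i]
        rw [if_neg (by omega), if_neg (by omega)]
    | inr i =>
      cases j with
      | inl j =>
        show M0 k r a xx yy (e (Sum.inr i)) (e (Sum.inl j)) = 0
        unfold M0
        rw [hvi j, hvr i]
        rw [if_pos j.isLt, if_neg (by omega)]
      | inr j =>
        show M0 k r a xx yy (e (Sum.inr i)) (e (Sum.inr j)) = ya j ^ ((a + (i : ℕ)) - r)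
        unfold M0
        rw [hvr j, hvr i]
        rw [if_neg (by omega), if_pos (by omega)]
        have hje : e (Sum.inr j) = (⟨a + (j : ℕ), by omega⟩ : Fin k) :=
          Fin.ext (by simp [hvr j])
        rw [hje, hya]
  rw [← Matrix.det_submatrix_equiv_self e, hsub, Matrix.det_fromBlocks_zero₂₁]
  apply mul_ne_zero
  · have hA : (Matrix.of fun i j : Fin a => xa j ^ (i : ℕ)) = (Matrix.vandermonde xa)ᵀ := by
      ext i j; rfl
    rw [hA, Matrix.det_transpose, Matrix.det_vandermonde]
    apply Finset.prod_ne_zero_iff.2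
    intro i _
    apply Finset.prod_ne_zero_iff.2
    intro j hj
    rw [Finset.mem_Ioi] at hj
    apply sub_ne_zero_of_ne
    intro hc
    have heq : Fin.castLE hak j = Fin.castLE hak i :=
      hx _ _ (by simp) (by simp) hc
    have hval : (j : ℕ) = (i : ℕ) := by
      have := congrArg Fin.val heq
      simpa using this
    have hlt : (i : ℕ) < (j : ℕ) := hj
    omega
  · have hD : (Matrix.of fun i j : Fin (k - a) => ya j ^ ((a + (i : ℕ)) - r)) =
        Matrix.of (fun i j : Fin (k - a) => (ya j ^ (a - r)) * ((Matrix.vandermonde ya)ᵀ i j)) := by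
      ext i j
      show ya j ^ ((a + (i : ℕ)) - r) = ya j ^ (a - r) * ya j ^ (i : ℕ)
      rw [← pow_add]
      congr 1
      omega
    rw [hD, Matrix.det_mul_row, Matrix.det_transpose, Matrix.det_vandermonde]
    apply mul_ne_zero
    · apply Finset.prod_ne_zero_iff.2
      intro j _
      exact pow_ne_zero _ (hy0 _ (by simp))
    · apply Finset.prod_ne_zero_iff.2
      intro i _
      apply Finset.prod_ne_zero_iff.2
      intro j hj
      rw [Finset.mem_Ioi] at hj
      apply sub_ne_zero_of_ne
      intro hc
      have heq : (⟨a + (j : ℕ), by omega⟩ : Fin k) = ⟨a + (i : ℕ), by omega⟩ :=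
        hy _ _ (by simp) (by simp) hc
      have hval : a + (j : ℕ) = a + (i : ℕ) := by
        have := congrArg Fin.val heq
        simpa using this
      have hlt : (i : ℕ) < (j : ℕ) := hj
      omega

lemma det_Pm_ne_zero (hra : r ≤ a) (ham : a ≤ m) (hmk : m ≤ k)
    (hx : ∀ j j' : Fin k, (j : ℕ) < a → (j' : ℕ) < a → xx j = xx j' → j = j')
    (hy : ∀ j j' : Fin k, a ≤ (j : ℕ) → a ≤ (j' : ℕ) → yy j = yy j' → j = j')
    (hy0 : ∀ j : Fin k, a ≤ (j : ℕ) → yy j ≠ 0) :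
    Matrix.det (Pm k r m a xx yy) ≠ 0 := by
  intro h
  apply det_M0_ne_zero k r m a xx yy hra ham hmk hx hy hy0
  rw [← coeff_det k r m a xx yy hra ham hmk, h, Polynomial.coeff_zero]

end Core

/-- Existence of a subfield of cardinality `q₀` together with a "primitive" element whose
minimal polynomial has degree `s`. -/
lemma exists_subfield_alpha (F : Type*) [Field F] [Fintype F] (q₀ s : ℕ)
    (hq₀ : IsPrimePow q₀) (hs1 : 1 ≤ s) (hcard : Fintype.card F = q₀ ^ s) :
    ∃ (K : Subfield F) (α : F) (inst : Fintype ↥K),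
      @Fintype.card ↥K inst = q₀ ∧
      (∀ P : Polynomial ↥K, P ≠ 0 → P.natDegree < s → Polynomial.aeval α P ≠ 0) := by
  classical
  obtain ⟨p, e, hpp, he, hpe⟩ := hq₀
  have hp : p.Prime := Nat.prime_iff.2 hpp
  have hq2 : 2 ≤ q₀ := by
    rw [← hpe]
    exact Nat.one_lt_pow (by omega) hp.two_le
  have hq2 : 2 ≤ q₀ := by
    rw [← hpe]
    exact Nat.one_lt_pow (by omega) hp.two_le
  haveI : Fact p.Prime := ⟨hp⟩
  -- characteristic
  obtain ⟨p', hcp'⟩ := CharP.exists F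
  haveI : CharP F p' := hcp'
  have hp' : p'.Prime := CharP.char_is_prime F p'
  haveI : Fact p'.Prime := ⟨hp'⟩
  obtain ⟨n, hn1, hn2⟩ := FiniteField.card F p'
  have hpeq : p' = p := by
    have h1 : p' ∣ Fintype.card F := by
      rw [hn2]
      exact dvd_pow_self _ (by positivity)
    rw [hcard, ← hpe, ← pow_mul] at h1
    have := hp'.prime.dvd_of_dvd_pow h1
    exact (Nat.prime_dvd_prime_iff_eq hp' hp).1 this
  subst hpeq
  -- the subfield
  set K : Subfield F :=
    { carrier := {x : F | x ^ q₀ = x}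
      mul_mem' := by
        intro x y hx hy
        simp only [Set.mem_setOf_eq] at *
        rw [mul_pow, hx, hy]
      one_mem' := by simp [Set.mem_setOf_eq]
      add_mem' := by
        intro x y hx hy
        simp only [Set.mem_setOf_eq] at *
        rw [← hpe, add_pow_char_pow, hpe, hx, hy]
      zero_mem' := by
        simp only [Set.mem_setOf_eq]
        exact zero_pow (by omega)
      neg_mem' := by
        intro x hx
        simp only [Set.mem_setOf_eq] at *
        rw [neg_pow, ← hpe, neg_one_pow_char_pow, hpe, hx]
        ring
      inv_mem' := by
        intro x hx
        simp only [Set.mem_setOf_eq] at *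
        rw [inv_pow, hx] } with hK
  letI instK : Fintype ↥K := Fintype.ofFinite ↥K
  set Kf : Finset F := Finset.univ.filter (fun x : F => x ^ q₀ = x) with hKf
  have hcardK : Fintype.card ↥K = Kf.card := by
    apply Fintype.card_of_subtype
    intro x
    rw [hKf, Finset.mem_filter]
    constructor
    · intro hx
      exact hx.2
    · intro hx
      exact ⟨Finset.mem_univ _, hx⟩
  have hupper : Kf.card ≤ q₀ := by
    have hne : (X ^ q₀ - X : F[X]) ≠ 0 := FiniteField.X_pow_card_sub_X_ne_zero F (by omega)
    have hsub : Kf ⊆ (X ^ q₀ - X : F[X]).roots.toFinset := by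
      intro x hx
      rw [hKf, Finset.mem_filter] at hx
      rw [Multiset.mem_toFinset, Polynomial.mem_roots']
      refine ⟨hne, ?_⟩
      simp only [Polynomial.IsRoot, Polynomial.eval_sub, Polynomial.eval_pow, Polynomial.eval_X]
      rw [hx.2, sub_self]
    calc Kf.card ≤ _ := Finset.card_le_card hsub
      _ ≤ Multiset.card (X ^ q₀ - X : F[X]).roots := Multiset.toFinset_card_le _
      _ ≤ (X ^ q₀ - X : F[X]).natDegree := Polynomial.card_roots' _
      _ = q₀ := FiniteField.X_pow_card_sub_X_natDegree_eq F (by omega)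
  obtain ⟨g, hg⟩ := IsCyclic.exists_generator (α := Fˣ)
  have hcardU : Fintype.card Fˣ = q₀ ^ s - 1 := by rw [Fintype.card_units, hcard]
  have horder : orderOf g = q₀ ^ s - 1 := by
    rw [orderOf_eq_card_of_forall_mem_zpowers hg, Nat.card_eq_fintype_card, hcardU]
  have hq₀s : 2 ≤ q₀ ^ s := le_trans hq2 (Nat.le_self_pow (by omega) _)
  have hdvd : (q₀ - 1) ∣ (q₀ ^ s - 1) := by
    have := Nat.sub_dvd_pow_sub_pow q₀ 1 s
    simpa using this
  set t := (q₀ ^ s - 1) / (q₀ - 1) with ht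
  set h : Fˣ := g ^ t with hh
  have horderh : orderOf h = q₀ - 1 := by
    have htd : t ∣ q₀ ^ s - 1 := Nat.div_dvd_of_dvd hdvd
    have hgcd : Nat.gcd (q₀ ^ s - 1) t = t := Nat.gcd_eq_right htd
    rw [hh, orderOf_pow, horder, hgcd]
    exact Nat.div_div_self hdvd (by omega)
  set Im : Finset F := (Finset.range (q₀ - 1)).image (fun i => ((h ^ i : Fˣ) : F)) with hIm
  have hImKf : Im ⊆ Kf := by
    intro x hx
    rw [hIm, Finset.mem_image] at hx
    obtain ⟨i, _, rfl⟩ := hx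
    rw [hKf, Finset.mem_filter]
    refine ⟨Finset.mem_univ _, ?_⟩
    have h2 : (h ^ i) ^ (q₀ - 1) = 1 := by
      rw [← pow_mul, mul_comm, pow_mul, ← horderh, pow_orderOf_eq_one, one_pow]
    have h1 : ((h ^ i : Fˣ) : F) ^ (q₀ - 1) = 1 := by
      rw [← Units.val_pow_eq_pow_val, h2, Units.val_one]
    calc ((h ^ i : Fˣ) : F) ^ q₀ = ((h ^ i : Fˣ) : F) ^ (q₀ - 1) * ((h ^ i : Fˣ) : F) := by
          rw [← pow_succ]
          congr 1
          omega
      _ = ((h ^ i : Fˣ) : F) := by rw [h1, one_mul]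
  have hImcard : Im.card = q₀ - 1 := by
    rw [hIm, Finset.card_image_of_injOn, Finset.card_range]
    intro i hi j hj hij
    rw [Finset.mem_coe, Finset.mem_range] at hi hj
    have hu : h ^ i = h ^ j := Units.ext hij
    exact pow_injOn_Iio_orderOf (by rw [Set.mem_Iio, horderh]; exact hi)
      (by rw [Set.mem_Iio, horderh]; exact hj) hu
  have h0Im : (0 : F) ∉ Im := by
    rw [hIm]
    intro hc
    rw [Finset.mem_image] at hc
    obtain ⟨i, _, hi⟩ := hc
    exact Units.ne_zero _ hi
  have h0K : (0 : F) ∈ Kf := by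
    rw [hKf, Finset.mem_filter]
    exact ⟨Finset.mem_univ _, by rw [zero_pow (by omega : q₀ ≠ 0)]⟩
  have hlower : q₀ ≤ Kf.card := by
    have hins : insert (0 : F) Im ⊆ Kf := Finset.insert_subset h0K hImKf
    have hc := Finset.card_le_card hins
    rw [Finset.card_insert_of_notMem h0Im, hImcard] at hc
    omega
  have hKq : Fintype.card ↥K = q₀ := by rw [hcardK]; omega
  refine ⟨K, (g : F), instK, hKq, ?_⟩
  have hint : IsIntegral ↥K (g : F) := IsIntegral.of_finite _ _
  have hadj : IntermediateField.adjoin ↥K {(g : F)} = ⊤ := by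
    rw [eq_top_iff]
    intro x _
    by_cases hx : x = (0 : F)
    · rw [hx]; exact zero_mem _
    · obtain ⟨n, hn⟩ := Subgroup.mem_zpowers_iff.1 (hg (Units.mk0 x hx))
      have hxe : x = (g : F) ^ n := by
        rw [← Units.val_zpow_eq_zpow_val, hn, Units.val_mk0]
      rw [hxe]
      exact zpow_mem (IntermediateField.mem_adjoin_simple_self _ _) n
  have hfr : Module.finrank ↥K F = s := by
    have h1 : Fintype.card F = Fintype.card ↥K ^ Module.finrank ↥K F := Module.card_eq_pow_finrank
    rw [hKq, hcard] at h1
    exact (Nat.pow_right_injective hq2 h1.symm)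
  have hdeg : (minpoly ↥K (g : F)).natDegree = s := by
    have h1 := IntermediateField.adjoin.finrank hint
    rw [hadj, IntermediateField.finrank_top', hfr] at h1
    omega
  intro P hP hPdeg hPa
  have hdvdP := minpoly.dvd ↥K (g : F) hPa
  have := Polynomial.natDegree_le_of_dvd hdvdP hP
  omega


section Glue

variable {K0 F : Type*} [Field K0] [Field F] [Algebra K0 F]

lemma cols_indep (α : F) (s : ℕ)
    (hα : ∀ P : Polynomial K0, P ≠ 0 → P.natDegree < s → Polynomial.aeval α P ≠ 0)
    (k r m a : ℕ) (hra : r ≤ a) (ham : a ≤ m) (hmk : m ≤ k)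
    (hws : ∑ i ∈ Finset.range k, wf r m i < s)
    (xx yy : Fin k → K0)
    (hx : ∀ j j' : Fin k, (j : ℕ) < a → (j' : ℕ) < a → xx j = xx j' → j = j')
    (hy : ∀ j j' : Fin k, a ≤ (j : ℕ) → a ≤ (j' : ℕ) → yy j = yy j' → j = j')
    (hy0 : ∀ j : Fin k, a ≤ (j : ℕ) → yy j ≠ 0) :
    LinearIndependent F (fun j : Fin k => (fun i : Fin k =>
      algebraMap K0 F (enE k r m a xx yy (i : ℕ) j) * α ^ (dgE r m a (i : ℕ) (j : ℕ)))) := by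
  classical
  set MF : Matrix (Fin k) (Fin k) F :=
    ((Polynomial.aeval α : Polynomial K0 →ₐ[K0] F).toRingHom).mapMatrix (Pm k r m a xx yy)
    with hMF
  have hdet : MF.det ≠ 0 := by
    rw [hMF, ← RingHom.map_det]
    apply hα
    · exact det_Pm_ne_zero k r m a xx yy hra ham hmk hx hy hy0
    · exact lt_of_le_of_lt (natDegree_det_Pm_le k r m a xx yy) hws
  have hunit : IsUnit MF := (Matrix.isUnit_iff_isUnit_det MF).2 (isUnit_iff_ne_zero.2 hdet)
  have hli := Matrix.linearIndependent_cols_iff_isUnit.2 hunit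
  have hcol : (fun j : Fin k => MFᵀ j) = (fun j : Fin k => (fun i : Fin k =>
      algebraMap K0 F (enE k r m a xx yy (i : ℕ) j) * α ^ (dgE r m a (i : ℕ) (j : ℕ)))) := by
    funext j i
    show MF i j = _
    rw [hMF]
    show Polynomial.aeval α (Pm k r m a xx yy i j) = _
    unfold Pm
    rw [Polynomial.aeval_monomial]
  rw [show MF.col = (fun j : Fin k => MFᵀ j) from rfl, hcol] at hli
  exact hli

end Glue

section Support

variable {α : Type*} [DecidableEq α] {F : Type*} [Field F]

/-- If an independent family indexed by a finset is supported on `c` coordinates,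
then the finset has at most `c` elements. -/
lemma card_le_of_indep_support (k c : ℕ) (B : Finset α) (f : α → Fin k → F)
    (φ : Fin c → Fin k) (hφ : Function.Injective φ)
    (hsupp : ∀ e ∈ B, ∀ i : Fin k, (∀ j : Fin c, φ j ≠ i) → f e i = 0)
    (hind : LinearIndependent F (fun e : B => f e)) : B.card ≤ c := by
  classical
  set π : (Fin k → F) →ₗ[F] (Fin c → F) := LinearMap.funLeft F F φ with hπ
  set W : Submodule F (Fin k → F) :=
    { carrier := {v | ∀ i : Fin k, (∀ j : Fin c, φ j ≠ i) → v i = 0}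
      add_mem' := by
        intro v w hv hw i hi
        simp only [Set.mem_setOf_eq] at hv hw
        show v i + w i = 0
        rw [hv i hi, hw i hi, add_zero]
      zero_mem' := fun i _ => rfl
      smul_mem' := by
        intro t v hv i hi
        simp only [Set.mem_setOf_eq] at hv
        show t * v i = 0
        rw [hv i hi, mul_zero] } with hW
  have hspan : Submodule.span F (Set.range (fun e : B => f e)) ≤ W := by
    rw [Submodule.span_le]
    rintro v ⟨e, rfl⟩
    intro i hi
    exact hsupp e.1 e.2 i hi
  have hdisj : Disjoint (Submodule.span F (Set.range (fun e : B => f e))) (LinearMap.ker π) := by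
    rw [Submodule.disjoint_def]
    intro v hv hker
    have hvW : v ∈ W := hspan hv
    rw [LinearMap.mem_ker] at hker
    funext i
    by_cases hcase : ∃ j : Fin c, φ j = i
    · obtain ⟨j, rfl⟩ := hcase
      have := congrFun hker j
      exact this
    · push_neg at hcase
      exact hvW i hcase
  have hmap := hind.map hdisj
  have hcard := hmap.fintype_card_le_finrank
  rw [Module.finrank_fin_fun, Fintype.card_coe] at hcard
  exact hcard

end Support

lemma sum_wf_range (r m k : ℕ) (hmk : m ≤ k) :
    ∑ i ∈ Finset.range k, wf r m i = (m - r) * ((m - r) - 1) / 2 := by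
  have h1 : ∑ i ∈ Finset.range k, wf r m i = ∑ i ∈ Finset.Ico r m, wf r m i := by
    refine (Finset.sum_subset ?_ ?_).symm
    · intro x hx
      rw [Finset.mem_Ico] at hx
      rw [Finset.mem_range]
      omega
    · intro x _ hx
      rw [Finset.mem_Ico] at hx
      unfold wf
      rw [if_neg (by omega)]
  have h2 : ∑ i ∈ Finset.Ico r m, wf r m i = ∑ i ∈ Finset.range (m - r), i := by
    rw [Finset.sum_Ico_eq_sum_range]
    apply Finset.sum_congr rfl
    intro i hi
    rw [Finset.mem_range] at hi
    unfold wf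
    rw [if_pos (by omega)]
    omega
  have h3 := Finset.sum_range_id_mul_two (m - r)
  omega

end BiUniform



theorem stmt7 {α : Type*} [Fintype α] [DecidableEq α]
    (E1 E2 : Finset α) (k m ℓ d : ℕ)
    (hdisj : Disjoint E1 E2) (huniv : E1 ∪ E2 = Finset.univ)
    (hk : 0 < k) (hm : 0 < m) (hl : 0 < ℓ)
    (hmk : m ≤ k) (hlk : ℓ ≤ k)
    (hmE1 : m ≤ E1.card) (hlE2 : ℓ ≤ E2.card)
    (hd : m + ℓ = k + d) (hd2 : 2 ≤ d)
    (q₀ s : ℕ) (hq₀ : IsPrimePow q₀) (hq₀big : max E1.card E2.card < q₀)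
    (hs : d * (d - 1) / 2 < s)
    (F : Type*) [Field F] [Fintype F] (hcard : Fintype.card F = q₀ ^ s) :
    ∃ f : α → Fin k → F, IsBiUniformRep F E1 E2 k m ℓ f := by
  classical
  set r := k - ℓ with hr
  have hrm : r ≤ m := by omega
  have hs1 : 1 ≤ s := lt_of_le_of_lt (Nat.zero_le _) hs
  have hE1q : E1.card < q₀ := lt_of_le_of_lt (le_max_left _ _) hq₀big
  have hE2q : E2.card < q₀ := lt_of_le_of_lt (le_max_right _ _) hq₀big
  obtain ⟨K, α', instK, hKcard, hα⟩ := BiUniform.exists_subfield_alpha F q₀ s hq₀ hs1 hcard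
  letI := instK
  obtain ⟨emb1⟩ : Nonempty (↥E1 ↪ ↥K) := by
    apply Function.Embedding.nonempty_of_card_le
    rw [Fintype.card_coe, hKcard]
    omega
  obtain ⟨emb2⟩ : Nonempty (↥E2 ↪ (↥K)ˣ) := by
    apply Function.Embedding.nonempty_of_card_le
    rw [Fintype.card_coe, Fintype.card_units, hKcard]
    omega
  set χ₁ : α → ↥K := fun e => if h : e ∈ E1 then emb1 ⟨e, h⟩ else 0 with hχ₁
  set χ₂ : α → ↥K := fun e => if h : e ∈ E2 then ((emb2 ⟨e, h⟩ : (↥K)ˣ) : ↥K) else 0 with hχ₂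
  have hχ₁inj : ∀ e e', e ∈ E1 → e' ∈ E1 → χ₁ e = χ₁ e' → e = e' := by
    intro e e' he he' h
    simp only [hχ₁, dif_pos he, dif_pos he'] at h
    have := emb1.injective h
    exact congrArg Subtype.val this
  have hχ₂inj : ∀ e e', e ∈ E2 → e' ∈ E2 → χ₂ e = χ₂ e' → e = e' := by
    intro e e' he he' h
    simp only [hχ₂, dif_pos he, dif_pos he'] at h
    have := emb2.injective (Units.ext h)
    exact congrArg Subtype.val this
  have hχ₂ne : ∀ e ∈ E2, χ₂ e ≠ 0 := by
    intro e he
    simp only [hχ₂, dif_pos he]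
    exact Units.ne_zero _
  set f : α → Fin k → F := fun e i =>
    if e ∈ E1 then algebraMap ↥K F (if (i : ℕ) < m then χ₁ e ^ (i : ℕ) else 0) * α' ^ (0 : ℕ)
    else algebraMap ↥K F (if r ≤ (i : ℕ) then χ₂ e ^ ((i : ℕ) - r) else 0)
      * α' ^ (BiUniform.wf r m (i : ℕ)) with hf
  refine ⟨f, ?_⟩
  intro B
  constructor
  · -- forward direction
    intro hind
    refine ⟨?_, ?_, ?_⟩
    · apply BiUniform.card_le_of_indep_support k k B f (fun j => j) (fun x y h => h)
        ?_ hind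
      intro e _ i hi
      exact absurd rfl (hi i)
    · apply BiUniform.card_le_of_indep_support k m (B ∩ E1) f (Fin.castLE hmk)
        (Fin.castLE_injective hmk) ?_
        (hind.comp (fun e : ↥(B ∩ E1) => (⟨e.1, (Finset.mem_inter.1 e.2).1⟩ : ↥B))
          (fun x y hxy => Subtype.ext (by
            simp only [Subtype.mk.injEq] at hxy
            exact hxy)))
      intro e he i hi
      have heE1 : e ∈ E1 := (Finset.mem_inter.1 he).2
      have him : m ≤ (i : ℕ) := by
        by_contra hc
        push_neg at hc
        exact hi ⟨(i : ℕ), hc⟩ (Fin.ext rfl)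
      simp only [hf, if_pos heE1, if_neg (by omega : ¬ (i : ℕ) < m), map_zero, zero_mul]
    · apply BiUniform.card_le_of_indep_support k ℓ (B ∩ E2) f
        (fun j : Fin ℓ => (⟨r + (j : ℕ), by have := j.isLt; omega⟩ : Fin k))
        (fun x y hxy => by
          have := congrArg Fin.val hxy
          simp only [] at this
          exact Fin.ext (by omega)) ?_
        (hind.comp (fun e : ↥(B ∩ E2) => (⟨e.1, (Finset.mem_inter.1 e.2).1⟩ : ↥B))
          (fun x y hxy => Subtype.ext (by
            simp only [Subtype.mk.injEq] at hxy
            exact hxy)))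
      intro e he i hi
      have heE2 : e ∈ E2 := (Finset.mem_inter.1 he).2
      have heE1 : e ∉ E1 := fun hc => (Finset.disjoint_left.1 hdisj hc) heE2
      have hir : (i : ℕ) < r := by
        by_contra hc
        push_neg at hc
        refine hi ⟨(i : ℕ) - r, by have := i.isLt; omega⟩ (Fin.ext ?_)
        simp only []
        omega
      simp only [hf, if_neg heE1, if_neg (by omega : ¬ r ≤ (i : ℕ)), map_zero, zero_mul]
  · -- backward direction
    rintro ⟨hBk, hB1, hB2⟩
    have hdisjBB : Disjoint (B ∩ E1) (B ∩ E2) :=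
      hdisj.mono Finset.inter_subset_right Finset.inter_subset_right
    have hsplitcard : (B ∩ E1).card + (B ∩ E2).card = B.card := by
      rw [← Finset.card_union_of_disjoint hdisjBB, ← Finset.inter_union_distrib_left,
        huniv, Finset.inter_univ]
    set a := max r ((B ∩ E1).card) with ha
    have ham : a ≤ m := by omega
    have hra : r ≤ a := le_max_left _ _
    have hak : a ≤ k := le_trans ham hmk
    set b := k - a with hb
    have hbl : b ≤ ℓ := by omega
    have hc2b : (B ∩ E2).card ≤ b := by omega
    obtain ⟨A1, hBA1, hA1E1, hA1card⟩ :=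
      Finset.exists_subsuperset_card_eq (Finset.inter_subset_right : B ∩ E1 ⊆ E1)
        (le_max_right _ _) (le_trans ham hmE1)
    obtain ⟨A2, hBA2, hA2E2, hA2card⟩ :=
      Finset.exists_subsuperset_card_eq (Finset.inter_subset_right : B ∩ E2 ⊆ E2)
        hc2b (le_trans hbl hlE2)
    have hA12disj : Disjoint A1 A2 := hdisj.mono hA1E1 hA2E2
    set B' := A1 ∪ A2 with hB'
    have hBB' : B ⊆ B' := by
      intro x hx
      have hxu : x ∈ E1 ∪ E2 := by rw [huniv]; exact Finset.mem_univ x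
      rcases Finset.mem_union.1 hxu with h1 | h2
      · exact Finset.mem_union_left _ (hBA1 (Finset.mem_inter.2 ⟨hx, h1⟩))
      · exact Finset.mem_union_right _ (hBA2 (Finset.mem_inter.2 ⟨hx, h2⟩))
    have hB'card : B'.card = k := by
      rw [hB', Finset.card_union_of_disjoint hA12disj, hA1card, hA2card]
      omega
    set g : Fin k → α := fun j =>
      if hj : (j : ℕ) < a then ((A1.equivFinOfCardEq hA1card).symm ⟨(j : ℕ), hj⟩ : α)
      else ((A2.equivFinOfCardEq hA2card).symm ⟨(j : ℕ) - a, by have := j.isLt; omega⟩ : α)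
      with hg
    have hg1 : ∀ j : Fin k, (j : ℕ) < a → g j ∈ A1 := by
      intro j hj
      simp only [hg, dif_pos hj]
      exact ((A1.equivFinOfCardEq hA1card).symm _).2
    have hg2 : ∀ j : Fin k, ¬ ((j : ℕ) < a) → g j ∈ A2 := by
      intro j hj
      simp only [hg, dif_neg hj]
      exact ((A2.equivFinOfCardEq hA2card).symm _).2
    have hginj : Function.Injective g := by
      intro u v huv
      by_cases hu : (u : ℕ) < a <;> by_cases hv : (v : ℕ) < a
      · simp only [hg, dif_pos hu, dif_pos hv] at huv
        have h1 := (A1.equivFinOfCardEq hA1card).symm.injective (Subtype.ext huv)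
        have h2 : (u : ℕ) = (v : ℕ) := by
          have := congrArg Fin.val h1
          simpa using this
        exact Fin.ext h2
      · exfalso
        exact Finset.disjoint_left.1 hA12disj (hg1 u hu) (huv ▸ hg2 v hv)
      · exfalso
        exact Finset.disjoint_left.1 hA12disj (hg1 v hv) (huv ▸ hg2 u hu)
      · simp only [hg, dif_neg hu, dif_neg hv] at huv
        have h1 := (A2.equivFinOfCardEq hA2card).symm.injective (Subtype.ext huv)
        have h2 : (u : ℕ) - a = (v : ℕ) - a := by
          have := congrArg Fin.val h1
          simpa using this
        exact Fin.ext (by omega)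
    have hgmem : ∀ j, g j ∈ B' := by
      intro j
      by_cases hj : (j : ℕ) < a
      · exact Finset.mem_union_left _ (hg1 j hj)
      · exact Finset.mem_union_right _ (hg2 j hj)
    set xx : Fin k → ↥K := fun j => χ₁ (g j) with hxx
    set yy : Fin k → ↥K := fun j => χ₂ (g j) with hyy
    have hws : ∑ i ∈ Finset.range k, BiUniform.wf r m i < s := by
      rw [BiUniform.sum_wf_range r m k hmk]
      have hmr : m - r = d := by omega
      rw [hmr]
      exact hs
    have hx' : ∀ j j' : Fin k, (j : ℕ) < a → (j' : ℕ) < a → xx j = xx j' → j = j' := by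
      intro j j' hj hj' hxy
      exact hginj (hχ₁inj _ _ (hA1E1 (hg1 j hj)) (hA1E1 (hg1 j' hj')) hxy)
    have hy' : ∀ j j' : Fin k, a ≤ (j : ℕ) → a ≤ (j' : ℕ) → yy j = yy j' → j = j' := by
      intro j j' hj hj' hxy
      exact hginj (hχ₂inj _ _ (hA2E2 (hg2 j (by omega))) (hA2E2 (hg2 j' (by omega))) hxy)
    have hy0' : ∀ j : Fin k, a ≤ (j : ℕ) → yy j ≠ 0 := by
      intro j hj
      exact hχ₂ne _ (hA2E2 (hg2 j (by omega)))
    have hcols := BiUniform.cols_indep (K0 := ↥K) α' s hα k r m a hra ham hmk hws xx yy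
      hx' hy' hy0'
    have hfg : (fun j : Fin k => f (g j)) = (fun j : Fin k => (fun i : Fin k =>
        algebraMap ↥K F (BiUniform.enE k r m a xx yy (i : ℕ) j)
          * α' ^ (BiUniform.dgE r m a (i : ℕ) (j : ℕ)))) := by
      funext j i
      simp only [hf]
      unfold BiUniform.enE BiUniform.dgE BiUniform.wf
      by_cases hj : (j : ℕ) < a
      · have hmem1 : g j ∈ E1 := hA1E1 (hg1 j hj)
        rw [if_pos hmem1, if_pos hj, if_pos hj]
      · have hmem2 : g j ∈ E2 := hA2E2 (hg2 j hj)
        have hnot1 : g j ∉ E1 := fun hc => (Finset.disjoint_left.1 hdisj hc) hmem2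
        rw [if_neg hnot1, if_neg hj, if_neg hj]
    have hindg : LinearIndependent F (fun j : Fin k => f (g j)) := by
      rw [hfg]
      exact hcols
    set eqv : Fin k ≃ ↥B' := Equiv.ofBijective (fun j => (⟨g j, hgmem j⟩ : ↥B')) (by
      rw [Fintype.bijective_iff_injective_and_card]
      constructor
      · intro u v huv
        apply hginj
        simp only [Subtype.mk.injEq] at huv
        exact huv
      · rw [Fintype.card_coe, hB'card, Fintype.card_fin]) with heqv
    have hindB' : LinearIndependent F (fun e : ↥B' => f e) :=
      (linearIndependent_equiv eqv).1 hindg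
    exact hindB'.comp (fun e : ↥B => (⟨e.1, hBB' e.2⟩ : ↥B'))
      (fun x y hxy => Subtype.ext (by
        simp only [Subtype.mk.injEq] at hxy
        exact hxy))
end

section
/- Suppose d = m + ℓ − k ≥ 2 and m ≥ ℓ. Set N = max(|E1|, |E2|), K = ⌈N/2⌉ + 1 and h = m·d·(1 + d(d−1)/2). Then for every prime p > K^h, the bi-uniform matroid on E = E1 ∪ E2 with rank k and sub-ranks m, ℓ is representable over the prime field F_p. -/
set_option linter.unusedSectionVars false
set_option linter.unusedTactic false
open Module Submodule Finset


variable {p : ℕ} [Fact p.Prime] {k : ℕ}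

/-- subspace of vectors supported on `I` -/
def coordSub (p k : ℕ) (I : Finset (Fin k)) : Submodule (ZMod p) (Fin k → ZMod p) :=
  Submodule.pi (↑I)ᶜ (fun _ => ⊥)

lemma mem_coordSub {I : Finset (Fin k)} {x : Fin k → ZMod p} :
    x ∈ coordSub p k I ↔ ∀ i ∉ I, x i = 0 := by
  simp [coordSub, Submodule.mem_pi]

noncomputable def coordSubEquiv (I : Finset (Fin k)) :
    coordSub p k I ≃ₗ[ZMod p] (↥I → ZMod p) where
  toFun x i := x.1 i
  map_add' x y := rfl
  map_smul' c x := rfl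
  invFun y := ⟨fun i => if h : i ∈ I then y ⟨i, h⟩ else 0, by
    rw [mem_coordSub]; intro i hi; simp [hi]⟩
  left_inv x := by
    ext i
    by_cases h : i ∈ I
    · simp [h]
    · simp [h, (mem_coordSub.1 x.2) i h]
  right_inv y := by ext i; simp [i.2]

lemma finrank_coordSub (I : Finset (Fin k)) :
    finrank (ZMod p) (coordSub p k I) = I.card := by
  rw [(coordSubEquiv I).finrank_eq, finrank_fintype_fun_eq_card, Fintype.card_coe]



variable {p : ℕ} [Fact p.Prime] {k : ℕ}

lemma exists_avoid (U : Submodule (ZMod p) (Fin k → ZMod p))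
    (𝒯 : Finset (Submodule (ZMod p) (Fin k → ZMod p)))
    (hT : ∀ T ∈ 𝒯, ¬ U ≤ T) (hcard : 𝒯.card < p) :
    ∃ v ∈ U, ∀ T ∈ 𝒯, v ∉ T := by
  classical
  rcases 𝒯.eq_empty_or_nonempty with rfl | ⟨T0, hT0⟩
  · exact ⟨0, U.zero_mem, by simp⟩
  by_contra hcon
  push_neg at hcon
  have hUsub : Set.toFinset (U : Set (Fin k → ZMod p)) ⊆
      𝒯.biUnion (fun T => Set.toFinset ((T ⊓ U : Submodule (ZMod p) (Fin k → ZMod p)) :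
        Set (Fin k → ZMod p))) := by
    intro v hv
    rw [Set.mem_toFinset] at hv
    obtain ⟨T, hTmem, hvT⟩ := hcon v hv
    exact Finset.mem_biUnion.2 ⟨T, hTmem, by rw [Set.mem_toFinset]; exact ⟨hvT, hv⟩⟩
  set r := finrank (ZMod p) U with hr
  have hr1 : 1 ≤ r := by
    rcases Nat.eq_zero_or_pos r with h0 | h; swap
    · exact h
    · have hUbot : U = ⊥ := Submodule.finrank_eq_zero.1 h0
      exact absurd (hUbot ▸ bot_le : U ≤ T0) (hT T0 hT0)
  have hcardU : (Set.toFinset (U : Set (Fin k → ZMod p))).card = p ^ r := by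
    rw [Set.toFinset_card]
    have : Fintype.card ↥(U : Set (Fin k → ZMod p)) = Fintype.card ↥U := rfl
    rw [this, card_eq_pow_finrank (K := ZMod p) (V := ↥U), ZMod.card]
  have hbound : ∀ T ∈ 𝒯,
      (Set.toFinset ((T ⊓ U : Submodule (ZMod p) (Fin k → ZMod p)) :
        Set (Fin k → ZMod p))).card ≤ p ^ (r - 1) := by
    intro T hTmem
    rw [Set.toFinset_card]
    have : Fintype.card ↥((T ⊓ U : Submodule (ZMod p) (Fin k → ZMod p)) :
        Set (Fin k → ZMod p)) = Fintype.card ↥(T ⊓ U) := rfl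
    rw [this, card_eq_pow_finrank (K := ZMod p) (V := ↥(T ⊓ U)), ZMod.card]
    apply Nat.pow_le_pow_right (Fact.out : p.Prime).pos
    have hlt : T ⊓ U < U := lt_of_le_of_ne inf_le_right (by
      intro heq
      exact hT T hTmem (heq ▸ inf_le_left))
    have := Submodule.finrank_lt_finrank_of_lt hlt
    omega
  have := (Finset.card_le_card hUsub).trans
    (Finset.card_biUnion_le.trans (Finset.sum_le_sum hbound))
  rw [hcardU, Finset.sum_const, smul_eq_mul] at this
  have hlt : 𝒯.card * p ^ (r - 1) < p * p ^ (r - 1) :=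
    (Nat.mul_lt_mul_right (Nat.pow_pos (Fact.out : p.Prime).pos)).2 hcard
  rw [← pow_succ'] at hlt
  have heq : r - 1 + 1 = r := Nat.succ_pred_eq_of_pos hr1
  rw [heq] at hlt
  exact lt_irrefl _ (lt_of_le_of_lt this hlt)



section General
variable {K V : Type*} [Field K] [AddCommGroup V] [Module K V] [FiniteDimensional K V]

lemma finrank_sup_inf_le (Y Z D : Submodule K V) :
    finrank K ((Y ⊔ Z) ⊓ D : Submodule K V) ≤ finrank K Z + finrank K (Y ⊓ D : Submodule K V) := by
  set A := (Y ⊔ Z) ⊓ D with hA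
  have hAY : A ⊓ Y = Y ⊓ D := by
    rw [hA]
    rw [inf_comm Y D]
    rw [inf_assoc, inf_comm D Y, ← inf_assoc]
    congr 1
    exact inf_eq_right.2 le_sup_left
  have hsup : A ⊔ Y ≤ Y ⊔ Z := sup_le (le_trans inf_le_left le_rfl) le_sup_left
  have key := Submodule.finrank_sup_add_finrank_inf_eq A Y
  rw [hAY] at key
  have h1 : finrank K (A ⊔ Y : Submodule K V) ≤ finrank K (Y ⊔ Z : Submodule K V) :=
    Submodule.finrank_mono hsup
  have h2 : finrank K (Y ⊔ Z : Submodule K V) ≤ finrank K Y + finrank K Z :=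
    Submodule.finrank_add_le_finrank_add_finrank Y Z
  omega

lemma sup_span_inf_eq_bot {Y D : Submodule K V} {v : V}
    (hYD : Y ⊓ D = ⊥) (hv : v ∉ Y ⊔ D) : (Y ⊔ span K {v}) ⊓ D = ⊥ := by
  rw [eq_bot_iff]
  rintro x ⟨hx1, hx2⟩
  obtain ⟨y, hy, z, hz, rfl⟩ := Submodule.mem_sup.1 hx1
  obtain ⟨c, rfl⟩ := Submodule.mem_span_singleton.1 hz
  rcases eq_or_ne c 0 with rfl | hc
  · rw [zero_smul, add_zero] at hx2 ⊢
    have : y ∈ Y ⊓ D := ⟨hy, hx2⟩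
    rw [hYD] at this
    exact this
  · exfalso
    apply hv
    have : c • v = (y + c • v) - y := by abel
    have hmem : c • v ∈ Y ⊔ D := by
      rw [this]
      exact Submodule.sub_mem _ (Submodule.mem_sup_right hx2) (Submodule.mem_sup_left hy)
    have := Submodule.smul_mem (Y ⊔ D) c⁻¹ hmem
    rwa [smul_smul, inv_mul_cancel₀ hc, one_smul] at this

end General

lemma card_powerset_filter_le {α : Type*} [DecidableEq α] (X : Finset α) (t : ℕ) :
    ((X.powerset).filter (fun A => A.card ≤ t)).card ≤ (X.card + 1) ^ t := by
  induction t with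
  | zero =>
    rw [pow_zero]
    apply Finset.card_le_one.2
    intro a ha b hb
    simp only [Finset.mem_filter, Nat.le_zero, Finset.card_eq_zero] at ha hb
    rw [ha.2, hb.2]
  | succ t ih =>
    have hsub : (X.powerset).filter (fun A => A.card ≤ t + 1) ⊆
        (X.powerset).filter (fun A => A.card ≤ t) ∪ X.powersetCard (t + 1) := by
      intro A hA
      simp only [Finset.mem_filter, Finset.mem_powerset] at hA
      rcases Nat.lt_or_ge A.card (t+1) with h | h
      · exact Finset.mem_union_left _ (Finset.mem_filter.2 ⟨Finset.mem_powerset.2 hA.1, by omega⟩)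
      · exact Finset.mem_union_right _ (Finset.mem_powersetCard.2 ⟨hA.1, by omega⟩)
    calc ((X.powerset).filter (fun A => A.card ≤ t + 1)).card
        ≤ ((X.powerset).filter (fun A => A.card ≤ t)).card + (X.powersetCard (t+1)).card :=
          le_trans (Finset.card_le_card hsub) (Finset.card_union_le _ _)
      _ ≤ (X.card + 1) ^ t + X.card.choose (t+1) := by
          rw [Finset.card_powersetCard]; omega
      _ ≤ (X.card + 1) ^ t + X.card ^ (t+1) := by
          have := Nat.choose_le_pow X.card (t+1)
          omega
      _ ≤ (X.card + 1) ^ (t + 1) := by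
          have h1 : X.card ^ (t+1) ≤ X.card * (X.card + 1) ^ t := by
            rw [pow_succ, mul_comm]
            exact Nat.mul_le_mul_left _ (Nat.pow_le_pow_left (Nat.le_succ _) t)
          have h2 : (X.card + 1) ^ (t+1) = (X.card+1)^t + X.card * (X.card+1)^t := by ring
          omega



section Defs
variable {α : Type*} [DecidableEq α] {p : ℕ} [Fact p.Prime] {k : ℕ}

def Hmem (E : Finset α) (U : Submodule (ZMod p) (Fin k → ZMod p)) (S : Finset α)
    (g : α → Fin k → ZMod p) : Prop := ∀ e ∈ S ∩ E, g e ∈ U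

def Hinv (E : Finset α) (D : Submodule (ZMod p) (Fin k → ZMod p)) (r : ℕ) (S : Finset α)
    (g : α → Fin k → ZMod p) : Prop :=
  ∀ A : Finset α, A ⊆ S ∩ E →
    finrank (ZMod p) ↥(span (ZMod p) (g '' ↑A) ⊓ D) ≤ A.card - r

def Hind (k' m ℓ : ℕ) (E1 E2 : Finset α) (S : Finset α) (g : α → Fin k → ZMod p) : Prop :=
  ∀ B : Finset α, B ⊆ S → B.card ≤ k' → (B ∩ E1).card ≤ m → (B ∩ E2).card ≤ ℓ →
    LinearIndependent (ZMod p) (fun e : ↥B => g e)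

lemma span_image_le {E S A : Finset α} {U : Submodule (ZMod p) (Fin k → ZMod p)}
    {g : α → Fin k → ZMod p} (hmem : Hmem E U S g) (hA : A ⊆ S ∩ E) :
    span (ZMod p) (g '' ↑A) ≤ U := by
  rw [Submodule.span_le]
  rintro x ⟨e, he, rfl⟩
  exact hmem e (hA he)

lemma finrank_span_image_le (g : α → Fin k → ZMod p) (A : Finset α) :
    finrank (ZMod p) ↥(span (ZMod p) (g '' ↑A)) ≤ A.card := by
  rw [← Finset.coe_image]
  exact le_trans (finrank_span_finset_le_card (A.image g)) Finset.card_image_le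

lemma image_update_eq {g : α → Fin k → ZMod p} {a : α} {v : Fin k → ZMod p}
    {A : Finset α} (ha : a ∉ A) : (Function.update g a v) '' ↑A = g '' ↑A := by
  apply Set.image_congr
  intro x hx
  exact Function.update_of_ne (by rintro rfl; exact ha hx) _ _

end Defs

lemma finrank_span_singleton_le' {K V : Type*} [Field K] [AddCommGroup V] [Module K V]
    (v : V) : Module.finrank K ↥(Submodule.span K {v}) ≤ 1 := by
  have h := finrank_span_finset_le_card (R := K) ({v} : Finset V)
  rw [Set.finrank, Finset.coe_singleton] at h
  simpa using h

section Step
variable {α : Type*} [DecidableEq α] {p : ℕ} [Fact p.Prime] {k : ℕ}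

set_option maxHeartbeats 1000000 in
lemma step (E1 E2 : Finset α) (hdisj : Disjoint E1 E2)
    (m ℓ d : ℕ) (U W : Submodule (ZMod p) (Fin k → ZMod p))
    (hU : finrank (ZMod p) ↥U = m) (hD : finrank (ZMod p) ↥(U ⊓ W) ≤ d)
    (hm : 1 ≤ m) (hdm : d ≤ m) (hdl : d ≤ ℓ) (hkd : m + ℓ = k + d)
    (hunion : ∀ B : Finset α, (B ∩ E1) ∪ (B ∩ E2) = B)
    (S : Finset α) (g : α → Fin k → ZMod p) (a : α) (haE : a ∈ E1) (haS : a ∉ S)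
    (hmem1 : Hmem E1 U S g) (hmem2 : Hmem E2 W S g)
    (hinv1 : Hinv E1 (U ⊓ W) (m - d) S g) (hinv2 : Hinv E2 (U ⊓ W) (ℓ - d) S g)
    (hind : Hind k m ℓ E1 E2 S g)
    (hp : (E1.card + 1) ^ (m - 1) * (E2.card + 1) ^ ℓ + (E1.card + 1) ^ (m - 1) < p) :
    ∃ v, v ∈ U ∧
      Hmem E1 U (insert a S) (Function.update g a v) ∧
      Hmem E2 W (insert a S) (Function.update g a v) ∧
      Hinv E1 (U ⊓ W) (m - d) (insert a S) (Function.update g a v) ∧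
      Hinv E2 (U ⊓ W) (ℓ - d) (insert a S) (Function.update g a v) ∧
      Hind k m ℓ E1 E2 (insert a S) (Function.update g a v) := by
  classical
  set D : Submodule (ZMod p) (Fin k → ZMod p) := U ⊓ W with hDdef
  -- index sets
  set idx1 : Finset (Finset α × Finset α) :=
    ((S ∩ E1).powerset ×ˢ (S ∩ E2).powerset).filter
      (fun q => q.1.card ≤ m - 1 ∧ q.2.card ≤ ℓ ∧ q.1.card + q.2.card + 1 ≤ k) with hidx1
  set idx2 : Finset (Finset α) :=
    (S ∩ E1).powerset.filter (fun A => A.card + 1 + d ≤ m) with hidx2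
  set T1 : Finset (Submodule (ZMod p) (Fin k → ZMod p)) :=
    idx1.image (fun q => span (ZMod p) (g '' ((q.1 ∪ q.2 : Finset α) : Set α))) with hT1
  set T2 : Finset (Submodule (ZMod p) (Fin k → ZMod p)) :=
    idx2.image (fun (A : Finset α) => span (ZMod p) (g '' (↑A : Set α)) ⊔ D) with hT2
  -- all bad submodules are proper w.r.t. U
  have hproper1 : ∀ A C : Finset α, A ⊆ S ∩ E1 → C ⊆ S ∩ E2 → A.card ≤ m - 1 → C.card ≤ ℓ →
      A.card + C.card + 1 ≤ k →
      finrank (ZMod p) ↥(span (ZMod p) (g '' ((A ∪ C : Finset α) : Set α)) ⊓ U) + 1 ≤ m := by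
    intro A C hA hC hAc hCc hACc
    have himg : g '' ((A ∪ C : Finset α) : Set α) = (g '' ↑A) ∪ (g '' ↑C) := by
      rw [Finset.coe_union, Set.image_union]
    have hsp : span (ZMod p) (g '' ((A ∪ C : Finset α) : Set α)) =
        span (ZMod p) (g '' ↑A) ⊔ span (ZMod p) (g '' ↑C) := by
      rw [himg, Submodule.span_union]
    have hXU : span (ZMod p) (g '' ↑A) ≤ U := span_image_le hmem1 hA
    have hYW : span (ZMod p) (g '' ↑C) ≤ W := span_image_le hmem2 hC
    have hmod : (span (ZMod p) (g '' ↑A) ⊔ span (ZMod p) (g '' ↑C)) ⊓ U =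
        span (ZMod p) (g '' ↑A) ⊔ (span (ZMod p) (g '' ↑C) ⊓ U) :=
      sup_inf_assoc_of_le _ hXU
    have hYU : span (ZMod p) (g '' ↑C) ⊓ U = span (ZMod p) (g '' ↑C) ⊓ D := by
      rw [hDdef, inf_comm U W, ← inf_assoc, inf_eq_left.2 hYW]
    have h1 : finrank (ZMod p) ↥(span (ZMod p) (g '' ↑A) ⊔ (span (ZMod p) (g '' ↑C) ⊓ D)) ≤
        A.card + (C.card - (ℓ - d)) := by
      refine le_trans (Submodule.finrank_add_le_finrank_add_finrank _ _) ?_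
      exact Nat.add_le_add (finrank_span_image_le g A) (hinv2 C hC)
    rw [hsp, hmod, hYU]
    have hle : A.card + (C.card - (ℓ - d)) + 1 ≤ m := by omega
    omega
  have hproper2 : ∀ A : Finset α, A ⊆ S ∩ E1 → A.card + 1 + d ≤ m →
      finrank (ZMod p) ↥((span (ZMod p) (g '' ↑A) ⊔ D) ⊓ U) + 1 ≤ m := by
    intro A hA hAc
    have hXU : span (ZMod p) (g '' ↑A) ≤ U := span_image_le hmem1 hA
    have hTU : span (ZMod p) (g '' ↑A) ⊔ D ≤ U := sup_le hXU inf_le_left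
    have heq : (span (ZMod p) (g '' ↑A) ⊔ D) ⊓ U = span (ZMod p) (g '' ↑A) ⊔ D :=
      inf_eq_left.2 hTU
    rw [heq]
    have h1 : finrank (ZMod p) ↥(span (ZMod p) (g '' ↑A) ⊔ D) ≤ A.card + d :=
      le_trans (Submodule.finrank_add_le_finrank_add_finrank _ _)
        (Nat.add_le_add (finrank_span_image_le g A) hD)
    omega
  have hTproper : ∀ T ∈ T1 ∪ T2, ¬ U ≤ T := by
    intro T hT hUT
    have hUTU : finrank (ZMod p) ↥U ≤ finrank (ZMod p) ↥(T ⊓ U) :=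
      Submodule.finrank_mono (le_inf hUT le_rfl)
    rcases Finset.mem_union.1 hT with h | h
    · obtain ⟨q, hq, rfl⟩ := Finset.mem_image.1 h
      rw [hidx1, Finset.mem_filter, Finset.mem_product] at hq
      obtain ⟨⟨hq1, hq2⟩, hc1, hc2, hc3⟩ := hq
      have := hproper1 q.1 q.2 (Finset.mem_powerset.1 hq1) (Finset.mem_powerset.1 hq2) hc1 hc2 hc3
      omega
    · obtain ⟨A, hA, rfl⟩ := Finset.mem_image.1 h
      rw [hidx2] at hA
      rw [Finset.mem_filter] at hA
      have := hproper2 A (Finset.mem_powerset.1 hA.1) hA.2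
      omega
  have hcard : (T1 ∪ T2).card < p := by
    have h1 : T1.card ≤ (E1.card + 1) ^ (m - 1) * (E2.card + 1) ^ ℓ := by
      refine le_trans Finset.card_image_le ?_
      have hsub : idx1 ⊆ ((S ∩ E1).powerset.filter (fun A => A.card ≤ m - 1)) ×ˢ
          ((S ∩ E2).powerset.filter (fun C => C.card ≤ ℓ)) := by
        intro q hq
        rw [hidx1, Finset.mem_filter, Finset.mem_product] at hq
        rw [Finset.mem_product, Finset.mem_filter, Finset.mem_filter]
        exact ⟨⟨hq.1.1, hq.2.1⟩, hq.1.2, hq.2.2.1⟩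
      refine le_trans (Finset.card_le_card hsub) ?_
      rw [Finset.card_product]
      refine Nat.mul_le_mul ?_ ?_
      · refine le_trans (card_powerset_filter_le _ _) ?_
        exact Nat.pow_le_pow_left (by
          have := Finset.card_le_card (Finset.inter_subset_right (s₁ := S) (s₂ := E1))
          omega) _
      · refine le_trans (card_powerset_filter_le _ _) ?_
        exact Nat.pow_le_pow_left (by
          have := Finset.card_le_card (Finset.inter_subset_right (s₁ := S) (s₂ := E2))
          omega) _
    have h2 : T2.card ≤ (E1.card + 1) ^ (m - 1) := by
      refine le_trans Finset.card_image_le ?_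
      have hsub : idx2 ⊆ (S ∩ E1).powerset.filter (fun A => A.card ≤ m - 1) := by
        intro A hA
        rw [hidx2, Finset.mem_filter] at hA
        rw [Finset.mem_filter]
        exact ⟨hA.1, by omega⟩
      refine le_trans (Finset.card_le_card hsub) ?_
      refine le_trans (card_powerset_filter_le _ _) ?_
      exact Nat.pow_le_pow_left (by
        have := Finset.card_le_card (Finset.inter_subset_right (s₁ := S) (s₂ := E1))
        omega) _
    have := Finset.card_union_le T1 T2
    omega
  obtain ⟨v, hvU, hvT⟩ := exists_avoid U (T1 ∪ T2) hTproper hcard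
  have haE2 : a ∉ E2 := Finset.disjoint_left.1 hdisj haE
  refine ⟨v, hvU, ?_, ?_, ?_, ?_, ?_⟩
  · -- Hmem E1 U
    intro e he
    rw [Finset.mem_inter] at he
    rcases Finset.mem_insert.1 he.1 with rfl | h
    · rw [Function.update_self]; exact hvU
    · rw [Function.update_of_ne (by rintro rfl; exact haS h)]
      exact hmem1 e (Finset.mem_inter.2 ⟨h, he.2⟩)
  · -- Hmem E2 W
    intro e he
    rw [Finset.mem_inter] at he
    have hea : e ≠ a := by rintro rfl; exact haE2 he.2
    rw [Function.update_of_ne hea]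
    exact hmem2 e (Finset.mem_inter.2 ⟨(Finset.mem_insert.1 he.1).resolve_left hea, he.2⟩)
  · -- Hinv E1
    intro A hA
    by_cases haA : a ∈ A
    · have hA0 : A.erase a ⊆ S ∩ E1 := by
        intro x hx
        have hxa := Finset.ne_of_mem_erase hx
        have hmem := hA (Finset.mem_of_mem_erase hx)
        rw [Finset.mem_inter] at hmem ⊢
        exact ⟨(Finset.mem_insert.1 hmem.1).resolve_left hxa, hmem.2⟩
      have hAeq : A = insert a (A.erase a) := (Finset.insert_erase haA).symm
      have hcardA : A.card = (A.erase a).card + 1 := by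
        conv_lhs => rw [hAeq]
        exact Finset.card_insert_of_notMem (Finset.notMem_erase a A)
      have himg : (Function.update g a v) '' ↑A = insert v (g '' ↑(A.erase a)) := by
        conv_lhs => rw [hAeq]
        rw [Finset.coe_insert, Set.image_insert_eq, Function.update_self,
          image_update_eq (Finset.notMem_erase a A)]
      have hsp : span (ZMod p) ((Function.update g a v) '' ↑A) =
          span (ZMod p) (g '' ↑(A.erase a)) ⊔ span (ZMod p) {v} := by
        rw [himg, Submodule.span_insert, sup_comm]
      rw [hsp]
      by_cases hsmall : (A.erase a).card + 1 + d ≤ m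
      · have hidx : span (ZMod p) (g '' ↑(A.erase a)) ⊔ D ∈ T1 ∪ T2 :=
          Finset.mem_union_right _ (Finset.mem_image.2 ⟨A.erase a,
            by rw [hidx2, Finset.mem_filter]; exact ⟨Finset.mem_powerset.2 hA0, hsmall⟩, rfl⟩)
        have hv : v ∉ span (ZMod p) (g '' ↑(A.erase a)) ⊔ D := hvT _ hidx
        have hbot : span (ZMod p) (g '' ↑(A.erase a)) ⊓ D = ⊥ := by
          have hle := hinv1 (A.erase a) hA0
          have h0 : (A.erase a).card - (m - d) = 0 := by omega
          rw [h0, Nat.le_zero] at hle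
          exact Submodule.finrank_eq_zero.1 hle
        rw [sup_span_inf_eq_bot hbot hv]
        simp
      · have h1 := finrank_sup_inf_le (span (ZMod p) (g '' ↑(A.erase a)))
          (span (ZMod p) {v}) D
        have h2 := finrank_span_singleton_le' (K := ZMod p) v
        have h3 := hinv1 (A.erase a) hA0
        omega
    · have hA' : A ⊆ S ∩ E1 := by
        intro x hx
        have hmem := hA hx
        rw [Finset.mem_inter] at hmem ⊢
        exact ⟨(Finset.mem_insert.1 hmem.1).resolve_left (by rintro rfl; exact haA hx), hmem.2⟩
      rw [image_update_eq haA]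
      exact hinv1 A hA'
  · -- Hinv E2
    intro A hA
    have haA : a ∉ A := fun hx => haE2 (Finset.mem_inter.1 (hA hx)).2
    have hA' : A ⊆ S ∩ E2 := by
      intro x hx
      have hmem := hA hx
      rw [Finset.mem_inter] at hmem ⊢
      exact ⟨(Finset.mem_insert.1 hmem.1).resolve_left (by rintro rfl; exact haA hx), hmem.2⟩
    rw [image_update_eq haA]
    exact hinv2 A hA'
  · -- Hind
    intro B hB hBk hBE1 hBE2
    by_cases haB : a ∈ B
    · have hB0S : B.erase a ⊆ S := by
        intro x hx
        exact ((Finset.mem_insert.1 (hB (Finset.mem_of_mem_erase hx))).resolve_left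
          (Finset.ne_of_mem_erase hx))
      have haB0 : a ∉ B.erase a := Finset.notMem_erase a B
      have hcardB : B.card = (B.erase a).card + 1 := by
        conv_lhs => rw [(Finset.insert_erase haB).symm]
        exact Finset.card_insert_of_notMem haB0
      -- card facts
      have hBE1' : ((B.erase a) ∩ E1).card + 1 ≤ m := by
        have hsub : insert a ((B.erase a) ∩ E1) ⊆ B ∩ E1 := by
          intro x hx
          rcases Finset.mem_insert.1 hx with rfl | hx'
          · exact Finset.mem_inter.2 ⟨haB, haE⟩
          · exact Finset.mem_inter.2 ⟨Finset.mem_of_mem_erase (Finset.mem_inter.1 hx').1,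
              (Finset.mem_inter.1 hx').2⟩
        have hcins := Finset.card_insert_of_notMem (s := (B.erase a) ∩ E1) (a := a)
          (fun hx => haB0 (Finset.mem_inter.1 hx).1)
        have := Finset.card_le_card hsub
        omega
      have hBE2' : ((B.erase a) ∩ E2).card ≤ ℓ :=
        le_trans (Finset.card_le_card (Finset.inter_subset_inter
          (Finset.erase_subset a B) le_rfl)) hBE2
      have hsum : ((B.erase a) ∩ E1).card + ((B.erase a) ∩ E2).card = (B.erase a).card := by
        rw [← Finset.card_union_of_disjoint (Finset.disjoint_of_subset_left
          Finset.inter_subset_right (Finset.disjoint_of_subset_right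
            Finset.inter_subset_right hdisj))]
        rw [hunion (B.erase a)]
      -- v not in span of erase
      have hidx : span (ZMod p) (g '' ↑(B.erase a)) ∈ T1 ∪ T2 := by
        refine Finset.mem_union_left _ (Finset.mem_image.2
          ⟨((B.erase a) ∩ E1, (B.erase a) ∩ E2), ?_, ?_⟩)
        · rw [hidx1, Finset.mem_filter, Finset.mem_product]
          refine ⟨⟨Finset.mem_powerset.2 (Finset.inter_subset_inter hB0S le_rfl),
            Finset.mem_powerset.2 (Finset.inter_subset_inter hB0S le_rfl)⟩,
            by dsimp only; omega, by dsimp only; omega, by dsimp only; omega⟩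
        · show span (ZMod p) (g '' (((B.erase a ∩ E1) ∪ (B.erase a ∩ E2) : Finset α) : Set α)) = _
          rw [hunion (B.erase a)]
      have hvnot : v ∉ span (ZMod p) (g '' ↑(B.erase a)) := hvT _ hidx
      -- assemble
      have hnotB0 : a ∉ (↑(B.erase a) : Set α) := by
        simpa using haB0
      have h1 : LinearIndependent (ZMod p)
          (fun x : ↥(↑(B.erase a) : Set α) => Function.update g a v ↑x) := by
        have h1' : LinearIndependent (ZMod p) (fun x : ↥(B.erase a) => g ↑x) :=
          hind (B.erase a) hB0S (by omega) (by omega) hBE2'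
        have hfun : (fun x : ↥(↑(B.erase a) : Set α) => Function.update g a v ↑x) =
            (fun x : ↥(↑(B.erase a) : Set α) => g ↑x) := by
          funext x
          exact Function.update_of_ne (by intro h; have hx2 := x.2; rw [h] at hx2; exact hnotB0 hx2) _ _
        rw [hfun]
        exact h1'
      have h2 : Function.update g a v a ∉
          span (ZMod p) (Function.update g a v '' ↑(B.erase a)) := by
        rw [Function.update_self, image_update_eq haB0]
        exact hvnot
      have h3 := (linearIndepOn_insert (a := a) (s := (↑(B.erase a) : Set α))
        (f := Function.update g a v) hnotB0).2 ⟨h1, h2⟩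
      have h4 : ((insert a (B.erase a) : Finset α) : Set α) = insert a (↑(B.erase a) : Set α) :=
        Finset.coe_insert a (B.erase a)
      have h5 : LinearIndependent (ZMod p)
          (fun x : ↥((insert a (B.erase a) : Finset α) : Set α) =>
            Function.update g a v ↑x) := by
        rw [h4]
        exact h3
      have hBeq : B = insert a (B.erase a) := (Finset.insert_erase haB).symm
      rw [hBeq]
      exact h5
    · have hB' : B ⊆ S := fun x hx =>
        (Finset.mem_insert.1 (hB hx)).resolve_left (by rintro rfl; exact haB hx)
      have hfun : (fun e : ↥B => Function.update g a v ↑e) = (fun e : ↥B => g ↑e) := by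
        funext e
        exact Function.update_of_ne (by intro h; have he2 := e.2; rw [h] at he2; exact haB he2) _ _
      rw [hfun]
      exact hind B hB' hBk hBE1 hBE2

end Step
section Build
variable {α : Type*} [DecidableEq α] {p : ℕ} [Fact p.Prime] {k : ℕ}

lemma build (E1 E2 : Finset α) (hdisj : Disjoint E1 E2)
    (m ℓ d : ℕ) (U W : Submodule (ZMod p) (Fin k → ZMod p))
    (hU : finrank (ZMod p) ↥U = m) (hW : finrank (ZMod p) ↥W = ℓ)
    (hD : finrank (ZMod p) ↥(U ⊓ W) ≤ d)
    (hm : 1 ≤ m) (hl : 1 ≤ ℓ) (hdm : d ≤ m) (hdl : d ≤ ℓ) (hkd : m + ℓ = k + d)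
    (hunion : ∀ B : Finset α, (B ∩ E1) ∪ (B ∩ E2) = B)
    (hp1 : (E1.card + 1) ^ (m - 1) * (E2.card + 1) ^ ℓ + (E1.card + 1) ^ (m - 1) < p)
    (hp2 : (E2.card + 1) ^ (ℓ - 1) * (E1.card + 1) ^ m + (E2.card + 1) ^ (ℓ - 1) < p)
    (S : Finset α) :
    ∃ g : α → Fin k → ZMod p, Hmem E1 U S g ∧ Hmem E2 W S g ∧
      Hinv E1 (U ⊓ W) (m - d) S g ∧ Hinv E2 (U ⊓ W) (ℓ - d) S g ∧
      Hind k m ℓ E1 E2 S g := by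
  classical
  induction S using Finset.induction_on with
  | empty =>
    refine ⟨fun _ => 0, ?_, ?_, ?_, ?_, ?_⟩
    · intro e he; simp at he
    · intro e he; simp at he
    · intro A hA
      rw [Finset.empty_inter, Finset.subset_empty] at hA
      subst hA
      simp
    · intro A hA
      rw [Finset.empty_inter, Finset.subset_empty] at hA
      subst hA
      simp
    · intro B hB _ _ _
      rw [Finset.subset_empty] at hB
      subst hB
      haveI : IsEmpty ↥(∅ : Finset α) := Finset.isEmpty_coe_sort.2 rfl
      exact linearIndependent_empty_type
  | @insert a S haS ih =>
    obtain ⟨g, h1, h2, h3, h4, h5⟩ := ih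
    have haE : a ∈ E1 ∨ a ∈ E2 := by
      have := hunion {a}
      have ha : a ∈ ({a} : Finset α) := Finset.mem_singleton_self a
      rw [← this] at ha
      rcases Finset.mem_union.1 ha with h | h
      · exact Or.inl (Finset.mem_inter.1 h).2
      · exact Or.inr (Finset.mem_inter.1 h).2
    rcases haE with haE | haE
    · obtain ⟨v, _, c1, c2, c3, c4, c5⟩ := step E1 E2 hdisj m ℓ d U W hU hD hm hdm hdl hkd
        hunion S g a haE haS h1 h2 h3 h4 h5 hp1
      exact ⟨Function.update g a v, c1, c2, c3, c4, c5⟩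
    · have hWU : W ⊓ U = U ⊓ W := inf_comm W U
      obtain ⟨v, _, c2, c1, c4, c3, c5⟩ := step E2 E1 hdisj.symm ℓ m d W U hW
        (by rw [hWU]; exact hD) hl hdl hdm (by omega)
        (fun B => by rw [Finset.union_comm]; exact hunion B) S g a haE haS h2 h1
        (by rw [hWU]; exact h4) (by rw [hWU]; exact h3)
        (fun B hB hBk hB2 hB1 => h5 B hB hBk hB1 hB2) hp2
      refine ⟨Function.update g a v, c1, c2, ?_, ?_, ?_⟩
      · rw [← hWU]; exact c3
      · rw [← hWU]; exact c4
      · exact fun B hB hBk hB1 hB2 => c5 B hB hBk hB2 hB1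

end Build
lemma count_arith (m ℓ d N Kc h p n1 n2 : ℕ)
    (hm : 1 ≤ m) (hl : 1 ≤ ℓ) (hml : ℓ ≤ m) (hd2 : 2 ≤ d)
    (hn1 : n1 ≤ N) (hn2 : n2 ≤ N) (hN : 1 ≤ N)
    (hKc : Kc = (N + 1) / 2 + 1) (hh : h = m * d * (1 + d * (d - 1) / 2))
    (hp : Kc ^ h < p) :
    (n1 + 1) ^ (m - 1) * (n2 + 1) ^ ℓ + (n1 + 1) ^ (m - 1) < p ∧
    (n2 + 1) ^ (ℓ - 1) * (n1 + 1) ^ m + (n2 + 1) ^ (ℓ - 1) < p := by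
  set t := m + ℓ - 1 with ht
  have hKc2 : 2 ≤ Kc := by omega
  have hKcsq : N + 2 ≤ Kc * Kc := by
    have h1 : 2 * Kc ≤ Kc * Kc := by
      rw [mul_comm]
      exact Nat.mul_le_mul_left Kc hKc2
    omega
  have hh4 : 2 * t + 2 ≤ h := by
    have e1 : 2 * 1 ≤ d * (d - 1) := Nat.mul_le_mul hd2 (by omega)
    have e2 : 2 ≤ 1 + d * (d - 1) / 2 := by omega
    have e4 : m * d * 2 ≤ h := by rw [hh]; exact Nat.mul_le_mul_left _ e2
    have e5 : m * 2 ≤ m * d := Nat.mul_le_mul_left m hd2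
    omega
  -- key bound : 2 * (N+1)^t ≤ Kc ^ h
  have key : 2 * (N + 1) ^ t ≤ Kc ^ h := by
    have hsplit : Kc ^ h = Kc ^ (2 * t) * Kc ^ (h - 2 * t) := by
      rw [← pow_add]
      congr 1
      omega
    have hA : (N + 1) ^ t ≤ Kc ^ (2 * t) := by
      rw [pow_mul]
      refine Nat.pow_le_pow_left ?_ t
      have : Kc ^ 2 = Kc * Kc := sq Kc
      omega
    have hB : 2 ≤ Kc ^ (h - 2 * t) := by
      refine le_trans hKc2 (Nat.le_self_pow ?_ Kc)
      omega
    calc 2 * (N + 1) ^ t ≤ Kc ^ (h - 2 * t) * Kc ^ (2 * t) :=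
          Nat.mul_le_mul hB hA
      _ = Kc ^ h := by rw [mul_comm, hsplit]
  have haux : ∀ x y : ℕ, x ≤ (N + 1) ^ t → y ≤ (N + 1) ^ t → x + y < p := by
    intro x y hx hy
    have : x + y ≤ 2 * (N + 1) ^ t := by omega
    omega
  constructor
  · refine haux _ _ ?_ ?_
    · have : (n1 + 1) ^ (m - 1) * (n2 + 1) ^ ℓ ≤ (N + 1) ^ (m - 1) * (N + 1) ^ ℓ :=
        Nat.mul_le_mul (Nat.pow_le_pow_left (by omega) _) (Nat.pow_le_pow_left (by omega) _)
      rw [← pow_add] at this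
      have heq : m - 1 + ℓ = t := by omega
      rw [heq] at this
      exact this
    · refine le_trans (Nat.pow_le_pow_left (by omega : n1 + 1 ≤ N + 1) _) ?_
      exact Nat.pow_le_pow_right (by omega) (by omega)
  · refine haux _ _ ?_ ?_
    · have : (n2 + 1) ^ (ℓ - 1) * (n1 + 1) ^ m ≤ (N + 1) ^ (ℓ - 1) * (N + 1) ^ m :=
        Nat.mul_le_mul (Nat.pow_le_pow_left (by omega) _) (Nat.pow_le_pow_left (by omega) _)
      rw [← pow_add] at this
      have heq : ℓ - 1 + m = t := by omega
      rw [heq] at this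
      exact this
    · refine le_trans (Nat.pow_le_pow_left (by omega : n2 + 1 ≤ N + 1) _) ?_
      exact Nat.pow_le_pow_right (by omega) (by omega)
lemma coordSub_inf {p : ℕ} [Fact p.Prime] {k : ℕ} (I J : Finset (Fin k)) :
    coordSub p k I ⊓ coordSub p k J = coordSub p k (I ∩ J) := by
  ext x
  simp only [Submodule.mem_inf, mem_coordSub, Finset.mem_inter]
  constructor
  · rintro ⟨hI, hJ⟩ i hi
    by_cases h : i ∈ I
    · exact hJ i (fun hJ' => hi ⟨h, hJ'⟩)
    · exact hI i h
  · intro h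
    exact ⟨fun i hi => h i (fun hm => hi hm.1), fun i hi => h i (fun hm => hi hm.2)⟩

lemma card_inter_le_of_indep {α : Type*} [DecidableEq α] {p k : ℕ} [Fact p.Prime]
    (B E : Finset α) (U : Submodule (ZMod p) (Fin k → ZMod p)) (g : α → Fin k → ZMod p)
    (hg : ∀ e ∈ E, g e ∈ U)
    (li : LinearIndependent (ZMod p) (fun e : ↥B => g ↑e)) :
    (B ∩ E).card ≤ finrank (ZMod p) ↥U := by
  classical
  have hinj : Function.Injective
      (fun x : ↥(B ∩ E) => (⟨↑x, (Finset.mem_inter.1 x.2).1⟩ : ↥B)) := by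
    intro x y hxy
    exact Subtype.ext (Subtype.mk_eq_mk.1 hxy)
  have li2 : LinearIndependent (ZMod p) (fun x : ↥(B ∩ E) => g ↑x) := li.comp _ hinj
  have li3 : LinearIndependent (ZMod p)
      (fun x : ↥(B ∩ E) => (⟨g ↑x, hg ↑x (Finset.mem_inter.1 x.2).2⟩ : ↥U)) :=
    LinearIndependent.of_comp U.subtype (by exact li2)
  have hfin := li3.fintype_card_le_finrank
  rwa [Fintype.card_coe] at hfin

theorem stmt8 {α : Type*} [Fintype α] [DecidableEq α]
    (E1 E2 : Finset α) (k m ℓ d : ℕ)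
    (hdisj : Disjoint E1 E2) (huniv : E1 ∪ E2 = Finset.univ)
    (hk : 0 < k) (hm : 0 < m) (hl : 0 < ℓ)
    (hmk : m ≤ k) (hlk : ℓ ≤ k)
    (hmE1 : m ≤ E1.card) (hlE2 : ℓ ≤ E2.card)
    (hd : m + ℓ = k + d) (hd2 : 2 ≤ d) (hml : ℓ ≤ m)
    (N Kc h : ℕ) (hN : N = max E1.card E2.card)
    (hKc : Kc = (N + 1) / 2 + 1)  -- `Kc = ⌈N/2⌉ + 1`
    (hh : h = m * d * (1 + d * (d - 1) / 2))
    (p : ℕ) [Fact p.Prime] (hp : Kc ^ h < p) :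
    ∃ f : α → Fin k → ZMod p, IsBiUniformRep (ZMod p) E1 E2 k m ℓ f := by
  classical
  have hdm : d ≤ m := by omega
  have hdl : d ≤ ℓ := by omega
  have hmk' : ∀ x ∈ Finset.range m, x < k := fun x hx =>
    lt_of_lt_of_le (Finset.mem_range.1 hx) hmk
  have hIco : ∀ x ∈ Finset.Ico (m - d) k, x < k := fun x hx => (Finset.mem_Ico.1 hx).2
  set Iu : Finset (Fin k) := (Finset.range m).attachFin hmk' with hIu
  set Iw : Finset (Fin k) := (Finset.Ico (m - d) k).attachFin hIco with hIw
  set U := coordSub p k Iu with hUdef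
  set W := coordSub p k Iw with hWdef
  have hU : finrank (ZMod p) ↥U = m := by
    rw [hUdef, finrank_coordSub, hIu, Finset.card_attachFin, Finset.card_range]
  have hW : finrank (ZMod p) ↥W = ℓ := by
    rw [hWdef, finrank_coordSub, hIw, Finset.card_attachFin, Nat.card_Ico]
    omega
  have hDle : finrank (ZMod p) ↥(U ⊓ W) ≤ d := by
    rw [hUdef, hWdef, coordSub_inf, finrank_coordSub]
    have hsub : Iu ∩ Iw ⊆ (Finset.Ico (m - d) m).attachFin
        (fun x hx => lt_of_lt_of_le (Finset.mem_Ico.1 hx).2 hmk) := by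
      intro i hi
      rw [Finset.mem_inter, hIu, hIw, Finset.mem_attachFin, Finset.mem_attachFin,
        Finset.mem_range, Finset.mem_Ico] at hi
      rw [Finset.mem_attachFin, Finset.mem_Ico]
      omega
    have hle := Finset.card_le_card hsub
    rw [Finset.card_attachFin, Nat.card_Ico] at hle
    omega
  have hunion : ∀ B : Finset α, B ∩ E1 ∪ B ∩ E2 = B := by
    intro B
    rw [← Finset.inter_union_distrib_left, huniv, Finset.inter_univ]
  have hN1 : 1 ≤ N := by
    have h1 : m ≤ max E1.card E2.card := le_trans hmE1 (le_max_left _ _)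
    omega
  have harith := count_arith m ℓ d N Kc h p E1.card E2.card hm hl hml hd2
    (by rw [hN]; exact le_max_left _ _) (by rw [hN]; exact le_max_right _ _) hN1 hKc hh hp
  obtain ⟨g, h1, h2, h3, h4, h5⟩ := build E1 E2 hdisj m ℓ d U W hU hW hDle hm hl hdm hdl hd
    hunion harith.1 harith.2 Finset.univ
  refine ⟨g, fun B => ⟨fun li => ⟨?_, ?_, ?_⟩, fun hB => h5 B (Finset.subset_univ B)
    hB.1 hB.2.1 hB.2.2⟩⟩
  · have hcard := li.fintype_card_le_finrank
    rwa [Fintype.card_coe, finrank_fintype_fun_eq_card, Fintype.card_fin] at hcard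
  · have := card_inter_le_of_indep B E1 U g
      (fun e he => h1 e (Finset.mem_inter.2 ⟨Finset.mem_univ e, he⟩)) li
    rwa [hU] at this
  · have := card_inter_le_of_indep B E2 W g
      (fun e he => h2 e (Finset.mem_inter.2 ⟨Finset.mem_univ e, he⟩)) li
    rwa [hW] at this
end

section
/- Let q be a prime power, β ∈ F_q, and let m, ℓ, d be positive integers with d ≤ m and d ≤ ℓ; set k = m + ℓ − d. Let V be the F_q-linear subspace of F_q[x] × F_q[y] consisting of the pairs (f, g) with f(x) = f_1(x) + x^{m−d}·g_1(βx) and g(y) = g_1(y) + y^d·g_2(y), where f_1, g_1, g_2 range over polynomials with deg f_1 ≤ m−d−1, deg g_1 ≤ d−1 and deg g_2 ≤ ℓ−d−1. Let F_1 = {x_1, …, x_{N_1}} and F_2 = {y_1, …, y_{N_2}} be sets of pairwise distinct nonzero elements of F_q with N_1 ≥ m and N_2 ≥ ℓ. Then the evaluation map V → F_q^{N_1+N_2} sending (f, g) to ((f(x_1), …, f(x_{N_1}), g(y_1), …, g(y_{N_2})) is injective, and its image, the code C(F_1, F_2, β), is an F_q-linear subspace of dimension k = m + ℓ − d. -/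
open Polynomial

/-- The space `V` of pairs `(f, g)` with `f(x) = f₁(x) + x^{m-d} g₁(βx)` and
`g(y) = g₁(y) + y^d g₂(y)`, where `deg f₁ ≤ m-d-1`, `deg g₁ ≤ d-1`, `deg g₂ ≤ ℓ-d-1`. -/
def Vset (F : Type*) [Field F] (β : F) (m ℓ d : ℕ) :
    Set (Polynomial F × Polynomial F) :=
  {p | ∃ f₁ g₁ g₂ : Polynomial F,
    f₁ ∈ Polynomial.degreeLT F (m - d) ∧
    g₁ ∈ Polynomial.degreeLT F d ∧
    g₂ ∈ Polynomial.degreeLT F (ℓ - d) ∧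
    p.1 = f₁ + Polynomial.X ^ (m - d) * g₁.comp (Polynomial.C β * Polynomial.X) ∧
    p.2 = g₁ + Polynomial.X ^ d * g₂}

/-- The evaluation map `(f, g) ↦ (f(x₁), …, f(x_{N₁}), g(y₁), …, g(y_{N₂}))`. -/
def evalMap (F : Type*) [Field F] (N₁ N₂ : ℕ) (x : Fin N₁ → F) (y : Fin N₂ → F)
    (p : Polynomial F × Polynomial F) : Fin (N₁ + N₂) → F :=
  Fin.append (fun i => p.1.eval (x i)) (fun j => p.2.eval (y j))

/-- Evaluation as a linear map. -/
def evalLM (F : Type*) [Field F] (N₁ N₂ : ℕ) (x : Fin N₁ → F) (y : Fin N₂ → F) :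
    (Polynomial F × Polynomial F) →ₗ[F] (Fin (N₁ + N₂) → F) where
  toFun := evalMap F N₁ N₂ x y
  map_add' p q := by
    funext i
    induction i using Fin.addCases <;>
      simp [evalMap, Fin.append_left, Fin.append_right]
  map_smul' c p := by
    funext i
    induction i using Fin.addCases <;>
      simp [evalMap, Fin.append_left, Fin.append_right]

/-- The parametrization of `Vset` as a linear map. -/
noncomputable def phiLM (F : Type*) [Field F] (β : F) (m ℓ d : ℕ) :
    (Polynomial.degreeLT F (m - d) × Polynomial.degreeLT F d ×
      Polynomial.degreeLT F (ℓ - d)) →ₗ[F] (Polynomial F × Polynomial F) where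
  toFun w := ((w.1 : Polynomial F) +
      Polynomial.X ^ (m - d) * (w.2.1 : Polynomial F).comp (Polynomial.C β * Polynomial.X),
      (w.2.1 : Polynomial F) + Polynomial.X ^ d * (w.2.2 : Polynomial F))
  map_add' w w' := by
    simp only [Prod.fst_add, Prod.snd_add, Submodule.coe_add, Prod.mk_add_mk,
      Polynomial.add_comp, Prod.mk.injEq]
    constructor <;> ring
  map_smul' c w := by
    simp only [Prod.smul_fst, Prod.smul_snd, Submodule.coe_smul, Polynomial.smul_comp,
      RingHom.id_apply, Prod.smul_mk, smul_eq_mul, Prod.mk.injEq,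
      Polynomial.smul_eq_C_mul, Polynomial.mul_comp, Polynomial.C_comp]
    constructor <;> ring

lemma Vset_eq_range (F : Type*) [Field F] (β : F) (m ℓ d : ℕ) :
    Vset F β m ℓ d = Set.range (phiLM F β m ℓ d) := by
  ext p
  constructor
  · rintro ⟨f₁, g₁, g₂, hf₁, hg₁, hg₂, h1, h2⟩
    exact ⟨⟨⟨f₁, hf₁⟩, ⟨g₁, hg₁⟩, ⟨g₂, hg₂⟩⟩, by
      simp only [phiLM, LinearMap.coe_mk, AddHom.coe_mk]
      exact (Prod.ext h1.symm h2.symm)⟩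
  · rintro ⟨⟨f₁, g₁, g₂⟩, rfl⟩
    exact ⟨f₁, g₁, g₂, f₁.2, g₁.2, g₂.2, rfl, rfl⟩

theorem stmt10 (q : ℕ) (hq : IsPrimePow q)
    (F : Type*) [Field F] [Fintype F] (hcard : Fintype.card F = q)
    (β : F) (m ℓ d : ℕ) (hm : 0 < m) (hl : 0 < ℓ) (hd : 0 < d)
    (hdm : d ≤ m) (hdl : d ≤ ℓ) (k : ℕ) (hk : k = m + ℓ - d)
    (N₁ N₂ : ℕ) (hN₁ : m ≤ N₁) (hN₂ : ℓ ≤ N₂)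
    (x : Fin N₁ → F) (y : Fin N₂ → F)
    (hxinj : Function.Injective x) (hyinj : Function.Injective y)
    (hx0 : ∀ i, x i ≠ 0) (hy0 : ∀ j, y j ≠ 0) :
    Set.InjOn (evalMap F N₁ N₂ x y) (Vset F β m ℓ d) ∧
    (Submodule.span F (evalMap F N₁ N₂ x y '' Vset F β m ℓ d) :
        Set (Fin (N₁ + N₂) → F)) = evalMap F N₁ N₂ x y '' Vset F β m ℓ d ∧
    Module.finrank F
      (Submodule.span F (evalMap F N₁ N₂ x y '' Vset F β m ℓ d)) = k := by
  set E := evalLM F N₁ N₂ x y with hE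
  set Φ := phiLM F β m ℓ d with hΦ
  -- Key injectivity of E ∘ Φ
  have key : Function.Injective (E.comp Φ) := by
    rw [← LinearMap.ker_eq_bot, LinearMap.ker_eq_bot']
    rintro ⟨⟨f₁, hf₁⟩, ⟨g₁, hg₁⟩, ⟨g₂, hg₂⟩⟩ h0
    have h0' : ∀ i : Fin (N₁ + N₂), evalMap F N₁ N₂ x y (Φ ⟨⟨f₁, hf₁⟩, ⟨g₁, hg₁⟩, ⟨g₂, hg₂⟩⟩) i
        = 0 := fun i => congrFun h0 i
    have hΦval : Φ ⟨⟨f₁, hf₁⟩, ⟨g₁, hg₁⟩, ⟨g₂, hg₂⟩⟩ =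
        (f₁ + X ^ (m - d) * g₁.comp (C β * X), g₁ + X ^ d * g₂) := rfl
    have hevalg : ∀ j : Fin N₂, (g₁ + X ^ d * g₂).eval (y j) = 0 := by
      intro j
      have := h0' (Fin.natAdd N₁ j)
      simpa [evalMap, hΦval, Fin.append_right] using this
    -- degree bound for g
    have hgdeg : (g₁ + X ^ d * g₂).degree < (ℓ : WithBot ℕ) := by
      apply lt_of_le_of_lt (degree_add_le _ _)
      rw [max_lt_iff]
      constructor
      · exact lt_of_lt_of_le (mem_degreeLT.mp hg₁) (by exact_mod_cast Nat.cast_le.mpr hdl)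
      · rcases eq_or_ne g₂ 0 with h | h
        · simpa [h] using (by exact_mod_cast WithBot.bot_lt_coe ℓ : (⊥ : WithBot ℕ) < ℓ)
        · rw [degree_mul, degree_X_pow]
          have h2 : g₂.degree < ((ℓ - d : ℕ) : WithBot ℕ) := mem_degreeLT.mp hg₂
          calc (d : WithBot ℕ) + g₂.degree < (d : WithBot ℕ) + ((ℓ - d : ℕ) : WithBot ℕ) := by
                exact WithBot.add_lt_add_left (by simp) h2
            _ = ((d + (ℓ - d) : ℕ) : WithBot ℕ) := by push_cast; ring
            _ = (ℓ : WithBot ℕ) := by congr 1; omega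
    have hgzero : g₁ + X ^ d * g₂ = 0 := by
      rcases eq_or_ne (g₁ + X ^ d * g₂) 0 with h | h
      · exact h
      · refine eq_zero_of_natDegree_lt_card_of_eval_eq_zero _ hyinj hevalg ?_
        rw [Fintype.card_fin]
        have := (natDegree_lt_iff_degree_lt h).mpr hgdeg
        omega
    -- split g₁ = 0 and g₂ = 0
    have hg₂0 : g₂ = 0 := by
      by_contra hne
      have hgeq : g₁ = -(X ^ d * g₂) := by linear_combination hgzero
      have hlow : g₁.degree < (d : WithBot ℕ) := mem_degreeLT.mp hg₁
      rw [hgeq, degree_neg, degree_mul, degree_X_pow] at hlow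
      have : (d : WithBot ℕ) ≤ (d : WithBot ℕ) + g₂.degree :=
        le_add_of_nonneg_right (zero_le_degree_iff.mpr hne)
      exact absurd hlow (not_lt.mpr this)
    have hg₁0 : g₁ = 0 := by simpa [hg₂0] using hgzero
    subst hg₁0
    subst hg₂0
    -- now f₁
    have hevalf : ∀ i : Fin N₁, f₁.eval (x i) = 0 := by
      intro i
      have := h0' (Fin.castAdd N₂ i)
      simpa [evalMap, hΦval, Fin.append_left] using this
    have hf₁0 : f₁ = 0 := by
      rcases eq_or_ne f₁ 0 with h | h
      · exact h
      · refine eq_zero_of_natDegree_lt_card_of_eval_eq_zero _ hxinj hevalf ?_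
        rw [Fintype.card_fin]
        have hdeg : f₁.degree < ((m - d : ℕ) : WithBot ℕ) := mem_degreeLT.mp hf₁
        have := (natDegree_lt_iff_degree_lt h).mpr hdeg
        omega
    subst hf₁0
    rfl
  have himg : evalMap F N₁ N₂ x y '' Vset F β m ℓ d =
      (LinearMap.range (E.comp Φ) : Set (Fin (N₁ + N₂) → F)) := by
    rw [Vset_eq_range F β m ℓ d, ← hΦ, LinearMap.range_comp, Submodule.map_coe,
      LinearMap.coe_range]
    rfl
  refine ⟨?_, ?_, ?_⟩
  · intro p hp p' hp' heq
    rw [Vset_eq_range F β m ℓ d, ← hΦ] at hp hp'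
    obtain ⟨w, rfl⟩ := hp
    obtain ⟨w', rfl⟩ := hp'
    have : E.comp Φ w = E.comp Φ w' := heq
    rw [key this]
  · rw [himg, Submodule.span_eq]
  · rw [himg, Submodule.span_eq]
    have h1 : Module.finrank F (LinearMap.range (E.comp Φ)) =
        Module.finrank F (Polynomial.degreeLT F (m - d) × Polynomial.degreeLT F d ×
          Polynomial.degreeLT F (ℓ - d)) :=
      (LinearEquiv.finrank_eq (LinearEquiv.ofInjective (E.comp Φ) key)).symm
    have h2 : Module.finrank F (Polynomial.degreeLT F (m - d) × Polynomial.degreeLT F d ×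
        Polynomial.degreeLT F (ℓ - d)) = (m - d) + (d + (ℓ - d)) := by
      rw [LinearEquiv.finrank_eq ((Polynomial.degreeLTEquiv F (m - d)).prodCongr
        ((Polynomial.degreeLTEquiv F d).prodCongr (Polynomial.degreeLTEquiv F (ℓ - d))))]
      simp [Module.finrank_prod, Module.finrank_pi]
    rw [h1, h2]
    omega
end
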